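/- arXiv:1602.06548 — 7 statements merged into one kernel-verified Lean document; each statement's English description precedes it below -/
import Mathlib

section
/- If T is a tree on n vertices, then for every k with 1 ≤ k ≤ n, the number of graph compositions of T with exactly k blocks equals the binomial coefficient C(n-1, k-1). -/
/-- A graph composition of `G`: a partition of the vertex set such that each
block induces a connected subgraph. -/
def SimpleGraph.IsComposition {V : Type*} [Fintype V] [DecidableEq V] (G : SimpleGraph V)
    (P : Finpartition (Finset.univ : Finset V)) : Prop :=
  ∀ B ∈ P.parts, (G.induce (B : Set V)).Connected

/-- `C^k(G)`: the number of graph compositions of `G` with exactly `k` blocks. -/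
noncomputable def SimpleGraph.compCount {V : Type*} [Fintype V] [DecidableEq V]
    (G : SimpleGraph V) (k : ℕ) : ℕ :=
  Nat.card {P : Finpartition (Finset.univ : Finset V) //
    G.IsComposition P ∧ P.parts.card = k}

open Finset SimpleGraph

section Aux

variable {V : Type*} [Fintype V] [DecidableEq V]

open Classical in
/-- The set of edges of `T` whose endpoints lie in the same part of `P`. -/
noncomputable def partEdges (T : SimpleGraph V) (P : Finpartition (Finset.univ : Finset V)) :
    Finset (Sym2 V) :=
  T.edgeFinset.filter fun e =>
    Sym2.lift ⟨fun a b => P.part a = P.part b, fun a b => by simp [eq_comm]⟩ e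

open Classical in
lemma mem_partEdges {T : SimpleGraph V} {P : Finpartition (Finset.univ : Finset V)} {u v : V} :
    s(u, v) ∈ partEdges T P ↔ T.Adj u v ∧ P.part u = P.part v := by
  simp [partEdges, Finset.mem_filter, SimpleGraph.mem_edgeFinset, SimpleGraph.mem_edgeSet]

/-- The finpartition of `univ` into the connected components of `fromEdgeSet S`. -/
noncomputable def compPartition (S : Finset (Sym2 V)) : Finpartition (Finset.univ : Finset V) :=
  @Finpartition.ofSetoid V _ _ (SimpleGraph.fromEdgeSet (↑S : Set (Sym2 V))).reachableSetoid
    (Classical.decRel _)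

lemma mem_part_compPartition (S : Finset (Sym2 V)) (a b : V) :
    b ∈ (compPartition S).part a ↔
      (SimpleGraph.fromEdgeSet (↑S : Set (Sym2 V))).Reachable a b := by
  letI : DecidableRel ((SimpleGraph.fromEdgeSet (↑S : Set (Sym2 V))).reachableSetoid).r :=
    Classical.decRel _
  unfold compPartition
  rw [Finpartition.mem_part_ofSetoid_iff_rel]
  rfl

lemma fromEdgeSet_le {T : SimpleGraph V} [Fintype T.edgeSet] {S : Finset (Sym2 V)}
    (hS : S ⊆ T.edgeFinset) :
    SimpleGraph.fromEdgeSet (↑S : Set (Sym2 V)) ≤ T := by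
  intro a b hab
  rw [SimpleGraph.fromEdgeSet_adj] at hab
  exact (SimpleGraph.mem_edgeSet T).mp (SimpleGraph.mem_edgeFinset.mp (hS hab.1))

lemma induce_reachable_of_closed {V' : Type*} {G : SimpleGraph V'} {B : Set V'}
    (hB : ∀ ⦃u w⦄, u ∈ B → G.Adj u w → w ∈ B) {x y : V'} (w : G.Walk x y) :
    ∀ hx : x ∈ B, ∃ hy : y ∈ B, (G.induce B).Reachable ⟨x, hx⟩ ⟨y, hy⟩ := by
  induction w with
  | nil => exact fun hx => ⟨hx, Reachable.refl _⟩
  | @cons a c d h p ih =>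
    intro hx
    obtain ⟨hy, hr⟩ := ih (hB hx h)
    have hadj : (G.induce B).Adj ⟨a, hx⟩ ⟨c, hB hx h⟩ := h
    exact ⟨hy, hadj.reachable.trans hr⟩

lemma part_closed_reachable {V' : Type*} {G : SimpleGraph V'} {B : Set V'}
    (hB : ∀ ⦃u w⦄, u ∈ B → G.Adj u w → w ∈ B) {x y : V'} (h : G.Reachable x y) (hx : x ∈ B) :
    y ∈ B := by
  obtain ⟨w⟩ := h
  exact (induce_reachable_of_closed hB w hx).1

variable {T : SimpleGraph V} [Fintype T.edgeSet]

lemma isComposition_compPartition {S : Finset (Sym2 V)} (hS : S ⊆ T.edgeFinset) :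
    T.IsComposition (compPartition S) := by
  intro B hB
  set H := SimpleGraph.fromEdgeSet (↑S : Set (Sym2 V)) with hH
  obtain ⟨a, -, ha⟩ := (compPartition S).part_surjOn hB
  have hBa : (↑B : Set V) = {b | H.Reachable a b} := by
    ext b
    rw [← ha]
    simpa using mem_part_compPartition S a b
  have hclosed : ∀ ⦃u w : V⦄, u ∈ {b | H.Reachable a b} → H.Adj u w →
      w ∈ {b | H.Reachable a b} := fun u w hu huw => hu.trans huw.reachable
  have hc : (H.induce (↑B : Set V)).Connected := by
    rw [hBa, SimpleGraph.connected_iff_exists_forall_reachable]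
    refine ⟨⟨a, Reachable.refl a⟩, ?_⟩
    rintro ⟨y, hy⟩
    obtain ⟨wy⟩ := hy
    obtain ⟨_, hry⟩ := induce_reachable_of_closed hclosed wy (Reachable.refl a)
    exact hry
  refine hc.mono ?_
  intro x y hxy
  exact fromEdgeSet_le hS hxy

lemma partEdges_compPartition (hac : T.IsAcyclic) {S : Finset (Sym2 V)}
    (hS : S ⊆ T.edgeFinset) : partEdges T (compPartition S) = S := by
  ext e
  induction e using Sym2.inductionOn with
  | hf u v =>
    rw [mem_partEdges]
    constructor
    · rintro ⟨hadj, hpart⟩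
      by_contra hne
      have hreach : (SimpleGraph.fromEdgeSet (↑S : Set (Sym2 V))).Reachable u v := by
        rw [← mem_part_compPartition S u v, hpart]
        exact (compPartition S).mem_part (Finset.mem_univ v)
      have hbridge : T.IsBridge s(u, v) :=
        (SimpleGraph.isAcyclic_iff_forall_adj_isBridge.mp hac) hadj
      rw [SimpleGraph.isBridge_iff] at hbridge
      refine hbridge (hreach.mono ?_)
      intro a b hab
      rw [SimpleGraph.fromEdgeSet_adj] at hab
      refine ⟨fromEdgeSet_le hS (by rw [SimpleGraph.fromEdgeSet_adj]; exact hab), ?_⟩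
      rw [SimpleGraph.fromEdgeSet_adj]
      rintro ⟨hmem, -⟩
      simp only [Set.mem_singleton_iff] at hmem
      exact hne (hmem ▸ hab.1)
    · intro heS
      have hadj : T.Adj u v := (SimpleGraph.mem_edgeSet T).mp
        (SimpleGraph.mem_edgeFinset.mp (hS heS))
      refine ⟨hadj, ?_⟩
      have hne : u ≠ v := hadj.ne
      have hadj' : (SimpleGraph.fromEdgeSet (↑S : Set (Sym2 V))).Adj u v := by
        rw [SimpleGraph.fromEdgeSet_adj]; exact ⟨by exact_mod_cast heS, hne⟩
      have hv : v ∈ (compPartition S).part u := by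
        rw [mem_part_compPartition]; exact hadj'.reachable
      exact ((compPartition S).part_eq_of_mem
        ((compPartition S).part_mem.mpr (Finset.mem_univ u)) hv).symm

lemma part_eq_part_iff_reachable {P : Finpartition (Finset.univ : Finset V)}
    (hP : T.IsComposition P) (a b : V) :
    (SimpleGraph.fromEdgeSet (↑(partEdges T P) : Set (Sym2 V))).Reachable a b ↔
      P.part a = P.part b := by
  constructor
  · intro h
    obtain ⟨w⟩ := h
    induction w with
    | nil => rfl
    | @cons x y z h p ih =>
      have hxy : P.part x = P.part y := by
        rw [SimpleGraph.fromEdgeSet_adj] at h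
        have := h.1
        rw [Finset.mem_coe] at this
        exact (mem_partEdges.mp this).2
      exact hxy.trans ih
  · intro h
    set B := P.part a with hBdef
    have hBmem : B ∈ P.parts := P.part_mem.mpr (Finset.mem_univ a)
    have ha : a ∈ B := P.mem_part (Finset.mem_univ a)
    have hb : b ∈ B := h ▸ P.mem_part (Finset.mem_univ b)
    have hc : (T.induce (↑B : Set V)).Connected := hP B hBmem
    have hmap : ∀ x y : ↥(↑B : Set V), (T.induce (↑B : Set V)).Adj x y →
        (SimpleGraph.fromEdgeSet (↑(partEdges T P) : Set (Sym2 V))).Adj x.val y.val := by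
      rintro ⟨x, hx⟩ ⟨y, hy⟩ hxy
      have hxy' : T.Adj x y := hxy
      rw [SimpleGraph.fromEdgeSet_adj]
      refine ⟨?_, hxy'.ne⟩
      rw [Finset.mem_coe, mem_partEdges]
      refine ⟨hxy', ?_⟩
      rw [P.part_eq_of_mem hBmem hx, P.part_eq_of_mem hBmem hy]
    let f : T.induce (↑B : Set V) →g SimpleGraph.fromEdgeSet (↑(partEdges T P) : Set (Sym2 V)) :=
      ⟨Subtype.val, fun {x y} h => hmap x y h⟩
    exact Reachable.map f (hc.preconnected ⟨a, ha⟩ ⟨b, hb⟩)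

lemma compPartition_partEdges {P : Finpartition (Finset.univ : Finset V)}
    (hP : T.IsComposition P) : compPartition (partEdges T P) = P := by
  have hpart : ∀ a, (compPartition (partEdges T P)).part a = P.part a := by
    intro a
    ext b
    rw [mem_part_compPartition, part_eq_part_iff_reachable hP]
    constructor
    · intro h
      rw [h]
      exact P.mem_part (Finset.mem_univ b)
    · intro h
      exact (P.part_eq_of_mem (P.part_mem.mpr (Finset.mem_univ a)) h).symm
  apply Finpartition.ext
  ext B
  constructor
  · intro hB
    obtain ⟨a, -, ha⟩ := (compPartition (partEdges T P)).part_surjOn hB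
    exact ha ▸ (hpart a) ▸ P.part_mem.mpr (Finset.mem_univ a)
  · intro hB
    obtain ⟨a, -, ha⟩ := P.part_surjOn hB
    exact ha ▸ (hpart a).symm ▸ (compPartition (partEdges T P)).part_mem.mpr (Finset.mem_univ a)

open Classical in
lemma card_part_edges (hac : T.IsAcyclic) {P : Finpartition (Finset.univ : Finset V)}
    (hP : T.IsComposition P) {B : Finset V} (hB : B ∈ P.parts) :
    (T.edgeFinset.filter fun e => ∀ v ∈ e, v ∈ B).card + 1 = B.card := by
  set G' := T.induce (↑B : Set V) with hG'
  letI : Fintype G'.edgeSet := Fintype.ofFinite _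
  have hconn' : G'.Connected := hP B hB
  have hacyc' : G'.IsAcyclic := by
    intro v c hc
    let f : G' →g T := ⟨Subtype.val, fun h => h⟩
    have hf : Function.Injective ⇑f := Subtype.val_injective
    exact hac (c.map f) (hc.map hf)
  have htree : G'.IsTree := ⟨hconn', hacyc'⟩
  have hcard := htree.card_edgeFinset
  have hBcard : Fintype.card ↥(↑B : Set V) = B.card := by simp
  rw [hBcard] at hcard
  rw [← hcard]
  congr 1
  refine (Finset.card_bij (fun e _ => Sym2.map Subtype.val e) ?_ ?_ ?_).symm
  · intro e he
    induction e using Sym2.inductionOn with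
    | hf x y =>
      rw [SimpleGraph.mem_edgeFinset, SimpleGraph.mem_edgeSet] at he
      simp only [Sym2.map_pair_eq, Finset.mem_filter, SimpleGraph.mem_edgeFinset,
        SimpleGraph.mem_edgeSet, Sym2.mem_iff]
      refine ⟨he, ?_⟩
      rintro v (rfl | rfl)
      · exact x.2
      · exact y.2
  · intro e₁ h₁ e₂ h₂ h
    exact Sym2.map.injective Subtype.val_injective h
  · intro e he
    rw [Finset.mem_filter] at he
    obtain ⟨he₁, he₂⟩ := he
    induction e using Sym2.inductionOn with
    | hf u v =>
      have hu : u ∈ B := he₂ u (Sym2.mem_mk_left u v)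
      have hv : v ∈ B := he₂ v (Sym2.mem_mk_right u v)
      have hadj : T.Adj u v := (SimpleGraph.mem_edgeSet T).mp
        (SimpleGraph.mem_edgeFinset.mp he₁)
      refine ⟨s(⟨u, hu⟩, ⟨v, hv⟩), ?_, rfl⟩
      rw [SimpleGraph.mem_edgeFinset, SimpleGraph.mem_edgeSet]
      exact hadj

open Classical in
lemma card_partEdges_add (hac : T.IsAcyclic) {P : Finpartition (Finset.univ : Finset V)}
    (hP : T.IsComposition P) :
    (partEdges T P).card + P.parts.card = Fintype.card V := by
  have hcover : partEdges T P =
      P.parts.biUnion (fun B => T.edgeFinset.filter fun e => ∀ v ∈ e, v ∈ B) := by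
    ext e
    induction e using Sym2.inductionOn with
    | hf u v =>
      rw [mem_partEdges, Finset.mem_biUnion]
      constructor
      · rintro ⟨hadj, hpart⟩
        refine ⟨P.part u, P.part_mem.mpr (Finset.mem_univ u), ?_⟩
        rw [Finset.mem_filter]
        refine ⟨by rw [SimpleGraph.mem_edgeFinset, SimpleGraph.mem_edgeSet]; exact hadj, ?_⟩
        intro w hw
        rw [Sym2.mem_iff] at hw
        rcases hw with rfl | rfl
        · exact P.mem_part (Finset.mem_univ w)
        · rw [hpart]
          exact P.mem_part (Finset.mem_univ w)
      · rintro ⟨B, hB, he⟩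
        rw [Finset.mem_filter] at he
        obtain ⟨he₁, he₂⟩ := he
        refine ⟨(SimpleGraph.mem_edgeSet T).mp (SimpleGraph.mem_edgeFinset.mp he₁), ?_⟩
        rw [P.part_eq_of_mem hB (he₂ u (Sym2.mem_mk_left u v)),
          P.part_eq_of_mem hB (he₂ v (Sym2.mem_mk_right u v))]
  have hdisj : ∀ B₁ ∈ P.parts, ∀ B₂ ∈ P.parts, B₁ ≠ B₂ →
      Disjoint (T.edgeFinset.filter fun e => ∀ v ∈ e, v ∈ B₁)
        (T.edgeFinset.filter fun e => ∀ v ∈ e, v ∈ B₂) := by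
    intro B₁ h₁ B₂ h₂ hne
    rw [Finset.disjoint_left]
    intro e he₁ he₂
    rw [Finset.mem_filter] at he₁ he₂
    induction e using Sym2.inductionOn with
    | hf u v =>
      exact hne (P.eq_of_mem_parts h₁ h₂ (he₁.2 u (Sym2.mem_mk_left u v))
        (he₂.2 u (Sym2.mem_mk_left u v)))
  rw [hcover, Finset.card_biUnion hdisj]
  calc (∑ B ∈ P.parts, (T.edgeFinset.filter fun e => ∀ v ∈ e, v ∈ B).card) + P.parts.card
      = ∑ B ∈ P.parts, ((T.edgeFinset.filter fun e => ∀ v ∈ e, v ∈ B).card + 1) := by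
        rw [Finset.sum_add_distrib, Finset.sum_const, smul_eq_mul, mul_one]
    _ = ∑ B ∈ P.parts, B.card := Finset.sum_congr rfl fun B hB => card_part_edges hac hP hB
    _ = Fintype.card V := by rw [P.sum_card_parts, Finset.card_univ]

end Aux

theorem compCount_tree {V : Type*} [Fintype V] [DecidableEq V]
    (T : SimpleGraph V) (hconn : T.Connected) (hacyclic : T.IsAcyclic)
    (n : ℕ) (hn : Fintype.card V = n) :
    ∀ k, 1 ≤ k → k ≤ n → T.compCount k = (n - 1).choose (k - 1) := by
  classical
  intro k hk1 hkn
  subst hn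
  have htree : T.IsTree := ⟨hconn, hacyclic⟩
  have hedges : T.edgeFinset.card + 1 = Fintype.card V := htree.card_edgeFinset
  have hparts_le : ∀ P : Finpartition (Finset.univ : Finset V), P.parts.card ≤ Fintype.card V := by
    intro P
    simpa using P.card_parts_le_card
  -- the equivalence with (n-k)-subsets of the edge set
  have hequiv : {P : Finpartition (Finset.univ : Finset V) //
        T.IsComposition P ∧ P.parts.card = k} ≃
      {S : Finset (Sym2 V) // S ∈ T.edgeFinset.powersetCard (Fintype.card V - k)} := by
    refine ⟨fun P => ⟨partEdges T P.1, ?_⟩, fun S => ⟨compPartition S.1, ?_⟩, ?_, ?_⟩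
    · rw [Finset.mem_powersetCard]
      refine ⟨Finset.filter_subset _ _, ?_⟩
      have h1 := card_partEdges_add hacyclic P.2.1
      have h2 := P.2.2
      omega
    · have hS := Finset.mem_powersetCard.mp S.2
      have hcomp := isComposition_compPartition (T := T) hS.1
      refine ⟨hcomp, ?_⟩
      have h1 := card_partEdges_add hacyclic hcomp
      rw [partEdges_compPartition hacyclic hS.1] at h1
      have h2 := hS.2
      have h3 := hparts_le (compPartition S.1)
      omega
    · intro P
      exact Subtype.ext (compPartition_partEdges P.2.1)
    · intro S
      have hS := Finset.mem_powersetCard.mp S.2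
      exact Subtype.ext (partEdges_compPartition hacyclic hS.1)
  rw [SimpleGraph.compCount, Nat.card_congr hequiv, Nat.card_eq_finsetCard,
    Finset.card_powersetCard]
  have h1 : T.edgeFinset.card = Fintype.card V - 1 := by omega
  have h2 : Fintype.card V - k = (Fintype.card V - 1) - (k - 1) := by omega
  rw [h1, h2, Nat.choose_symm (by omega)]
end

section
/- Let G_1 and G_2 be connected graphs sharing exactly one vertex v, and let G = G_1 ∪ G_2 (vertex set V(G_1) ∪ V(G_2), edge set E(G_1) ∪ E(G_2)). Then for every k, the number of graph compositions of G with exactly k blocks equals the sum over j from 1 to k of C^j(G_1) · C^{k+1-j}(G_2). -/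
set_option linter.unusedSectionVars false

open Finset

namespace CompAux

variable {V : Type*} [DecidableEq V]

/-- Push a finset of a subtype back up to `V`. -/
def upPart (S : Finset V) (T : Finset {x // x ∈ S}) : Finset V :=
  T.map (Function.Embedding.subtype _)

/-- Restrict a finset of `V` to a subtype. -/
def downPart (S : Finset V) (B : Finset V) : Finset {x // x ∈ S} :=
  B.subtype (· ∈ S)

@[simp] lemma mem_upPart {S : Finset V} {T : Finset {x // x ∈ S}} {a : V} :
    a ∈ upPart S T ↔ ∃ h : a ∈ S, ⟨a, h⟩ ∈ T := by
  simp only [upPart, Finset.mem_map, Function.Embedding.coe_subtype]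
  constructor
  · rintro ⟨⟨b, hb⟩, hbT, rfl⟩; exact ⟨hb, hbT⟩
  · rintro ⟨h, hT⟩; exact ⟨⟨a, h⟩, hT, rfl⟩

@[simp] lemma mem_downPart {S : Finset V} {B : Finset V} {a : {x // x ∈ S}} :
    a ∈ downPart S B ↔ (a : V) ∈ B := by
  simp [downPart]

lemma upPart_subset (S : Finset V) (T : Finset {x // x ∈ S}) : upPart S T ⊆ S := by
  intro a ha; rcases mem_upPart.1 ha with ⟨h, _⟩; exact h

lemma up_down {S B : Finset V} (h : B ⊆ S) : upPart S (downPart S B) = B := by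
  ext a; simp only [mem_upPart, mem_downPart]
  exact ⟨fun ⟨_, hb⟩ => hb, fun hb => ⟨h hb, hb⟩⟩

@[simp] lemma down_up (S : Finset V) (T : Finset {x // x ∈ S}) :
    downPart S (upPart S T) = T := by
  ext a; simp [mem_downPart, mem_upPart]

lemma upPart_injective (S : Finset V) : Function.Injective (upPart S) :=
  Finset.map_injective _

@[simp] lemma upPart_card (S : Finset V) (T : Finset {x // x ∈ S}) :
    (upPart S T).card = T.card := Finset.card_map _

@[simp] lemma upPart_eq_empty {S : Finset V} {T : Finset {x // x ∈ S}} :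
    upPart S T = ∅ ↔ T = ∅ := by
  constructor
  · intro h
    apply Finset.eq_empty_of_forall_notMem
    intro a ha
    have : (a : V) ∈ upPart S T := mem_upPart.2 ⟨a.2, ha⟩
    simp [h] at this
  · rintro rfl; rfl

section Graph

open SimpleGraph

variable {G : SimpleGraph V} {S₁ S₂ : Finset V} {v : V}

/-- Monotonicity hom for induced subgraphs. -/
def induceLEHom (G : SimpleGraph V) {A C : Set V} (h : A ⊆ C) : G.induce A →g G.induce C where
  toFun a := ⟨a.1, h a.2⟩
  map_rel' := fun hab => hab

lemma connected_union_of_mem {B₁ B₂ : Finset V} (hv₁ : v ∈ B₁) (hv₂ : v ∈ B₂)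
    (h₁ : (G.induce (B₁ : Set V)).Connected) (h₂ : (G.induce (B₂ : Set V)).Connected) :
    (G.induce ((B₁ ∪ B₂ : Finset V) : Set V)).Connected := by
  rw [connected_iff]
  have hsub₁ : (B₁ : Set V) ⊆ ((B₁ ∪ B₂ : Finset V) : Set V) := by
    intro a ha; simp only [Finset.coe_union, Set.mem_union]; exact Or.inl ha
  have hsub₂ : (B₂ : Set V) ⊆ ((B₁ ∪ B₂ : Finset V) : Set V) := by
    intro a ha; simp only [Finset.coe_union, Set.mem_union]; exact Or.inr ha
  have hvmem : (v : V) ∈ ((B₁ ∪ B₂ : Finset V) : Set V) := hsub₁ hv₁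
  refine ⟨?_, ⟨⟨v, hvmem⟩⟩⟩
  have key : ∀ z : ((B₁ ∪ B₂ : Finset V) : Set V),
      (G.induce ((B₁ ∪ B₂ : Finset V) : Set V)).Reachable z ⟨v, hvmem⟩ := by
    rintro ⟨z, hz⟩
    have hz' : z ∈ B₁ ∪ B₂ := by simpa using hz
    rcases Finset.mem_union.1 hz' with h | h
    · exact (h₁.preconnected ⟨z, h⟩ ⟨v, hv₁⟩).map (induceLEHom G hsub₁)
    · exact (h₂.preconnected ⟨z, h⟩ ⟨v, hv₂⟩).map (induceLEHom G hsub₂)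
  intro x y
  exact (key x).trans (key y).symm

/-- Transfer connectivity of an induced subgraph along an adjacency-preserving
identification with a graph on a subtype. -/
lemma induce_connected_transfer {S : Finset V} {G' : SimpleGraph {x // x ∈ S}}
    (hadj : ∀ (x y : {x // x ∈ S}), G.Adj x y ↔ G'.Adj x y)
    {B : Finset V} (hB : B ⊆ S) :
    (G.induce (B : Set V)).Connected ↔
      (G'.induce ((downPart S B : Finset {x // x ∈ S}) : Set {x // x ∈ S})).Connected := by
  have e : G.induce (B : Set V) ≃g
      G'.induce ((downPart S B : Finset {x // x ∈ S}) : Set {x // x ∈ S}) := by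
    refine ⟨⟨fun a => ⟨⟨a.1, hB a.2⟩, by simpa using a.2⟩,
      fun b => ⟨b.1.1, by exact mem_downPart.1 (Finset.mem_coe.1 b.2)⟩, ?_, ?_⟩, ?_⟩
    · intro a; rfl
    · intro b; rfl
    · intro a b
      simp only [Equiv.coe_fn_mk, comap_adj, Function.Embedding.coe_subtype]
      exact (hadj ⟨a.1, hB a.2⟩ ⟨b.1, hB b.2⟩).symm
  exact e.connected_iff

lemma split_reach_aux
    (hinter : S₁ ∩ S₂ = {v}) (huniv : ∀ x : V, x ∈ S₁ ∪ S₂)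
    (hedge : ∀ x y : V, G.Adj x y → (x ∈ S₁ ∧ y ∈ S₁) ∨ (x ∈ S₂ ∧ y ∈ S₂))
    {B : Finset V} (hvB : v ∈ B) (hv1 : v ∈ S₁) :
    ∀ {x y : ((B : Set V))} (_ : (G.induce (B : Set V)).Walk x y) (hy : (y : V) ∈ S₁),
      (∀ hx : (x : V) ∈ S₁,
        (G.induce ((B ∩ S₁ : Finset V) : Set V)).Reachable
          ⟨x.1, by simpa using Finset.mem_inter.2 ⟨Finset.mem_coe.1 x.2, hx⟩⟩
          ⟨y.1, by simpa using Finset.mem_inter.2 ⟨Finset.mem_coe.1 y.2, hy⟩⟩) ∧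
      ((x : V) ∉ S₁ →
        (G.induce ((B ∩ S₁ : Finset V) : Set V)).Reachable
          ⟨v, by simpa using Finset.mem_inter.2 ⟨hvB, hv1⟩⟩
          ⟨y.1, by simpa using Finset.mem_inter.2 ⟨Finset.mem_coe.1 y.2, hy⟩⟩) := by
  intro x y p
  induction p with
  | nil =>
    intro hy
    exact ⟨fun _ => Reachable.refl _, fun hx => absurd hy hx⟩
  | @cons a b c h q ih =>
    intro hy
    obtain ⟨a', haB⟩ := a
    have hab : G.Adj a' b.1 := h
    have IH := ih hy
    constructor
    · intro hx
      by_cases hb : (b : V) ∈ S₁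
      · refine (SimpleGraph.Adj.reachable ?_).trans (IH.1 hb)
        exact hab
      · rcases hedge _ _ hab with ⟨_, hbS⟩ | ⟨haS, _⟩
        · exact absurd hbS hb
        · have hav : a' = v := by
            have hm : a' ∈ S₁ ∩ S₂ := Finset.mem_inter.2 ⟨hx, haS⟩
            rw [hinter] at hm; exact Finset.mem_singleton.1 hm
          subst hav
          exact IH.2 hb
    · intro hx
      rcases hedge _ _ hab with ⟨haS, _⟩ | ⟨_, hbS⟩
      · exact absurd haS hx
      · by_cases hb : (b : V) ∈ S₁
        · obtain ⟨b', hbB⟩ := b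
          have hbv : b' = v := by
            have hm : b' ∈ S₁ ∩ S₂ := Finset.mem_inter.2 ⟨hb, hbS⟩
            rw [hinter] at hm; exact Finset.mem_singleton.1 hm
          subst hbv
          exact IH.1 hb
        · exact IH.2 hb

lemma split_connected
    (hinter : S₁ ∩ S₂ = {v}) (huniv : ∀ x : V, x ∈ S₁ ∪ S₂)
    (hedge : ∀ x y : V, G.Adj x y → (x ∈ S₁ ∧ y ∈ S₁) ∨ (x ∈ S₂ ∧ y ∈ S₂))
    {B : Finset V} (hvB : v ∈ B) (hv1 : v ∈ S₁)
    (hc : (G.induce (B : Set V)).Connected) :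
    (G.induce ((B ∩ S₁ : Finset V) : Set V)).Connected := by
  rw [connected_iff]
  refine ⟨?_, ⟨⟨v, by simpa using Finset.mem_inter.2 ⟨hvB, hv1⟩⟩⟩⟩
  rintro ⟨x, hx⟩ ⟨y, hy⟩
  have hx' : x ∈ B ∩ S₁ := by simpa using hx
  have hy' : y ∈ B ∩ S₁ := by simpa using hy
  have hxB : x ∈ B := (Finset.mem_inter.1 hx').1
  have hyB : y ∈ B := (Finset.mem_inter.1 hy').1
  have hr := hc.preconnected ⟨x, by simpa using hxB⟩ ⟨y, by simpa using hyB⟩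
  exact hr.elim fun p =>
    (split_reach_aux hinter huniv hedge hvB hv1 p (Finset.mem_inter.1 hy').2).1
      (Finset.mem_inter.1 hx').2

lemma classify_aux
    (hinter : S₁ ∩ S₂ = {v})
    (hedge : ∀ x y : V, G.Adj x y → (x ∈ S₁ ∧ y ∈ S₁) ∨ (x ∈ S₂ ∧ y ∈ S₂))
    {B : Finset V} :
    ∀ {x y : ((B : Set V))} (_ : (G.induce (B : Set V)).Walk x y),
      (x : V) ∉ S₁ → (y : V) ∈ S₁ → v ∈ B := by
  intro x y p
  induction p with
  | nil => intro hx hy; exact absurd hy hx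
  | @cons a b c h q ih =>
    intro hx hy
    have hab : G.Adj a.1 b.1 := h
    rcases hedge _ _ hab with ⟨haS, _⟩ | ⟨_, hbS⟩
    · exact absurd haS hx
    · by_cases hb : (b : V) ∈ S₁
      · have hbv : b.1 = v := by
          have hm : b.1 ∈ S₁ ∩ S₂ := Finset.mem_inter.2 ⟨hb, hbS⟩
          rw [hinter] at hm; exact Finset.mem_singleton.1 hm
        have := Finset.mem_coe.1 b.2
        rwa [hbv] at this
      · exact ih hb hy

lemma classify
    (hinter : S₁ ∩ S₂ = {v}) (huniv : ∀ x : V, x ∈ S₁ ∪ S₂)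
    (hedge : ∀ x y : V, G.Adj x y → (x ∈ S₁ ∧ y ∈ S₁) ∨ (x ∈ S₂ ∧ y ∈ S₂))
    {B : Finset V} (hvB : v ∉ B)
    (hc : (G.induce (B : Set V)).Connected) :
    B ⊆ S₁ ∨ B ⊆ S₂ := by
  by_contra hcon
  push_neg at hcon
  obtain ⟨h1, h2⟩ := hcon
  obtain ⟨x, hxB, hxS⟩ := Finset.not_subset.1 h1
  obtain ⟨y, hyB, hyS⟩ := Finset.not_subset.1 h2
  have hyS₁ : y ∈ S₁ := by
    rcases Finset.mem_union.1 (huniv y) with h | h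
    · exact h
    · exact absurd h hyS
  have hr := hc.preconnected ⟨x, by simpa using hxB⟩ ⟨y, by simpa using hyB⟩
  exact hvB (hr.elim fun p => classify_aux hinter hedge p hxS hyS₁)

end Graph

section Proj

variable [Fintype V]

/-- Parts of the projected partition onto `S`. -/
def projParts (S : Finset V) (P : Finpartition (Finset.univ : Finset V)) :
    Finset (Finset {x // x ∈ S}) :=
  (P.parts.image fun B => downPart S (B ∩ S)).erase ∅

lemma mem_projParts {S : Finset V} {P : Finpartition (Finset.univ : Finset V)}
    {T : Finset {x // x ∈ S}} :
    T ∈ projParts S P ↔ T ≠ ∅ ∧ ∃ B ∈ P.parts, downPart S (B ∩ S) = T := by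
  simp [projParts, Finset.mem_erase, Finset.mem_image]

lemma downPart_eq_empty {S B : Finset V} (h : B ⊆ S) : downPart S B = ∅ ↔ B = ∅ := by
  constructor
  · intro hd
    have := congrArg (upPart S) hd
    rw [up_down h] at this
    simpa [upPart] using this
  · rintro rfl; exact Finset.eq_empty_of_forall_notMem (by simp)

/-- The projection of a partition of `univ : Finset V` to a partition of the subtype of `S`. -/
def projPartition (S : Finset V) (P : Finpartition (Finset.univ : Finset V)) :
    Finpartition (Finset.univ : Finset {x // x ∈ S}) where
  parts := projParts S P
  supIndep := by
    rw [Finset.supIndep_iff_pairwiseDisjoint]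
    intro T hT T' hT' hne
    obtain ⟨hTne, B, hB, rfl⟩ := mem_projParts.1 hT
    obtain ⟨hTne', B', hB', hBT'⟩ := mem_projParts.1 hT'
    simp only [Function.onFun, id_eq, Finset.disjoint_left]
    intro a haT haT'
    apply hne
    rw [← hBT'] at haT' ⊢
    have h1 : (a : V) ∈ B := (Finset.mem_inter.1 (mem_downPart.1 haT)).1
    have h2 : (a : V) ∈ B' := (Finset.mem_inter.1 (mem_downPart.1 haT')).1
    rw [P.eq_of_mem_parts hB hB' h1 h2]
  sup_parts := by
    apply Finset.Subset.antisymm (Finset.subset_univ _)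
    intro a _
    obtain ⟨B, hB, haB⟩ := P.exists_mem (Finset.mem_univ (a : V))
    have haT : a ∈ downPart S (B ∩ S) := mem_downPart.2 (Finset.mem_inter.2 ⟨haB, a.2⟩)
    have hTmem : downPart S (B ∩ S) ∈ projParts S P :=
      mem_projParts.2 ⟨Finset.ne_empty_of_mem haT, B, hB, rfl⟩
    exact Finset.mem_sup.2 ⟨_, hTmem, haT⟩
  bot_notMem := by
    simp only [Finset.bot_eq_empty, projParts]
    exact Finset.notMem_erase _ _

@[simp] lemma projPartition_parts {S : Finset V} {P : Finpartition (Finset.univ : Finset V)} :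
    (projPartition S P).parts = projParts S P := rfl

lemma projParts_eq_image_filter {S : Finset V} {P : Finpartition (Finset.univ : Finset V)} :
    projParts S P =
      (P.parts.filter fun B => (B ∩ S).Nonempty).image fun B => downPart S (B ∩ S) := by
  ext T
  simp only [mem_projParts, Finset.mem_image, Finset.mem_filter]
  constructor
  · rintro ⟨hne, B, hB, rfl⟩
    refine ⟨B, ⟨hB, ?_⟩, rfl⟩
    rw [Finset.nonempty_iff_ne_empty]
    intro h
    exact hne (by rw [h]; exact Finset.eq_empty_of_forall_notMem (by simp))
  · rintro ⟨B, ⟨hB, hBne⟩, rfl⟩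
    refine ⟨fun h => ?_, B, hB, rfl⟩
    rw [downPart_eq_empty Finset.inter_subset_right] at h
    exact hBne.ne_empty h

lemma projParts_card {S : Finset V} {P : Finpartition (Finset.univ : Finset V)} :
    (projParts S P).card = (P.parts.filter fun B => (B ∩ S).Nonempty).card := by
  rw [projParts_eq_image_filter]
  apply Finset.card_image_of_injOn
  intro B hB B' hB' h
  rw [Finset.mem_coe, Finset.mem_filter] at hB hB'
  have h' : B ∩ S = B' ∩ S := by
    have := congrArg (upPart S) h
    rwa [up_down Finset.inter_subset_right, up_down Finset.inter_subset_right] at this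
  obtain ⟨a, ha⟩ := hB.2
  have ha' : a ∈ B' ∩ S := h' ▸ ha
  exact P.eq_of_mem_parts hB.1 hB'.1 (Finset.mem_inter.1 ha).1 (Finset.mem_inter.1 ha').1

end Proj

section ProjComp

open SimpleGraph

variable [Fintype V] {G : SimpleGraph V} {S₁ S₂ : Finset V} {v : V}

lemma projPartition_isComposition
    (hinter : S₁ ∩ S₂ = {v}) (huniv : ∀ x : V, x ∈ S₁ ∪ S₂)
    (hedge : ∀ x y : V, G.Adj x y → (x ∈ S₁ ∧ y ∈ S₁) ∨ (x ∈ S₂ ∧ y ∈ S₂))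
    {G' : SimpleGraph {x // x ∈ S₁}}
    (hadj : ∀ (x y : {x // x ∈ S₁}), G.Adj x y ↔ G'.Adj x y)
    (hv1 : v ∈ S₁)
    {P : Finpartition (Finset.univ : Finset V)} (hP : G.IsComposition P) :
    G'.IsComposition (projPartition S₁ P) := by
  intro T hT
  rw [projPartition_parts] at hT
  obtain ⟨hne, B, hB, rfl⟩ := mem_projParts.1 hT
  rw [← induce_connected_transfer hadj Finset.inter_subset_right]
  by_cases hv : v ∈ B
  · exact split_connected hinter huniv hedge hv hv1 (hP B hB)
  · rcases classify hinter huniv hedge hv (hP B hB) with h | h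
    · rw [Finset.inter_eq_left.2 h]
      exact hP B hB
    · exfalso
      have hBne : (B ∩ S₁).Nonempty := by
        rw [Finset.nonempty_iff_ne_empty]
        intro h'
        exact hne (by rw [h']; exact Finset.eq_empty_of_forall_notMem (by simp))
      obtain ⟨a, ha⟩ := hBne
      have h1 : a ∈ B := (Finset.mem_inter.1 ha).1
      have hm : a ∈ S₁ ∩ S₂ := Finset.mem_inter.2 ⟨(Finset.mem_inter.1 ha).2, h h1⟩
      rw [hinter, Finset.mem_singleton] at hm
      exact hv (hm ▸ h1)

lemma meets_both_iff
    (hinter : S₁ ∩ S₂ = {v}) (huniv : ∀ x : V, x ∈ S₁ ∪ S₂)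
    (hedge : ∀ x y : V, G.Adj x y → (x ∈ S₁ ∧ y ∈ S₁) ∨ (x ∈ S₂ ∧ y ∈ S₂))
    {P : Finpartition (Finset.univ : Finset V)} (hP : G.IsComposition P)
    {B : Finset V} (hB : B ∈ P.parts) :
    ((B ∩ S₁).Nonempty ∧ (B ∩ S₂).Nonempty) ↔ v ∈ B := by
  have hv1 : v ∈ S₁ := by
    have : v ∈ S₁ ∩ S₂ := by rw [hinter]; exact Finset.mem_singleton_self v
    exact (Finset.mem_inter.1 this).1
  have hv2 : v ∈ S₂ := by
    have : v ∈ S₁ ∩ S₂ := by rw [hinter]; exact Finset.mem_singleton_self v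
    exact (Finset.mem_inter.1 this).2
  constructor
  · rintro ⟨h1, h2⟩
    by_contra hv
    rcases classify hinter huniv hedge hv (hP B hB) with h | h
    · obtain ⟨a, ha⟩ := h2
      have hm : a ∈ S₁ ∩ S₂ :=
        Finset.mem_inter.2 ⟨h (Finset.mem_inter.1 ha).1, (Finset.mem_inter.1 ha).2⟩
      rw [hinter, Finset.mem_singleton] at hm
      exact hv (hm ▸ (Finset.mem_inter.1 ha).1)
    · obtain ⟨a, ha⟩ := h1
      have hm : a ∈ S₁ ∩ S₂ :=
        Finset.mem_inter.2 ⟨(Finset.mem_inter.1 ha).2, h (Finset.mem_inter.1 ha).1⟩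
      rw [hinter, Finset.mem_singleton] at hm
      exact hv (hm ▸ (Finset.mem_inter.1 ha).1)
  · intro hv
    exact ⟨⟨v, Finset.mem_inter.2 ⟨hv, hv1⟩⟩, ⟨v, Finset.mem_inter.2 ⟨hv, hv2⟩⟩⟩

lemma projParts_card_add
    (hinter : S₁ ∩ S₂ = {v}) (huniv : ∀ x : V, x ∈ S₁ ∪ S₂)
    (hedge : ∀ x y : V, G.Adj x y → (x ∈ S₁ ∧ y ∈ S₁) ∨ (x ∈ S₂ ∧ y ∈ S₂))
    {P : Finpartition (Finset.univ : Finset V)} (hP : G.IsComposition P) :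
    (projParts S₁ P).card + (projParts S₂ P).card = P.parts.card + 1 := by
  rw [projParts_card, projParts_card]
  have hu : (P.parts.filter fun B => (B ∩ S₁).Nonempty) ∪
      (P.parts.filter fun B => (B ∩ S₂).Nonempty) = P.parts := by
    apply Finset.Subset.antisymm
    · exact Finset.union_subset (Finset.filter_subset _ _) (Finset.filter_subset _ _)
    · intro B hB
      obtain ⟨a, ha⟩ := P.nonempty_of_mem_parts hB
      rcases Finset.mem_union.1 (huniv a) with h | h
      · exact Finset.mem_union_left _ (Finset.mem_filter.2 ⟨hB, ⟨a, Finset.mem_inter.2 ⟨ha, h⟩⟩⟩)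
      · exact Finset.mem_union_right _ (Finset.mem_filter.2 ⟨hB, ⟨a, Finset.mem_inter.2 ⟨ha, h⟩⟩⟩)
  have hi : (P.parts.filter fun B => (B ∩ S₁).Nonempty) ∩
      (P.parts.filter fun B => (B ∩ S₂).Nonempty) = {P.part v} := by
    ext B
    simp only [Finset.mem_inter, Finset.mem_filter, Finset.mem_singleton]
    constructor
    · rintro ⟨⟨hB, h1⟩, ⟨_, h2⟩⟩
      have hv : v ∈ B := (meets_both_iff hinter huniv hedge hP hB).1 ⟨h1, h2⟩
      exact (P.part_eq_of_mem hB hv).symm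
    · rintro rfl
      have hmem : P.part v ∈ P.parts := P.part_mem.2 (Finset.mem_univ v)
      have hv : v ∈ P.part v := P.mem_part (Finset.mem_univ v)
      have := (meets_both_iff hinter huniv hedge hP hmem).2 hv
      exact ⟨⟨hmem, this.1⟩, ⟨hmem, this.2⟩⟩
  have := Finset.card_union_add_card_inter
    (P.parts.filter fun B => (B ∩ S₁).Nonempty)
    (P.parts.filter fun B => (B ∩ S₂).Nonempty)
  rw [hu, hi, Finset.card_singleton] at this
  omega

end ProjComp

section Glue

open SimpleGraph

variable [Fintype V] {G : SimpleGraph V} {S₁ S₂ : Finset V} {v : V}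

variable (S₁ S₂ v) in
/-- Parts of the glued partition. -/
def glueParts (hv1 : v ∈ S₁) (hv2 : v ∈ S₂)
    (P₁ : Finpartition (Finset.univ : Finset {x // x ∈ S₁}))
    (P₂ : Finpartition (Finset.univ : Finset {x // x ∈ S₂})) : Finset (Finset V) :=
  ((P₁.parts.image (upPart S₁)).erase (upPart S₁ (P₁.part ⟨v, hv1⟩))) ∪
  ((P₂.parts.image (upPart S₂)).erase (upPart S₂ (P₂.part ⟨v, hv2⟩))) ∪
  {upPart S₁ (P₁.part ⟨v, hv1⟩) ∪ upPart S₂ (P₂.part ⟨v, hv2⟩)}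

variable {hv1 : v ∈ S₁} {hv2 : v ∈ S₂}
  {P₁ : Finpartition (Finset.univ : Finset {x // x ∈ S₁})}
  {P₂ : Finpartition (Finset.univ : Finset {x // x ∈ S₂})}

lemma mem_glueParts {B : Finset V} :
    B ∈ glueParts S₁ S₂ v hv1 hv2 P₁ P₂ ↔
      (∃ T ∈ P₁.parts, T ≠ P₁.part ⟨v, hv1⟩ ∧ B = upPart S₁ T) ∨
      (∃ T ∈ P₂.parts, T ≠ P₂.part ⟨v, hv2⟩ ∧ B = upPart S₂ T) ∨
      B = upPart S₁ (P₁.part ⟨v, hv1⟩) ∪ upPart S₂ (P₂.part ⟨v, hv2⟩) := by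
  simp only [glueParts, Finset.mem_union, Finset.mem_erase, Finset.mem_image,
    Finset.mem_singleton]
  constructor
  · rintro ((⟨hne, T, hT, rfl⟩ | ⟨hne, T, hT, rfl⟩) | h)
    · exact Or.inl ⟨T, hT, fun h => hne (by rw [h]), rfl⟩
    · exact Or.inr (Or.inl ⟨T, hT, fun h => hne (by rw [h]), rfl⟩)
    · exact Or.inr (Or.inr h)
  · rintro (⟨T, hT, hne, rfl⟩ | ⟨T, hT, hne, rfl⟩ | h)
    · exact Or.inl (Or.inl ⟨fun h => hne (upPart_injective _ h), T, hT, rfl⟩)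
    · exact Or.inl (Or.inr ⟨fun h => hne (upPart_injective _ h), T, hT, rfl⟩)
    · exact Or.inr h

lemma mem_vpart₁ : v ∈ upPart S₁ (P₁.part ⟨v, hv1⟩) :=
  mem_upPart.2 ⟨hv1, P₁.mem_part (Finset.mem_univ _)⟩

lemma eq_vpart_of_mem₁ {T : Finset {x // x ∈ S₁}} (hT : T ∈ P₁.parts)
    (hv : v ∈ upPart S₁ T) : T = P₁.part ⟨v, hv1⟩ := by
  obtain ⟨h, hm⟩ := mem_upPart.1 hv
  exact (P₁.part_eq_of_mem hT (by exact hm)).symm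

lemma eq_vpart_of_mem₂ {T : Finset {x // x ∈ S₂}} (hT : T ∈ P₂.parts)
    (hv : v ∈ upPart S₂ T) : T = P₂.part ⟨v, hv2⟩ := by
  obtain ⟨h, hm⟩ := mem_upPart.1 hv
  exact (P₂.part_eq_of_mem hT (by exact hm)).symm

lemma up_eq_of_mem₁ {T T' : Finset {x // x ∈ S₁}} (hT : T ∈ P₁.parts) (hT' : T' ∈ P₁.parts)
    {a : V} (ha : a ∈ upPart S₁ T) (ha' : a ∈ upPart S₁ T') : T = T' := by
  obtain ⟨h, hm⟩ := mem_upPart.1 ha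
  obtain ⟨h', hm'⟩ := mem_upPart.1 ha'
  exact P₁.eq_of_mem_parts hT hT' hm (by exact hm')

lemma up_eq_of_mem₂ {T T' : Finset {x // x ∈ S₂}} (hT : T ∈ P₂.parts) (hT' : T' ∈ P₂.parts)
    {a : V} (ha : a ∈ upPart S₂ T) (ha' : a ∈ upPart S₂ T') : T = T' := by
  obtain ⟨h, hm⟩ := mem_upPart.1 ha
  obtain ⟨h', hm'⟩ := mem_upPart.1 ha'
  exact P₂.eq_of_mem_parts hT hT' hm (by exact hm')

lemma eq_v_of_mem_both (hinter : S₁ ∩ S₂ = {v}) {a : V} (h1 : a ∈ S₁) (h2 : a ∈ S₂) :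
    a = v := by
  have : a ∈ S₁ ∩ S₂ := Finset.mem_inter.2 ⟨h1, h2⟩
  rw [hinter] at this
  exact Finset.mem_singleton.1 this

lemma glueParts_eq_of_mem (hinter : S₁ ∩ S₂ = {v}) {B B' : Finset V}
    (hB : B ∈ glueParts S₁ S₂ v hv1 hv2 P₁ P₂) (hB' : B' ∈ glueParts S₁ S₂ v hv1 hv2 P₁ P₂)
    {a : V} (ha : a ∈ B) (ha' : a ∈ B') : B = B' := by
  have vmem₁ : ∀ {T : Finset {x // x ∈ S₁}}, T ∈ P₁.parts → T ≠ P₁.part ⟨v, hv1⟩ →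
      v ∉ upPart S₁ T := fun hT hne hv => hne (eq_vpart_of_mem₁ hT hv)
  have vmem₂ : ∀ {T : Finset {x // x ∈ S₂}}, T ∈ P₂.parts → T ≠ P₂.part ⟨v, hv2⟩ →
      v ∉ upPart S₂ T := fun hT hne hv => hne (eq_vpart_of_mem₂ hT hv)
  rcases mem_glueParts.1 hB with ⟨T, hT, hne, rfl⟩ | ⟨T, hT, hne, rfl⟩ | rfl <;>
    rcases mem_glueParts.1 hB' with ⟨T', hT', hne', rfl⟩ | ⟨T', hT', hne', rfl⟩ | rfl
  · rw [up_eq_of_mem₁ hT hT' ha ha']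
  · -- up₁ T vs up₂ T'
    exfalso
    have hav : a = v := eq_v_of_mem_both hinter (upPart_subset _ _ ha) (upPart_subset _ _ ha')
    exact vmem₁ hT hne (hav ▸ ha)
  · exfalso
    rcases Finset.mem_union.1 ha' with h | h
    · exact hne (up_eq_of_mem₁ hT (P₁.part_mem.2 (Finset.mem_univ _)) ha h)
    · have hav : a = v := eq_v_of_mem_both hinter (upPart_subset _ _ ha) (upPart_subset _ _ h)
      exact vmem₁ hT hne (hav ▸ ha)
  · exfalso
    have hav : a = v := eq_v_of_mem_both hinter (upPart_subset _ _ ha') (upPart_subset _ _ ha)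
    exact vmem₂ hT hne (hav ▸ ha)
  · rw [up_eq_of_mem₂ hT hT' ha ha']
  · exfalso
    rcases Finset.mem_union.1 ha' with h | h
    · have hav : a = v := eq_v_of_mem_both hinter (upPart_subset _ _ h) (upPart_subset _ _ ha)
      exact vmem₂ hT hne (hav ▸ ha)
    · exact hne (up_eq_of_mem₂ hT (P₂.part_mem.2 (Finset.mem_univ _)) ha h)
  · exfalso
    rcases Finset.mem_union.1 ha with h | h
    · exact hne' (up_eq_of_mem₁ hT' (P₁.part_mem.2 (Finset.mem_univ _)) ha' h)
    · have hav : a = v := eq_v_of_mem_both hinter (upPart_subset _ _ ha') (upPart_subset _ _ h)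
      exact vmem₁ hT' hne' (hav ▸ ha')
  · exfalso
    rcases Finset.mem_union.1 ha with h | h
    · have hav : a = v := eq_v_of_mem_both hinter (upPart_subset _ _ h) (upPart_subset _ _ ha')
      exact vmem₂ hT' hne' (hav ▸ ha')
    · exact hne' (up_eq_of_mem₂ hT' (P₂.part_mem.2 (Finset.mem_univ _)) ha' h)
  · rfl

variable (P₁ P₂) in
/-- The glued partition of `univ : Finset V`. -/
def gluePartition (hinter : S₁ ∩ S₂ = {v}) (huniv : ∀ x : V, x ∈ S₁ ∪ S₂)
    (hv1 : v ∈ S₁) (hv2 : v ∈ S₂) :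
    Finpartition (Finset.univ : Finset V) where
  parts := glueParts S₁ S₂ v hv1 hv2 P₁ P₂
  supIndep := by
    rw [Finset.supIndep_iff_pairwiseDisjoint]
    intro B hB B' hB' hne
    simp only [Function.onFun, id_eq, Finset.disjoint_left]
    intro a ha ha'
    exact hne (glueParts_eq_of_mem hinter hB hB' ha ha')
  sup_parts := by
    apply Finset.Subset.antisymm (Finset.subset_univ _)
    intro a _
    rcases Finset.mem_union.1 (huniv a) with h | h
    · by_cases hp : P₁.part ⟨a, h⟩ = P₁.part ⟨v, hv1⟩
      · refine Finset.mem_sup.2 ⟨_, mem_glueParts.2 (Or.inr (Or.inr rfl)), ?_⟩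
        refine Finset.mem_union_left _ ?_
        rw [← hp]
        exact mem_upPart.2 ⟨h, P₁.mem_part (Finset.mem_univ _)⟩
      · refine Finset.mem_sup.2 ⟨_, mem_glueParts.2
          (Or.inl ⟨_, P₁.part_mem.2 (Finset.mem_univ _), hp, rfl⟩), ?_⟩
        exact mem_upPart.2 ⟨h, P₁.mem_part (Finset.mem_univ _)⟩
    · by_cases hp : P₂.part ⟨a, h⟩ = P₂.part ⟨v, hv2⟩
      · refine Finset.mem_sup.2 ⟨_, mem_glueParts.2 (Or.inr (Or.inr rfl)), ?_⟩
        refine Finset.mem_union_right _ ?_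
        rw [← hp]
        exact mem_upPart.2 ⟨h, P₂.mem_part (Finset.mem_univ _)⟩
      · refine Finset.mem_sup.2 ⟨_, mem_glueParts.2
          (Or.inr (Or.inl ⟨_, P₂.part_mem.2 (Finset.mem_univ _), hp, rfl⟩)), ?_⟩
        exact mem_upPart.2 ⟨h, P₂.mem_part (Finset.mem_univ _)⟩
  bot_notMem := by
    intro hmem
    rw [Finset.bot_eq_empty] at hmem
    rcases mem_glueParts.1 hmem with ⟨T, hT, _, hTe⟩ | ⟨T, hT, _, hTe⟩ | hTe
    · rw [eq_comm, upPart_eq_empty] at hTe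
      exact P₁.bot_notMem (by rw [Finset.bot_eq_empty, ← hTe]; exact hT)
    · rw [eq_comm, upPart_eq_empty] at hTe
      exact P₂.bot_notMem (by rw [Finset.bot_eq_empty, ← hTe]; exact hT)
    · have : v ∈ (∅ : Finset V) := by
        rw [hTe]
        exact Finset.mem_union_left _ mem_vpart₁
      simp at this

@[simp] lemma gluePartition_parts {hinter : S₁ ∩ S₂ = {v}} {huniv : ∀ x : V, x ∈ S₁ ∪ S₂} :
    (gluePartition P₁ P₂ hinter huniv hv1 hv2).parts = glueParts S₁ S₂ v hv1 hv2 P₁ P₂ := rfl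

lemma glueParts_card (hinter : S₁ ∩ S₂ = {v}) :
    (glueParts S₁ S₂ v hv1 hv2 P₁ P₂).card = P₁.parts.card + P₂.parts.card - 1 := by
  have h1 : ((P₁.parts.image (upPart S₁)).erase (upPart S₁ (P₁.part ⟨v, hv1⟩))).card =
      P₁.parts.card - 1 := by
    rw [Finset.card_erase_of_mem
      (Finset.mem_image_of_mem _ (P₁.part_mem.2 (Finset.mem_univ _))),
      Finset.card_image_of_injective _ (upPart_injective _)]
  have h2 : ((P₂.parts.image (upPart S₂)).erase (upPart S₂ (P₂.part ⟨v, hv2⟩))).card =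
      P₂.parts.card - 1 := by
    rw [Finset.card_erase_of_mem
      (Finset.mem_image_of_mem _ (P₂.part_mem.2 (Finset.mem_univ _))),
      Finset.card_image_of_injective _ (upPart_injective _)]
  have hd1 : Disjoint ((P₁.parts.image (upPart S₁)).erase (upPart S₁ (P₁.part ⟨v, hv1⟩)))
      ((P₂.parts.image (upPart S₂)).erase (upPart S₂ (P₂.part ⟨v, hv2⟩))) := by
    rw [Finset.disjoint_left]
    rintro B hB hB'
    obtain ⟨hne, T, hT, rfl⟩ := by
      simpa only [Finset.mem_erase, Finset.mem_image] using hB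
    obtain ⟨hne', T', hT', hTT'⟩ := by
      simpa only [Finset.mem_erase, Finset.mem_image] using hB'
    obtain ⟨x, hx⟩ := P₁.nonempty_of_mem_parts hT
    have hxB : (x : V) ∈ upPart S₁ T := mem_upPart.2 ⟨x.2, hx⟩
    have hxS₂ : (x : V) ∈ S₂ := upPart_subset _ _ (hTT' ▸ hxB)
    have hxv : (x : V) = v := eq_v_of_mem_both hinter x.2 hxS₂
    exact hne (by rw [eq_vpart_of_mem₁ hT (hxv ▸ hxB)])
  have hd2 : Disjoint (((P₁.parts.image (upPart S₁)).erase (upPart S₁ (P₁.part ⟨v, hv1⟩))) ∪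
      ((P₂.parts.image (upPart S₂)).erase (upPart S₂ (P₂.part ⟨v, hv2⟩))))
      {upPart S₁ (P₁.part ⟨v, hv1⟩) ∪ upPart S₂ (P₂.part ⟨v, hv2⟩)} := by
    rw [Finset.disjoint_right]
    intro B hB hBu
    rw [Finset.mem_singleton] at hB
    subst hB
    rcases Finset.mem_union.1 hBu with h | h
    · obtain ⟨hne, T, hT, hTe⟩ := by
        simpa only [Finset.mem_erase, Finset.mem_image] using h
      have : v ∈ upPart S₁ T := hTe.symm ▸ Finset.mem_union_left _ mem_vpart₁
      exact hne (by rw [← hTe, eq_vpart_of_mem₁ hT this])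
    · obtain ⟨hne, T, hT, hTe⟩ := by
        simpa only [Finset.mem_erase, Finset.mem_image] using h
      have : v ∈ upPart S₂ T := hTe.symm ▸ Finset.mem_union_left _ mem_vpart₁
      exact hne (by rw [← hTe, eq_vpart_of_mem₂ hT this])
  have hc1 : 1 ≤ P₁.parts.card := Finset.card_pos.2 ⟨_, P₁.part_mem.2 (Finset.mem_univ ⟨v, hv1⟩)⟩
  have hc2 : 1 ≤ P₂.parts.card := Finset.card_pos.2 ⟨_, P₂.part_mem.2 (Finset.mem_univ ⟨v, hv2⟩)⟩
  simp only [glueParts]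
  rw [Finset.card_union_of_disjoint hd2, Finset.card_union_of_disjoint hd1,
    h1, h2, Finset.card_singleton]
  omega

end Glue

section RoundTrip

open SimpleGraph

variable [Fintype V] {G : SimpleGraph V} {S₁ S₂ : Finset V} {v : V}
  {hv1 : v ∈ S₁} {hv2 : v ∈ S₂}
  {P₁ : Finpartition (Finset.univ : Finset {x // x ∈ S₁})}
  {P₂ : Finpartition (Finset.univ : Finset {x // x ∈ S₂})}

lemma mem_vpart₂ : v ∈ upPart S₂ (P₂.part ⟨v, hv2⟩) :=
  mem_upPart.2 ⟨hv2, P₂.mem_part (Finset.mem_univ _)⟩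

lemma gluePartition_isComposition
    (hinter : S₁ ∩ S₂ = {v}) (huniv : ∀ x : V, x ∈ S₁ ∪ S₂)
    {G₁' : SimpleGraph {x // x ∈ S₁}} (hadj₁ : ∀ (x y : {x // x ∈ S₁}), G.Adj x y ↔ G₁'.Adj x y)
    {G₂' : SimpleGraph {x // x ∈ S₂}} (hadj₂ : ∀ (x y : {x // x ∈ S₂}), G.Adj x y ↔ G₂'.Adj x y)
    (hP₁ : G₁'.IsComposition P₁) (hP₂ : G₂'.IsComposition P₂) :
    G.IsComposition (gluePartition P₁ P₂ hinter huniv hv1 hv2) := by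
  intro B hB
  rw [gluePartition_parts] at hB
  rcases mem_glueParts.1 hB with ⟨T, hT, _, rfl⟩ | ⟨T, hT, _, rfl⟩ | rfl
  · rw [induce_connected_transfer hadj₁ (upPart_subset _ _), down_up]
    exact hP₁ T hT
  · rw [induce_connected_transfer hadj₂ (upPart_subset _ _), down_up]
    exact hP₂ T hT
  · refine connected_union_of_mem mem_vpart₁ mem_vpart₂ ?_ ?_
    · rw [induce_connected_transfer hadj₁ (upPart_subset _ _), down_up]
      exact hP₁ _ (P₁.part_mem.2 (Finset.mem_univ _))
    · rw [induce_connected_transfer hadj₂ (upPart_subset _ _), down_up]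
      exact hP₂ _ (P₂.part_mem.2 (Finset.mem_univ _))

lemma inter_S₁_of_up₂ (hinter : S₁ ∩ S₂ = {v}) {T : Finset {x // x ∈ S₂}}
    (hT : T ∈ P₂.parts) (hne : T ≠ P₂.part ⟨v, hv2⟩) :
    upPart S₂ T ∩ S₁ = ∅ := by
  apply Finset.eq_empty_of_forall_notMem
  intro a ha
  have h1 : a ∈ upPart S₂ T := (Finset.mem_inter.1 ha).1
  have hav : a = v := eq_v_of_mem_both hinter (Finset.mem_inter.1 ha).2 (upPart_subset _ _ h1)
  exact hne (eq_vpart_of_mem₂ hT (hav ▸ h1))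

lemma union_inter_S₁ (hinter : S₁ ∩ S₂ = {v}) :
    (upPart S₁ (P₁.part ⟨v, hv1⟩) ∪ upPart S₂ (P₂.part ⟨v, hv2⟩)) ∩ S₁ =
      upPart S₁ (P₁.part ⟨v, hv1⟩) := by
  apply Finset.Subset.antisymm
  · intro a ha
    obtain ⟨hau, haS⟩ := Finset.mem_inter.1 ha
    rcases Finset.mem_union.1 hau with h | h
    · exact h
    · have hav : a = v := eq_v_of_mem_both hinter haS (upPart_subset _ _ h)
      subst hav
      exact mem_vpart₁
  · intro a ha
    exact Finset.mem_inter.2 ⟨Finset.mem_union_left _ ha, upPart_subset _ _ ha⟩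

lemma proj_glue (hinter : S₁ ∩ S₂ = {v}) (huniv : ∀ x : V, x ∈ S₁ ∪ S₂) :
    projPartition S₁ (gluePartition P₁ P₂ hinter huniv hv1 hv2) = P₁ := by
  apply Finpartition.ext
  ext T
  rw [projPartition_parts, mem_projParts]
  constructor
  · rintro ⟨hne, B, hB, rfl⟩
    rw [gluePartition_parts] at hB
    rcases mem_glueParts.1 hB with ⟨T', hT', _, rfl⟩ | ⟨T', hT', hne', rfl⟩ | rfl
    · rw [Finset.inter_eq_left.2 (upPart_subset _ _), down_up]
      exact hT'
    · exfalso
      apply hne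
      rw [inter_S₁_of_up₂ hinter hT' hne']
      exact Finset.eq_empty_of_forall_notMem (by simp)
    · rw [union_inter_S₁ hinter, down_up]
      exact P₁.part_mem.2 (Finset.mem_univ _)
  · intro hT
    have hTne : T ≠ ∅ := by
      obtain ⟨a, ha⟩ := P₁.nonempty_of_mem_parts hT
      exact Finset.ne_empty_of_mem ha
    by_cases hp : T = P₁.part ⟨v, hv1⟩
    · subst hp
      refine ⟨hTne, _, by rw [gluePartition_parts]; exact mem_glueParts.2 (Or.inr (Or.inr rfl)), ?_⟩
      rw [union_inter_S₁ hinter, down_up]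
    · refine ⟨hTne, upPart S₁ T,
        by rw [gluePartition_parts]; exact mem_glueParts.2 (Or.inl ⟨T, hT, hp, rfl⟩), ?_⟩
      rw [Finset.inter_eq_left.2 (upPart_subset _ _), down_up]

lemma glueParts_comm :
    glueParts S₁ S₂ v hv1 hv2 P₁ P₂ = glueParts S₂ S₁ v hv2 hv1 P₂ P₁ := by
  simp only [glueParts]
  rw [Finset.union_comm ((P₁.parts.image (upPart S₁)).erase _)
    ((P₂.parts.image (upPart S₂)).erase _),
    Finset.union_comm (upPart S₁ (P₁.part ⟨v, hv1⟩)) (upPart S₂ (P₂.part ⟨v, hv2⟩))]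

lemma gluePartition_comm (hinter : S₁ ∩ S₂ = {v}) (huniv : ∀ x : V, x ∈ S₁ ∪ S₂)
    (hinter' : S₂ ∩ S₁ = {v}) (huniv' : ∀ x : V, x ∈ S₂ ∪ S₁) :
    gluePartition P₁ P₂ hinter huniv hv1 hv2 = gluePartition P₂ P₁ hinter' huniv' hv2 hv1 := by
  apply Finpartition.ext
  ext B
  rw [show (gluePartition P₁ P₂ hinter huniv hv1 hv2).parts = glueParts S₁ S₂ v hv1 hv2 P₁ P₂ from rfl,
    show (gluePartition P₂ P₁ hinter' huniv' hv2 hv1).parts = glueParts S₂ S₁ v hv2 hv1 P₂ P₁ from rfl,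
    glueParts_comm]

lemma proj_glue₂ (hinter : S₁ ∩ S₂ = {v}) (huniv : ∀ x : V, x ∈ S₁ ∪ S₂) :
    projPartition S₂ (gluePartition P₁ P₂ hinter huniv hv1 hv2) = P₂ := by
  have hinter' : S₂ ∩ S₁ = {v} := by rw [Finset.inter_comm]; exact hinter
  have huniv' : ∀ x : V, x ∈ S₂ ∪ S₁ := fun x => by
    rw [Finset.union_comm]; exact huniv x
  rw [gluePartition_comm hinter huniv hinter' huniv']
  exact proj_glue hinter' huniv'

lemma glue_proj
    (hinter : S₁ ∩ S₂ = {v}) (huniv : ∀ x : V, x ∈ S₁ ∪ S₂)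
    (hedge : ∀ x y : V, G.Adj x y → (x ∈ S₁ ∧ y ∈ S₁) ∨ (x ∈ S₂ ∧ y ∈ S₂))
    {P : Finpartition (Finset.univ : Finset V)} (hP : G.IsComposition P) :
    gluePartition (projPartition S₁ P) (projPartition S₂ P) hinter huniv hv1 hv2 = P := by
  have hv1' : v ∈ S₁ := hv1
  have hv2' : v ∈ S₂ := hv2
  -- the v-part of the projections
  have hTv₁ : (projPartition S₁ P).part ⟨v, hv1⟩ = downPart S₁ (P.part v ∩ S₁) := by
    have hmem : downPart S₁ (P.part v ∩ S₁) ∈ (projPartition S₁ P).parts := by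
      rw [projPartition_parts]
      exact mem_projParts.2 ⟨Finset.ne_empty_of_mem
        ((mem_downPart (a := ⟨v, hv1⟩)).2 (Finset.mem_inter.2 ⟨P.mem_part (Finset.mem_univ v), hv1⟩)),
        _, P.part_mem.2 (Finset.mem_univ v), rfl⟩
    exact Finpartition.part_eq_of_mem _ hmem
      ((mem_downPart (a := ⟨v, hv1⟩)).2 (Finset.mem_inter.2 ⟨P.mem_part (Finset.mem_univ v), hv1⟩))
  have hTv₂ : (projPartition S₂ P).part ⟨v, hv2⟩ = downPart S₂ (P.part v ∩ S₂) := by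
    have hmem : downPart S₂ (P.part v ∩ S₂) ∈ (projPartition S₂ P).parts := by
      rw [projPartition_parts]
      exact mem_projParts.2 ⟨Finset.ne_empty_of_mem
        ((mem_downPart (a := ⟨v, hv2⟩)).2 (Finset.mem_inter.2 ⟨P.mem_part (Finset.mem_univ v), hv2⟩)),
        _, P.part_mem.2 (Finset.mem_univ v), rfl⟩
    exact Finpartition.part_eq_of_mem _ hmem
      ((mem_downPart (a := ⟨v, hv2⟩)).2 (Finset.mem_inter.2 ⟨P.mem_part (Finset.mem_univ v), hv2⟩))
  have hC₁ : upPart S₁ ((projPartition S₁ P).part ⟨v, hv1⟩) = P.part v ∩ S₁ := by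
    rw [hTv₁, up_down Finset.inter_subset_right]
  have hC₂ : upPart S₂ ((projPartition S₂ P).part ⟨v, hv2⟩) = P.part v ∩ S₂ := by
    rw [hTv₂, up_down Finset.inter_subset_right]
  have hCunion : upPart S₁ ((projPartition S₁ P).part ⟨v, hv1⟩) ∪
      upPart S₂ ((projPartition S₂ P).part ⟨v, hv2⟩) = P.part v := by
    rw [hC₁, hC₂, ← Finset.inter_union_distrib_left]
    exact Finset.inter_eq_left.2 (fun a _ => huniv a)
  apply Finpartition.ext
  ext B
  rw [show (gluePartition (projPartition S₁ P) (projPartition S₂ P) hinter huniv hv1 hv2).parts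
    = glueParts S₁ S₂ v hv1 hv2 (projPartition S₁ P) (projPartition S₂ P) from rfl]
  constructor
  · intro hB
    rcases mem_glueParts.1 hB with ⟨T, hT, hne, rfl⟩ | ⟨T, hT, hne, rfl⟩ | rfl
    · rw [projPartition_parts] at hT
      obtain ⟨hTne, B', hB', rfl⟩ := mem_projParts.1 hT
      have hBS : B' ∩ S₁ ⊆ S₁ := Finset.inter_subset_right
      rw [up_down hBS]
      have hvB' : v ∉ B' := by
        intro hv
        apply hne
        rw [hTv₁, P.part_eq_of_mem hB' hv]
      have hB'ne : (B' ∩ S₁).Nonempty := by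
        rw [Finset.nonempty_iff_ne_empty]
        intro h
        exact hTne (by rw [h]; exact Finset.eq_empty_of_forall_notMem (by simp))
      rcases classify hinter huniv hedge hvB' (hP B' hB') with h | h
      · rw [Finset.inter_eq_left.2 h]
        exact hB'
      · exfalso
        obtain ⟨a, ha⟩ := hB'ne
        have hav : a = v := eq_v_of_mem_both hinter (Finset.mem_inter.1 ha).2
          (h (Finset.mem_inter.1 ha).1)
        exact hvB' (hav ▸ (Finset.mem_inter.1 ha).1)
    · rw [projPartition_parts] at hT
      obtain ⟨hTne, B', hB', rfl⟩ := mem_projParts.1 hT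
      have hBS : B' ∩ S₂ ⊆ S₂ := Finset.inter_subset_right
      rw [up_down hBS]
      have hvB' : v ∉ B' := by
        intro hv
        apply hne
        rw [hTv₂, P.part_eq_of_mem hB' hv]
      have hB'ne : (B' ∩ S₂).Nonempty := by
        rw [Finset.nonempty_iff_ne_empty]
        intro h
        exact hTne (by rw [h]; exact Finset.eq_empty_of_forall_notMem (by simp))
      rcases classify hinter huniv hedge hvB' (hP B' hB') with h | h
      · exfalso
        obtain ⟨a, ha⟩ := hB'ne
        have hav : a = v := eq_v_of_mem_both hinter (h (Finset.mem_inter.1 ha).1)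
          (Finset.mem_inter.1 ha).2
        exact hvB' (hav ▸ (Finset.mem_inter.1 ha).1)
      · rw [Finset.inter_eq_left.2 h]
        exact hB'
    · rw [hCunion]
      exact P.part_mem.2 (Finset.mem_univ v)
  · intro hB
    by_cases hv : v ∈ B
    · have : B = P.part v := (P.part_eq_of_mem hB hv).symm
      subst this
      exact mem_glueParts.2 (Or.inr (Or.inr hCunion.symm))
    · have hBne := P.nonempty_of_mem_parts hB
      rcases classify hinter huniv hedge hv (hP B hB) with h | h
      · have hBi : B ∩ S₁ = B := Finset.inter_eq_left.2 h
        have hTmem : downPart S₁ (B ∩ S₁) ∈ (projPartition S₁ P).parts := by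
          rw [projPartition_parts]
          refine mem_projParts.2 ⟨?_, B, hB, rfl⟩
          rw [Ne, downPart_eq_empty Finset.inter_subset_right, hBi]
          exact hBne.ne_empty
        refine mem_glueParts.2 (Or.inl ⟨_, hTmem, ?_, by rw [up_down Finset.inter_subset_right, hBi]⟩)
        intro hEq
        have := congrArg (upPart S₁) hEq
        rw [up_down Finset.inter_subset_right, hC₁, hBi] at this
        have : v ∈ B := by
          rw [this]
          exact Finset.mem_inter.2 ⟨P.mem_part (Finset.mem_univ v), hv1⟩
        exact hv this
      · have hBi : B ∩ S₂ = B := Finset.inter_eq_left.2 h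
        have hTmem : downPart S₂ (B ∩ S₂) ∈ (projPartition S₂ P).parts := by
          rw [projPartition_parts]
          refine mem_projParts.2 ⟨?_, B, hB, rfl⟩
          rw [Ne, downPart_eq_empty Finset.inter_subset_right, hBi]
          exact hBne.ne_empty
        refine mem_glueParts.2 (Or.inr (Or.inl ⟨_, hTmem, ?_,
          by rw [up_down Finset.inter_subset_right, hBi]⟩))
        intro hEq
        have := congrArg (upPart S₂) hEq
        rw [up_down Finset.inter_subset_right, hC₂, hBi] at this
        have : v ∈ B := by
          rw [this]
          exact Finset.mem_inter.2 ⟨P.mem_part (Finset.mem_univ v), hv2⟩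
        exact hv this

end RoundTrip

section Count

variable [Fintype V] {S : Finset V} {v : V}

lemma projParts_card_pos (hv : v ∈ S) (P : Finpartition (Finset.univ : Finset V)) :
    0 < (projParts S P).card := by
  apply Finset.card_pos.2
  refine ⟨downPart S (P.part v ∩ S), mem_projParts.2 ⟨Finset.ne_empty_of_mem
    ((mem_downPart (a := ⟨v, hv⟩)).2 (Finset.mem_inter.2 ⟨P.mem_part (Finset.mem_univ v), hv⟩)),
    _, P.part_mem.2 (Finset.mem_univ v), rfl⟩⟩

lemma nat_card_sigma_prod {ι : Type*} [Fintype ι] (f g : ι → Type*)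
    [∀ i, Finite (f i)] [∀ i, Finite (g i)] :
    Nat.card (Σ i, f i × g i) = ∑ i, Nat.card (f i) * Nat.card (g i) := by
  letI : ∀ i, Fintype (f i) := fun i => Fintype.ofFinite _
  letI : ∀ i, Fintype (g i) := fun i => Fintype.ofFinite _
  simp [Nat.card_eq_fintype_card, Fintype.card_sigma, Fintype.card_prod]

end Count

end CompAux

open CompAux in
theorem compCount_one_shared_vertex {V : Type*} [Fintype V] [DecidableEq V]
    (S₁ S₂ : Finset V) (v : V)
    (hinter : S₁ ∩ S₂ = {v}) (hunion : S₁ ∪ S₂ = Finset.univ)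
    (G₁ : SimpleGraph {x // x ∈ S₁}) (G₂ : SimpleGraph {x // x ∈ S₂})
    (hc₁ : G₁.Connected) (hc₂ : G₂.Connected)
    (G : SimpleGraph V)
    (hG : ∀ x y : V, G.Adj x y ↔
      ((∃ hx : x ∈ S₁, ∃ hy : y ∈ S₁, G₁.Adj ⟨x, hx⟩ ⟨y, hy⟩) ∨
       (∃ hx : x ∈ S₂, ∃ hy : y ∈ S₂, G₂.Adj ⟨x, hx⟩ ⟨y, hy⟩)))
    (k : ℕ) :
    G.compCount k = ∑ j ∈ Finset.Icc 1 k, G₁.compCount j * G₂.compCount (k + 1 - j) := by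
  classical
  have hv1 : v ∈ S₁ := by
    have : v ∈ S₁ ∩ S₂ := by rw [hinter]; exact Finset.mem_singleton_self v
    exact (Finset.mem_inter.1 this).1
  have hv2 : v ∈ S₂ := by
    have : v ∈ S₁ ∩ S₂ := by rw [hinter]; exact Finset.mem_singleton_self v
    exact (Finset.mem_inter.1 this).2
  have huniv : ∀ x : V, x ∈ S₁ ∪ S₂ := fun x => by rw [hunion]; exact Finset.mem_univ x
  have hedge : ∀ x y : V, G.Adj x y → (x ∈ S₁ ∧ y ∈ S₁) ∨ (x ∈ S₂ ∧ y ∈ S₂) := by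
    intro x y h
    rcases (hG x y).1 h with ⟨hx, hy, _⟩ | ⟨hx, hy, _⟩
    · exact Or.inl ⟨hx, hy⟩
    · exact Or.inr ⟨hx, hy⟩
  have hadj₁ : ∀ (x y : {x // x ∈ S₁}), G.Adj x y ↔ G₁.Adj x y := by
    rintro ⟨x, hx⟩ ⟨y, hy⟩
    constructor
    · intro h
      rcases (hG x y).1 h with ⟨hx', hy', h'⟩ | ⟨hx', hy', h'⟩
      · exact h'
      · exfalso
        have hxv : x = v := eq_v_of_mem_both hinter hx hx'
        have hyv : y = v := eq_v_of_mem_both hinter hy hy'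
        exact h'.ne (by simp [hxv, hyv])
    · intro h
      exact (hG x y).2 (Or.inl ⟨hx, hy, h⟩)
  have hadj₂ : ∀ (x y : {x // x ∈ S₂}), G.Adj x y ↔ G₂.Adj x y := by
    rintro ⟨x, hx⟩ ⟨y, hy⟩
    constructor
    · intro h
      rcases (hG x y).1 h with ⟨hx', hy', h'⟩ | ⟨hx', hy', h'⟩
      · exfalso
        have hxv : x = v := eq_v_of_mem_both hinter hx' hx
        have hyv : y = v := eq_v_of_mem_both hinter hy' hy
        exact h'.ne (by simp [hxv, hyv])
      · exact h'
    · intro h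
      exact (hG x y).2 (Or.inr ⟨hx, hy, h⟩)
  -- the bijection
  have e : {P : Finpartition (Finset.univ : Finset V) //
        G.IsComposition P ∧ P.parts.card = k} ≃
      Σ j : (Finset.Icc 1 k : Finset ℕ),
        ({P₁ : Finpartition (Finset.univ : Finset {x // x ∈ S₁}) //
            G₁.IsComposition P₁ ∧ P₁.parts.card = (j : ℕ)} ×
         {P₂ : Finpartition (Finset.univ : Finset {x // x ∈ S₂}) //
            G₂.IsComposition P₂ ∧ P₂.parts.card = k + 1 - (j : ℕ)}) := by
    refine ⟨fun P => ?_, fun x => ?_, ?_, ?_⟩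
    · -- forward
      have hsum : (projParts S₁ P.1).card + (projParts S₂ P.1).card = P.1.parts.card + 1 :=
        projParts_card_add hinter huniv hedge P.2.1
      have hpos₁ := projParts_card_pos (v := v) hv1 P.1
      have hpos₂ := projParts_card_pos (v := v) hv2 P.1
      refine ⟨⟨(projParts S₁ P.1).card, Finset.mem_Icc.2 ⟨hpos₁, ?_⟩⟩,
        ⟨⟨projPartition S₁ P.1,
          projPartition_isComposition hinter huniv hedge hadj₁ hv1 P.2.1, rfl⟩,
         ⟨projPartition S₂ P.1, ?_, ?_⟩⟩⟩
      · rw [P.2.2] at hsum; omega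
      · have hinter' : S₂ ∩ S₁ = {v} := by rw [Finset.inter_comm]; exact hinter
        have huniv' : ∀ x : V, x ∈ S₂ ∪ S₁ := fun x => by
          rw [Finset.union_comm]; exact huniv x
        have hedge' : ∀ x y : V, G.Adj x y → (x ∈ S₂ ∧ y ∈ S₂) ∨ (x ∈ S₁ ∧ y ∈ S₁) :=
          fun x y h => (hedge x y h).symm
        exact projPartition_isComposition hinter' huniv' hedge' hadj₂ hv2 P.2.1
      · rw [P.2.2] at hsum
        show (projParts S₂ P.1).card = k + 1 - (projParts S₁ P.1).card
        omega
    · -- backward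
      obtain ⟨⟨j, hj⟩, ⟨P₁, hP₁c, hP₁k⟩, ⟨P₂, hP₂c, hP₂k⟩⟩ := x
      refine ⟨gluePartition P₁ P₂ hinter huniv hv1 hv2,
        gluePartition_isComposition hinter huniv hadj₁ hadj₂ hP₁c hP₂c, ?_⟩
      have hcard : (gluePartition P₁ P₂ hinter huniv hv1 hv2).parts.card =
          P₁.parts.card + P₂.parts.card - 1 := glueParts_card hinter
      have hP₁k' : P₁.parts.card = j := hP₁k
      have hP₂k' : P₂.parts.card = k + 1 - j := hP₂k
      rw [hcard, hP₁k', hP₂k']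
      rw [Finset.mem_Icc] at hj
      omega
    · -- left inverse
      rintro ⟨P, hPc, hPk⟩
      exact Subtype.ext (glue_proj hinter huniv hedge hPc)
    · -- right inverse
      rintro ⟨⟨j, hj⟩, ⟨P₁, hP₁c, hP₁k⟩, ⟨P₂, hP₂c, hP₂k⟩⟩
      have h1 : projPartition S₁ (gluePartition P₁ P₂ hinter huniv hv1 hv2) = P₁ :=
        proj_glue hinter huniv
      have h2 : projPartition S₂ (gluePartition P₁ P₂ hinter huniv hv1 hv2) = P₂ :=
        proj_glue₂ hinter huniv
      have hj' : (projParts S₁ (gluePartition P₁ P₂ hinter huniv hv1 hv2)).card = j := by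
        rw [show projParts S₁ (gluePartition P₁ P₂ hinter huniv hv1 hv2) =
          (projPartition S₁ (gluePartition P₁ P₂ hinter huniv hv1 hv2)).parts from rfl, h1]
        exact hP₁k
      subst hj'
      refine Sigma.ext rfl (heq_of_eq ?_)
      exact Prod.ext (Subtype.ext h1) (Subtype.ext h2)
  rw [SimpleGraph.compCount, Nat.card_congr e]
  rw [nat_card_sigma_prod]
  exact Finset.sum_coe_sort (Finset.Icc 1 k)
    (fun j => G₁.compCount j * G₂.compCount (k + 1 - j))
end

section
/- Let G_1 and G_2 be vertex-disjoint graphs, let G be obtained from their disjoint union by adding one edge e between them, and let G^{-e} denote the disjoint union (G with e removed). Then for every k, C^k(G) = C^{k+1}(G^{-e}) + C^k(G^{-e}). -/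
open SimpleGraph Finset

section GraphLemmas

variable {V₁ V₂ : Type*} {G₁ : SimpleGraph V₁} {G₂ : SimpleGraph V₂} {a : V₁} {b : V₂}

private lemma reach_map {W : Type*} (A B : SimpleGraph W) (s t : Set W) (f : W → W)
    (hmem : ∀ x ∈ s, f x ∈ t)
    (hadj : ∀ x y, x ∈ s → y ∈ s → A.Adj x y → B.Adj (f x) (f y) ∨ f x = f y)
    {x y : s} (h : (A.induce s).Reachable x y) :
    (B.induce t).Reachable ⟨f x, hmem x x.2⟩ ⟨f y, hmem y y.2⟩ := by
  obtain ⟨w⟩ := h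
  induction w with
  | nil => exact Reachable.refl _
  | @cons u v _ h p ih =>
    refine Reachable.trans ?_ ih
    rcases hadj u v u.2 v.2 h with h' | h'
    · exact Adj.reachable h'
    · have : (⟨f u, hmem u u.2⟩ : t) = ⟨f v, hmem v v.2⟩ := Subtype.ext h'
      rw [this]

private lemma gadj {x y : V₁ ⊕ V₂} :
    ((G₁ ⊕g G₂) ⊔ SimpleGraph.fromEdgeSet {s(Sum.inl a, Sum.inr b)}).Adj x y ↔
      (G₁ ⊕g G₂).Adj x y ∨ (x = Sum.inl a ∧ y = Sum.inr b) ∨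
        (x = Sum.inr b ∧ y = Sum.inl a) := by
  simp only [SimpleGraph.sup_adj, SimpleGraph.fromEdgeSet_adj, Set.mem_singleton_iff,
    Sym2.eq_iff]
  constructor
  · rintro (h | ⟨(⟨rfl, rfl⟩ | ⟨rfl, rfl⟩), -⟩) <;> tauto
  · rintro (h | ⟨rfl, rfl⟩ | ⟨rfl, rfl⟩) <;> simp_all

-- split lemma, left part
private lemma split_conn_left {s : Set (V₁ ⊕ V₂)} (ha : Sum.inl a ∈ s) (hb : Sum.inr b ∈ s)
    (h : (((G₁ ⊕g G₂) ⊔ SimpleGraph.fromEdgeSet {s(Sum.inl a, Sum.inr b)}).induce s).Connected) :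
    ((G₁ ⊕g G₂).induce {x ∈ s | x.isLeft = true}).Connected := by
  set f : V₁ ⊕ V₂ → V₁ ⊕ V₂ := Sum.elim Sum.inl (fun _ => Sum.inl a) with hf
  have hmem : ∀ x ∈ s, f x ∈ {x ∈ s | x.isLeft = true} := by
    rintro (x | x) hx
    · exact ⟨hx, rfl⟩
    · exact ⟨ha, rfl⟩
  have hadj : ∀ x y, x ∈ s → y ∈ s →
      ((G₁ ⊕g G₂) ⊔ SimpleGraph.fromEdgeSet {s(Sum.inl a, Sum.inr b)}).Adj x y →
      (G₁ ⊕g G₂).Adj (f x) (f y) ∨ f x = f y := by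
    intro x y hx hy hxy
    rcases gadj.1 hxy with h' | ⟨rfl, rfl⟩ | ⟨rfl, rfl⟩
    · rcases x with x | x <;> rcases y with y | y
      · exact Or.inl h'
      · simp [SimpleGraph.sum_adj] at h'
      · simp [SimpleGraph.sum_adj] at h'
      · exact Or.inr rfl
    · exact Or.inr rfl
    · exact Or.inr rfl
  have hfix : ∀ z : V₁ ⊕ V₂, z.isLeft = true → f z = z := by
    rintro (z | z) hz
    · rfl
    · simp at hz
  rw [SimpleGraph.connected_iff]
  refine ⟨?_, ?_⟩
  · rintro ⟨x, hxs, hxl⟩ ⟨y, hys, hyl⟩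
    have hr := h.preconnected ⟨x, hxs⟩ ⟨y, hys⟩
    have key := reach_map _ (G₁ ⊕g G₂) s {x ∈ s | x.isLeft = true} f hmem hadj hr
    have e1 : (⟨f x, hmem x hxs⟩ : {x ∈ s | x.isLeft = true}) = ⟨x, hxs, hxl⟩ :=
      Subtype.ext (hfix x hxl)
    have e2 : (⟨f y, hmem y hys⟩ : {x ∈ s | x.isLeft = true}) = ⟨y, hys, hyl⟩ :=
      Subtype.ext (hfix y hyl)
    rwa [e1, e2] at key
  · exact ⟨⟨Sum.inl a, ha, rfl⟩⟩

private lemma adj_side {G₁ : SimpleGraph V₁} {G₂ : SimpleGraph V₂} {x y : V₁ ⊕ V₂}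
    (h : (G₁ ⊕g G₂).Adj x y) : x.isLeft = y.isLeft := by
  cases x <;> cases y <;> simp_all [SimpleGraph.sum_adj]

private lemma side_eq_of_reachable {G₁ : SimpleGraph V₁} {G₂ : SimpleGraph V₂}
    {s : Set (V₁ ⊕ V₂)} {x y : s} (h : ((G₁ ⊕g G₂).induce s).Reachable x y) :
    (x : V₁ ⊕ V₂).isLeft = (y : V₁ ⊕ V₂).isLeft := by
  obtain ⟨w⟩ := h
  induction w with
  | nil => rfl
  | @cons u v _ h p ih => exact (adj_side h).trans ih

private lemma one_side {G₁ : SimpleGraph V₁} {G₂ : SimpleGraph V₂} {s : Set (V₁ ⊕ V₂)}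
    (h : ((G₁ ⊕g G₂).induce s).Connected) :
    (∀ x ∈ s, x.isLeft = true) ∨ (∀ x ∈ s, x.isLeft = false) := by
  obtain ⟨x₀⟩ := h.nonempty
  rcases hx : (x₀ : V₁ ⊕ V₂).isLeft with _ | _
  · exact Or.inr fun y hy => by
      have := side_eq_of_reachable (h.preconnected x₀ ⟨y, hy⟩)
      simp_all
  · exact Or.inl fun y hy => by
      have := side_eq_of_reachable (h.preconnected x₀ ⟨y, hy⟩)
      simp_all

private lemma induce_eq {s : Set (V₁ ⊕ V₂)} (h : Sum.inl a ∉ s ∨ Sum.inr b ∉ s) :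
    ((G₁ ⊕g G₂) ⊔ SimpleGraph.fromEdgeSet {s(Sum.inl a, Sum.inr b)}).induce s =
      (G₁ ⊕g G₂).induce s := by
  ext ⟨x, hx⟩ ⟨y, hy⟩
  simp only [comap_adj, Function.Embedding.coe_subtype]
  rw [gadj]
  constructor
  · rintro (h' | ⟨rfl, rfl⟩ | ⟨rfl, rfl⟩) <;> tauto
  · exact Or.inl

private lemma split_conn_right {s : Set (V₁ ⊕ V₂)} (ha : Sum.inl a ∈ s) (hb : Sum.inr b ∈ s)
    (h : (((G₁ ⊕g G₂) ⊔ SimpleGraph.fromEdgeSet {s(Sum.inl a, Sum.inr b)}).induce s).Connected) :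
    ((G₁ ⊕g G₂).induce {x ∈ s | x.isLeft = false}).Connected := by
  set f : V₁ ⊕ V₂ → V₁ ⊕ V₂ := Sum.elim (fun _ => Sum.inr b) Sum.inr with hf
  have hmem : ∀ x ∈ s, f x ∈ {x ∈ s | x.isLeft = false} := by
    rintro (x | x) hx
    · exact ⟨hb, rfl⟩
    · exact ⟨hx, rfl⟩
  have hadj : ∀ x y, x ∈ s → y ∈ s →
      ((G₁ ⊕g G₂) ⊔ SimpleGraph.fromEdgeSet {s(Sum.inl a, Sum.inr b)}).Adj x y →
      (G₁ ⊕g G₂).Adj (f x) (f y) ∨ f x = f y := by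
    intro x y hx hy hxy
    rcases gadj.1 hxy with h' | ⟨rfl, rfl⟩ | ⟨rfl, rfl⟩
    · rcases x with x | x <;> rcases y with y | y
      · exact Or.inr rfl
      · simp [SimpleGraph.sum_adj] at h'
      · simp [SimpleGraph.sum_adj] at h'
      · exact Or.inl h'
    · exact Or.inr rfl
    · exact Or.inr rfl
  have hfix : ∀ z : V₁ ⊕ V₂, z.isLeft = false → f z = z := by
    rintro (z | z) hz
    · simp at hz
    · rfl
  rw [SimpleGraph.connected_iff]
  refine ⟨?_, ?_⟩
  · rintro ⟨x, hxs, hxl⟩ ⟨y, hys, hyl⟩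
    have hr := h.preconnected ⟨x, hxs⟩ ⟨y, hys⟩
    have key := reach_map _ (G₁ ⊕g G₂) s {x ∈ s | x.isLeft = false} f hmem hadj hr
    have e1 : (⟨f x, hmem x hxs⟩ : {x ∈ s | x.isLeft = false}) = ⟨x, hxs, hxl⟩ :=
      Subtype.ext (hfix x hxl)
    have e2 : (⟨f y, hmem y hys⟩ : {x ∈ s | x.isLeft = false}) = ⟨y, hys, hyl⟩ :=
      Subtype.ext (hfix y hyl)
    rwa [e1, e2] at key
  · exact ⟨⟨Sum.inr b, hb, rfl⟩⟩

private lemma merge_conn {s t : Set (V₁ ⊕ V₂)} (ha : Sum.inl a ∈ s) (hb : Sum.inr b ∈ t)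
    (hs : ((G₁ ⊕g G₂).induce s).Connected) (ht : ((G₁ ⊕g G₂).induce t).Connected) :
    (((G₁ ⊕g G₂) ⊔ SimpleGraph.fromEdgeSet {s(Sum.inl a, Sum.inr b)}).induce (s ∪ t)).Connected := by
  set G := (G₁ ⊕g G₂) ⊔ SimpleGraph.fromEdgeSet {s(Sum.inl a, Sum.inr b)} with hGdef
  have hadjs : ∀ x y, x ∈ s → y ∈ s → (G₁ ⊕g G₂).Adj x y →
      G.Adj (id x) (id y) ∨ id x = id y := fun x y _ _ h => Or.inl (gadj.2 (Or.inl h))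
  have hadjt : ∀ x y, x ∈ t → y ∈ t → (G₁ ⊕g G₂).Adj x y →
      G.Adj (id x) (id y) ∨ id x = id y := fun x y _ _ h => Or.inl (gadj.2 (Or.inl h))
  have hmems : ∀ x ∈ s, id x ∈ s ∪ t := fun x hx => Or.inl hx
  have hmemt : ∀ x ∈ t, id x ∈ s ∪ t := fun x hx => Or.inr hx
  have hab : (G.induce (s ∪ t)).Adj ⟨Sum.inl a, Or.inl ha⟩ ⟨Sum.inr b, Or.inr hb⟩ := by
    show G.Adj _ _
    exact gadj.2 (Or.inr (Or.inl ⟨rfl, rfl⟩))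
  have key : ∀ u : ↥(s ∪ t), (G.induce (s ∪ t)).Reachable u ⟨Sum.inl a, Or.inl ha⟩ := by
    rintro ⟨u, hu | hu⟩
    · exact reach_map (G₁ ⊕g G₂) G s (s ∪ t) id hmems hadjs
        (hs.preconnected ⟨u, hu⟩ ⟨Sum.inl a, ha⟩)
    · refine Reachable.trans ?_ hab.symm.reachable
      exact reach_map (G₁ ⊕g G₂) G t (s ∪ t) id hmemt hadjt
        (ht.preconnected ⟨u, hu⟩ ⟨Sum.inr b, hb⟩)
  rw [SimpleGraph.connected_iff]
  exact ⟨fun u v => (key u).trans (key v).symm, ⟨⟨Sum.inl a, Or.inl ha⟩⟩⟩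

end GraphLemmas

section FP

variable {α : Type*} [DecidableEq α] {u : Finset α}

/-- Split a part `B` of a finpartition into two nonempty pieces. -/
def Finpartition.mySplit (P : Finpartition u) (B C₁ C₂ : Finset α) (hB : B ∈ P.parts)
    (hd : Disjoint C₁ C₂) (hu : C₁ ∪ C₂ = B) (h1 : C₁.Nonempty) (h2 : C₂.Nonempty) :
    Finpartition u where
  parts := insert C₁ (insert C₂ (P.parts.erase B))
  supIndep := by
    rw [Finset.supIndep_iff_pairwiseDisjoint]
    have hC1B : C₁ ⊆ B := hu ▸ subset_union_left
    have hC2B : C₂ ⊆ B := hu ▸ subset_union_right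
    have hdis : ∀ C ∈ P.parts.erase B, Disjoint B C := by
      intro C hC
      obtain ⟨hne, hmemP⟩ := mem_erase.1 hC
      exact P.disjoint hB hmemP (Ne.symm hne)
    intro x hx y hy hxy
    simp only [coe_insert, Set.mem_insert_iff, mem_coe] at hx hy
    rcases hx with rfl | rfl | hx <;> rcases hy with rfl | rfl | hy
    · exact absurd rfl hxy
    · exact hd
    · exact Finset.disjoint_of_subset_left hC1B (hdis _ hy)
    · exact hd.symm
    · exact absurd rfl hxy
    · exact Finset.disjoint_of_subset_left hC2B (hdis _ hy)
    · exact (Finset.disjoint_of_subset_left hC1B (hdis _ hx)).symm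
    · exact (Finset.disjoint_of_subset_left hC2B (hdis _ hx)).symm
    · exact P.disjoint (mem_of_mem_erase hx) (mem_of_mem_erase hy) hxy
  sup_parts := by
    rw [sup_insert, sup_insert, ← sup_assoc]
    have : (C₁ ⊔ C₂ : Finset α) = B := hu
    rw [id, id, this]
    calc (B ⊔ (P.parts.erase B).sup id : Finset α)
        = (insert B (P.parts.erase B)).sup id := (sup_insert).symm
      _ = P.parts.sup id := by rw [insert_erase hB]
      _ = u := P.sup_parts
  bot_notMem := by
    simp only [mem_insert, not_or]
    refine ⟨?_, ?_, fun h => P.bot_notMem (mem_of_mem_erase h)⟩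
    · exact fun h => h1.ne_empty h.symm
    · exact fun h => h2.ne_empty h.symm

private lemma not_mem_erase_of_subset (P : Finpartition u) {B C : Finset α} (hB : B ∈ P.parts)
    (hCB : C ⊆ B) (hC : C.Nonempty) : C ∉ P.parts.erase B := by
  intro hmem
  obtain ⟨hne, hmemP⟩ := mem_erase.1 hmem
  exact hC.ne_empty ((P.disjoint hmemP hB hne).eq_bot_of_le hCB)

private lemma split_notmem₁ (P : Finpartition u) {B C₁ C₂ : Finset α} (hB : B ∈ P.parts)
    (hd : Disjoint C₁ C₂) (hu : C₁ ∪ C₂ = B) (h1 : C₁.Nonempty) (h2 : C₂.Nonempty) :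
    C₁ ∉ insert C₂ (P.parts.erase B) := by
  simp only [mem_insert, not_or]
  refine ⟨fun h => h1.ne_empty ?_, not_mem_erase_of_subset P hB (hu ▸ subset_union_left) h1⟩
  · subst h; exact disjoint_self.1 hd

private lemma split_notmem₂ (P : Finpartition u) {B C₁ C₂ : Finset α} (hB : B ∈ P.parts)
    (hu : C₁ ∪ C₂ = B) (h2 : C₂.Nonempty) : C₂ ∉ P.parts.erase B :=
  not_mem_erase_of_subset P hB (hu ▸ subset_union_right) h2

lemma Finpartition.mySplit_parts (P : Finpartition u) {B C₁ C₂ : Finset α} (hB : B ∈ P.parts)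
    (hd : Disjoint C₁ C₂) (hu : C₁ ∪ C₂ = B) (h1 : C₁.Nonempty) (h2 : C₂.Nonempty) :
    (P.mySplit B C₁ C₂ hB hd hu h1 h2).parts = insert C₁ (insert C₂ (P.parts.erase B)) := rfl

lemma Finpartition.mySplit_card (P : Finpartition u) {B C₁ C₂ : Finset α} (hB : B ∈ P.parts)
    (hd : Disjoint C₁ C₂) (hu : C₁ ∪ C₂ = B) (h1 : C₁.Nonempty) (h2 : C₂.Nonempty) :
    (P.mySplit B C₁ C₂ hB hd hu h1 h2).parts.card = P.parts.card + 1 := by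
  rw [mySplit_parts, card_insert_of_notMem (split_notmem₁ P hB hd hu h1 h2),
    card_insert_of_notMem (split_notmem₂ P hB hu h2), card_erase_of_mem hB]
  have : 1 ≤ P.parts.card := card_pos.2 ⟨B, hB⟩
  omega

/-- Merge two parts of a finpartition. -/
def Finpartition.myMerge (P : Finpartition u) (B₁ B₂ : Finset α) (h1 : B₁ ∈ P.parts)
    (h2 : B₂ ∈ P.parts) (hne : B₁ ≠ B₂) : Finpartition u where
  parts := insert (B₁ ∪ B₂) ((P.parts.erase B₁).erase B₂)
  supIndep := by
    rw [Finset.supIndep_iff_pairwiseDisjoint]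
    intro x hx y hy hxy
    simp only [coe_insert, Set.mem_insert_iff, mem_coe, mem_erase] at hx hy
    rcases hx with rfl | ⟨hx2, hx1, hx⟩ <;> rcases hy with rfl | ⟨hy2, hy1, hy⟩
    · exact absurd rfl hxy
    · exact Finset.disjoint_union_left.2
        ⟨P.disjoint h1 hy (Ne.symm hy1), P.disjoint h2 hy (Ne.symm hy2)⟩
    · exact (Finset.disjoint_union_left.2
        ⟨P.disjoint h1 hx (Ne.symm hx1), P.disjoint h2 hx (Ne.symm hx2)⟩).symm
    · exact P.disjoint hx hy hxy
  sup_parts := by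
    rw [sup_insert]
    have hB2 : B₂ ∈ P.parts.erase B₁ := mem_erase.2 ⟨Ne.symm hne, h2⟩
    calc (id (B₁ ∪ B₂) ⊔ ((P.parts.erase B₁).erase B₂).sup id : Finset α)
        = B₁ ⊔ (B₂ ⊔ ((P.parts.erase B₁).erase B₂).sup id) := by
          rw [id, ← sup_eq_union, sup_assoc]
      _ = B₁ ⊔ (insert B₂ ((P.parts.erase B₁).erase B₂)).sup id := by rw [sup_insert, id]
      _ = B₁ ⊔ (P.parts.erase B₁).sup id := by rw [insert_erase hB2]
      _ = (insert B₁ (P.parts.erase B₁)).sup id := (sup_insert).symm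
      _ = P.parts.sup id := by rw [insert_erase h1]
      _ = u := P.sup_parts
  bot_notMem := by
    simp only [mem_insert, not_or]
    refine ⟨?_, fun h => P.bot_notMem (mem_of_mem_erase (mem_of_mem_erase h))⟩
    intro h
    exact ((P.nonempty_of_mem_parts h1).mono subset_union_left).ne_empty h.symm

private lemma merge_notmem (P : Finpartition u) {B₁ B₂ : Finset α} (h1 : B₁ ∈ P.parts) :
    B₁ ∪ B₂ ∉ (P.parts.erase B₁).erase B₂ := by
  intro h
  obtain ⟨hne1, hmem⟩ := mem_erase.1 (mem_of_mem_erase h)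
  have hd := P.disjoint hmem h1 hne1
  exact (P.nonempty_of_mem_parts h1).ne_empty (hd.symm.eq_bot_of_le subset_union_left)

lemma Finpartition.myMerge_parts (P : Finpartition u) {B₁ B₂ : Finset α} (h1 : B₁ ∈ P.parts)
    (h2 : B₂ ∈ P.parts) (hne : B₁ ≠ B₂) :
    (P.myMerge B₁ B₂ h1 h2 hne).parts = insert (B₁ ∪ B₂) ((P.parts.erase B₁).erase B₂) := rfl

lemma Finpartition.myMerge_card (P : Finpartition u) {B₁ B₂ : Finset α} (h1 : B₁ ∈ P.parts)
    (h2 : B₂ ∈ P.parts) (hne : B₁ ≠ B₂) :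
    (P.myMerge B₁ B₂ h1 h2 hne).parts.card + 1 = P.parts.card := by
  rw [myMerge_parts, card_insert_of_notMem (merge_notmem P h1),
    card_erase_of_mem (mem_erase.2 ⟨Ne.symm hne, h2⟩), card_erase_of_mem h1]
  have : 2 ≤ P.parts.card := one_lt_card.2 ⟨B₁, h1, B₂, h2, hne⟩
  omega

lemma Finpartition.merge_split_parts (P : Finpartition u) {B C₁ C₂ : Finset α}
    (hB : B ∈ P.parts) (hd : Disjoint C₁ C₂) (hu : C₁ ∪ C₂ = B) (h1 : C₁.Nonempty)
    (h2 : C₂.Nonempty) :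
    insert (C₁ ∪ C₂) ((((P.mySplit B C₁ C₂ hB hd hu h1 h2).parts).erase C₁).erase C₂)
      = P.parts := by
  rw [mySplit_parts, erase_insert (split_notmem₁ P hB hd hu h1 h2),
    erase_insert (split_notmem₂ P hB hu h2), hu, insert_erase hB]

lemma Finpartition.split_merge_parts (P : Finpartition u) {B₁ B₂ : Finset α}
    (h1 : B₁ ∈ P.parts) (h2 : B₂ ∈ P.parts) (hne : B₁ ≠ B₂) :
    insert B₁ (insert B₂ (((P.myMerge B₁ B₂ h1 h2 hne).parts).erase (B₁ ∪ B₂)))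
      = P.parts := by
  rw [myMerge_parts, erase_insert (merge_notmem P h1),
    insert_erase (mem_erase.2 ⟨Ne.symm hne, h2⟩), insert_erase h1]

end FP

section Main
variable {V₁ V₂ : Type*} [Fintype V₁] [Fintype V₂] [DecidableEq V₁] [DecidableEq V₂]
  (G₁ : SimpleGraph V₁) (G₂ : SimpleGraph V₂) (a : V₁) (b : V₂)

local notation "W" => (V₁ ⊕ V₂)
local notation "DD" => G₁ ⊕g G₂
local notation "GG" => (G₁ ⊕g G₂) ⊔ SimpleGraph.fromEdgeSet {s(Sum.inl a, Sum.inr b)}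
local notation "aa" => (Sum.inl a : V₁ ⊕ V₂)
local notation "bb" => (Sum.inr b : V₁ ⊕ V₂)

variable {G₁ G₂ a b}

private lemma compG_of_compD {Q : Finpartition (univ : Finset W)}
    (hQ : SimpleGraph.IsComposition DD Q) : SimpleGraph.IsComposition GG Q :=
  fun B hB => (hQ B hB).mono (fun _ _ h => Or.inl h)

private lemma compD_of_compG {P : Finpartition (univ : Finset W)}
    (hP : SimpleGraph.IsComposition GG P) (hb : bb ∉ P.part aa) :
    SimpleGraph.IsComposition DD P := by
  intro B hB
  have hcon := hP B hB
  have hnot : aa ∉ (B : Set W) ∨ bb ∉ (B : Set W) := by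
    by_contra hc
    push_neg at hc
    obtain ⟨h1, h2⟩ := hc
    rw [P.part_eq_of_mem hB (mem_coe.1 h1)] at hb
    exact hb (mem_coe.1 h2)
  rwa [induce_eq hnot] at hcon

private lemma part_all_left {Q : Finpartition (univ : Finset W)}
    (hQ : SimpleGraph.IsComposition DD Q) {B : Finset W} (hB : B ∈ Q.parts)
    {x : W} (hx : x ∈ B) (hl : x.isLeft = true) : ∀ y ∈ B, y.isLeft = true := by
  rcases one_side (hQ B hB) with h | h
  · exact fun y hy => h y (mem_coe.2 hy)
  · rw [h x (mem_coe.2 hx)] at hl; exact absurd hl (by simp)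

private lemma part_all_right {Q : Finpartition (univ : Finset W)}
    (hQ : SimpleGraph.IsComposition DD Q) {B : Finset W} (hB : B ∈ Q.parts)
    {x : W} (hx : x ∈ B) (hl : x.isLeft = false) : ∀ y ∈ B, y.isLeft = false := by
  rcases one_side (hQ B hB) with h | h
  · rw [h x (mem_coe.2 hx)] at hl; exact absurd hl (by simp)
  · exact fun y hy => h y (mem_coe.2 hy)

private lemma bb_not_mem_part {Q : Finpartition (univ : Finset W)}
    (hQ : SimpleGraph.IsComposition DD Q) : bb ∉ Q.part aa := by
  intro h
  have := part_all_left hQ (Q.part_mem.2 (mem_univ aa)) (Q.mem_part (mem_univ aa)) rfl bb h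
  simp at this


private lemma filter_disj (B : Finset W) :
    Disjoint (B.filter (fun x => x.isLeft = true)) (B.filter (fun x => x.isLeft = false)) := by
  rw [Finset.disjoint_left]
  intro x hx hx'
  rw [mem_filter] at hx hx'
  rw [hx.2] at hx'
  exact absurd hx'.2 (by simp)

private lemma filter_union (B : Finset W) :
    B.filter (fun x => x.isLeft = true) ∪ B.filter (fun x => x.isLeft = false) = B := by
  ext x
  rcases x with x | x <;> simp

private lemma split_isComp {P : Finpartition (univ : Finset W)}
    (hP : SimpleGraph.IsComposition GG P) (h : bb ∈ P.part aa) :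
    SimpleGraph.IsComposition DD (P.mySplit (P.part aa)
      ((P.part aa).filter (fun x => x.isLeft = true))
      ((P.part aa).filter (fun x => x.isLeft = false))
      (P.part_mem.2 (mem_univ aa)) (filter_disj _) (filter_union _)
      ⟨aa, mem_filter.2 ⟨P.mem_part (mem_univ aa), rfl⟩⟩
      ⟨bb, mem_filter.2 ⟨h, rfl⟩⟩) := by
  intro B' hB'
  erw [Finpartition.mySplit_parts] at hB'
  rcases mem_insert.1 hB' with rfl | hB'
  · rw [coe_filter]
    exact split_conn_left (mem_coe.2 (P.mem_part (mem_univ aa))) (mem_coe.2 h)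
      (hP _ (P.part_mem.2 (mem_univ aa)))
  rcases mem_insert.1 hB' with rfl | hB'
  · rw [coe_filter]
    exact split_conn_right (mem_coe.2 (P.mem_part (mem_univ aa))) (mem_coe.2 h)
      (hP _ (P.part_mem.2 (mem_univ aa)))
  · obtain ⟨hne, hmem⟩ := mem_erase.1 hB'
    have hcon := hP B' hmem
    have hnot : aa ∉ (B' : Set W) ∨ bb ∉ (B' : Set W) := by
      by_contra hc
      push_neg at hc
      exact hne (P.part_eq_of_mem hmem (mem_coe.1 hc.1)).symm
    rwa [induce_eq hnot] at hcon

private lemma parts_ne {Q : Finpartition (univ : Finset W)}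
    (hQ : SimpleGraph.IsComposition DD Q) : Q.part aa ≠ Q.part bb := by
  intro h
  exact bb_not_mem_part hQ (h ▸ Q.mem_part (mem_univ bb))

private lemma merge_isComp {Q : Finpartition (univ : Finset W)}
    (hQ : SimpleGraph.IsComposition DD Q) :
    SimpleGraph.IsComposition GG (Q.myMerge (Q.part aa) (Q.part bb)
      (Q.part_mem.2 (mem_univ aa)) (Q.part_mem.2 (mem_univ bb)) (parts_ne hQ)) := by
  intro B' hB'
  rw [Finpartition.myMerge_parts] at hB'
  rcases mem_insert.1 hB' with rfl | hB'
  · rw [coe_union]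
    exact merge_conn (mem_coe.2 (Q.mem_part (mem_univ aa))) (mem_coe.2 (Q.mem_part (mem_univ bb)))
      (hQ _ (Q.part_mem.2 (mem_univ aa))) (hQ _ (Q.part_mem.2 (mem_univ bb)))
  · exact compG_of_compD hQ B' (mem_of_mem_erase (mem_of_mem_erase hB'))

private noncomputable def theEquiv (k : ℕ) :
    {P : Finpartition (univ : Finset W) // SimpleGraph.IsComposition GG P ∧ P.parts.card = k} ≃
    ({Q : Finpartition (univ : Finset W) //
        SimpleGraph.IsComposition DD Q ∧ Q.parts.card = k + 1} ⊕
      {Q : Finpartition (univ : Finset W) //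
        SimpleGraph.IsComposition DD Q ∧ Q.parts.card = k}) where
  toFun := fun ⟨P, hP, hk⟩ =>
    if h : bb ∈ P.part aa then
      Sum.inl ⟨P.mySplit (P.part aa)
        ((P.part aa).filter (fun x => x.isLeft = true))
        ((P.part aa).filter (fun x => x.isLeft = false))
        (P.part_mem.2 (mem_univ aa)) (filter_disj _) (filter_union _)
        ⟨aa, mem_filter.2 ⟨P.mem_part (mem_univ aa), rfl⟩⟩
        ⟨bb, mem_filter.2 ⟨h, rfl⟩⟩,
        split_isComp hP h, by erw [Finpartition.mySplit_card, hk]⟩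
    else Sum.inr ⟨P, compD_of_compG hP h, hk⟩
  invFun := fun x => match x with
    | Sum.inl ⟨Q, hQ, hk⟩ =>
        ⟨Q.myMerge (Q.part aa) (Q.part bb) (Q.part_mem.2 (mem_univ aa))
          (Q.part_mem.2 (mem_univ bb)) (parts_ne hQ),
          merge_isComp hQ, by
            have := Q.myMerge_card (Q.part_mem.2 (mem_univ aa)) (Q.part_mem.2 (mem_univ bb))
              (parts_ne hQ)
            omega⟩
    | Sum.inr ⟨Q, hQ, hk⟩ => ⟨Q, compG_of_compD hQ, hk⟩
  left_inv := by
    rintro ⟨P, hP, hk⟩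
    by_cases h : bb ∈ P.part aa
    · simp only [dif_pos h]
      apply Subtype.ext
      apply Finpartition.ext
      set S := P.mySplit (P.part aa)
        ((P.part aa).filter (fun x => x.isLeft = true))
        ((P.part aa).filter (fun x => x.isLeft = false))
        (P.part_mem.2 (mem_univ aa)) (filter_disj _) (filter_union _)
        ⟨aa, mem_filter.2 ⟨P.mem_part (mem_univ aa), rfl⟩⟩
        ⟨bb, mem_filter.2 ⟨h, rfl⟩⟩ with hS
      have epa : S.part aa = (P.part aa).filter (fun x => x.isLeft = true) :=
        S.part_eq_of_mem (by erw [hS, Finpartition.mySplit_parts]; exact mem_insert_self _ _)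
          (mem_filter.2 ⟨P.mem_part (mem_univ aa), rfl⟩)
      have epb : S.part bb = (P.part aa).filter (fun x => x.isLeft = false) :=
        S.part_eq_of_mem (by
          erw [hS, Finpartition.mySplit_parts]
          exact mem_insert_of_mem (mem_insert_self _ _)) (mem_filter.2 ⟨h, rfl⟩)
      rw [Finpartition.myMerge_parts, epa, epb]
      exact P.merge_split_parts (P.part_mem.2 (mem_univ aa)) (filter_disj _) (filter_union _)
        ⟨aa, mem_filter.2 ⟨P.mem_part (mem_univ aa), rfl⟩⟩ ⟨bb, mem_filter.2 ⟨h, rfl⟩⟩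
    · simp only [dif_neg h]
  right_inv := by
    rintro (⟨Q, hQ, hk⟩ | ⟨Q, hQ, hk⟩)
    · set M := Q.myMerge (Q.part aa) (Q.part bb) (Q.part_mem.2 (mem_univ aa))
        (Q.part_mem.2 (mem_univ bb)) (parts_ne hQ) with hM
      have hpart : M.part aa = Q.part aa ∪ Q.part bb :=
        M.part_eq_of_mem (by rw [hM, Finpartition.myMerge_parts]; exact mem_insert_self _ _)
          (mem_union_left _ (Q.mem_part (mem_univ aa)))
      have h : bb ∈ M.part aa := by
        rw [hpart]; exact mem_union_right _ (Q.mem_part (mem_univ bb))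
      have hallL : ∀ x ∈ Q.part aa, Sum.isLeft x = true :=
        part_all_left hQ (Q.part_mem.2 (mem_univ aa)) (Q.mem_part (mem_univ aa)) rfl
      have hallR : ∀ x ∈ Q.part bb, Sum.isLeft x = false :=
        part_all_right hQ (Q.part_mem.2 (mem_univ bb)) (Q.mem_part (mem_univ bb)) rfl
      have hC₁ : (M.part aa).filter (fun x => x.isLeft = true) = Q.part aa := by
        rw [hpart]
        ext x
        simp only [mem_filter, mem_union]
        constructor
        · rintro ⟨hx | hx, hl⟩
          · exact hx
          · rw [hallR x hx] at hl; exact absurd hl (by simp)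
        · intro hx
          exact ⟨Or.inl hx, hallL x hx⟩
      have hC₂ : (M.part aa).filter (fun x => x.isLeft = false) = Q.part bb := by
        rw [hpart]
        ext x
        simp only [mem_filter, mem_union]
        constructor
        · rintro ⟨hx | hx, hl⟩
          · rw [hallL x hx] at hl; exact absurd hl (by simp)
          · exact hx
        · intro hx
          exact ⟨Or.inr hx, hallR x hx⟩
      simp only [← hM, dif_pos h]
      congr 1
      apply Subtype.ext
      apply Finpartition.ext
      show insert ((M.part aa).filter (fun x => x.isLeft = true))
        (insert ((M.part aa).filter (fun x => x.isLeft = false)) (M.parts.erase (M.part aa))) = Q.parts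
      rw [hC₁, hC₂, hpart]
      exact Q.split_merge_parts (Q.part_mem.2 (mem_univ aa)) (Q.part_mem.2 (mem_univ bb)) (parts_ne hQ)
    · simp only [dif_neg (bb_not_mem_part hQ)]

end Main

theorem compCount_bridge_delete {V₁ V₂ : Type*} [Fintype V₁] [Fintype V₂]
    [DecidableEq V₁] [DecidableEq V₂]
    (G₁ : SimpleGraph V₁) (G₂ : SimpleGraph V₂) (a : V₁) (b : V₂)
    (G : SimpleGraph (V₁ ⊕ V₂))
    (hG : G = (G₁ ⊕g G₂) ⊔ SimpleGraph.fromEdgeSet {s(Sum.inl a, Sum.inr b)})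
    (k : ℕ) :
    G.compCount k = (G₁ ⊕g G₂).compCount (k + 1) + (G₁ ⊕g G₂).compCount k := by
  subst hG
  rw [SimpleGraph.compCount, SimpleGraph.compCount, SimpleGraph.compCount, ← Nat.card_sum]
  exact Nat.card_congr (theEquiv k)
end

section
/- If C_n is the cycle graph on n ≥ 3 vertices, then the number of graph compositions of C_n with exactly k blocks is 1 when k = 1, and equals the binomial coefficient C(n, k) when 1 < k ≤ n. -/
namespace CycleComp
open Finset SimpleGraph
open Fin.NatCast Fin.CommRing

variable {m : ℕ}

local notation "F" => Fin (m + 3)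

/-! ### gap and anchor -/

lemma gapEx {S : Finset F} (hS : S.Nonempty) (a : F) : ∃ j : ℕ, a - (j : F) ∈ S := by
  obtain ⟨s, hs⟩ := hS
  exact ⟨(a - s).val, by rwa [Fin.cast_val_eq_self, sub_sub_cancel]⟩

instance decEx (S : Finset F) (a : F) : Decidable (∃ j : ℕ, a - (j : F) ∈ S) :=
  decidable_of_iff S.Nonempty ⟨fun h => gapEx h a, fun ⟨_, hj⟩ => ⟨_, hj⟩⟩

def gap (S : Finset F) (a : F) : ℕ :=
  if h : ∃ j : ℕ, a - (j : F) ∈ S then Nat.find h else 0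

def anchor (S : Finset F) (a : F) : F := a - (gap S a : F)

lemma anchor_mem {S : Finset F} (hS : S.Nonempty) (a : F) : anchor S a ∈ S := by
  rw [anchor, gap, dif_pos (gapEx hS a)]
  exact Nat.find_spec (gapEx hS a)

lemma gap_le {S : Finset F} {s : F} (hs : s ∈ S) (a : F) : gap S a ≤ (a - s).val := by
  rw [gap, dif_pos ⟨(a - s).val, by rwa [Fin.cast_val_eq_self, sub_sub_cancel]⟩]
  exact Nat.find_le (by rwa [Fin.cast_val_eq_self, sub_sub_cancel])

lemma gap_lt {S : Finset F} (hS : S.Nonempty) (a : F) : gap S a < m + 3 := by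
  obtain ⟨s, hs⟩ := hS
  exact lt_of_le_of_lt (gap_le hs a) (Fin.is_lt _)

lemma gap_of_mem {S : Finset F} {a : F} (ha : a ∈ S) : gap S a = 0 := by
  rw [gap, dif_pos ⟨0, by simpa using ha⟩]
  exact Nat.find_eq_zero _ |>.mpr (by simpa using ha)

lemma anchor_of_mem {S : Finset F} {a : F} (ha : a ∈ S) : anchor S a = a := by
  simp [anchor, gap_of_mem ha]

lemma gap_of_not_mem {S : Finset F} (hS : S.Nonempty) {a : F} (ha : a ∉ S) :
    gap S a = gap S (a - 1) + 1 := by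
  have h := gapEx hS a
  have h' := gapEx hS (a - 1)
  have key : ∀ j : ℕ, a - 1 - (j : F) = a - ((j + 1 : ℕ) : F) := by
    intro j; push_cast; ring
  rw [gap, dif_pos h, gap, dif_pos h']
  have hpos : 0 < Nat.find h := by
    rcases Nat.eq_zero_or_pos (Nat.find h) with hz | hp
    · exact absurd (by simpa [hz] using Nat.find_spec h) ha
    · exact hp
  apply le_antisymm
  · have : a - ((Nat.find h' + 1 : ℕ) : F) ∈ S := by
      rw [← key]; exact Nat.find_spec h'
    exact Nat.find_le this
  · have : a - 1 - ((Nat.find h - 1 : ℕ) : F) ∈ S := by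
      rw [key, Nat.sub_add_cancel hpos]
      exact Nat.find_spec h
    have := Nat.find_le (h := h') this
    omega

lemma anchor_of_not_mem {S : Finset F} (hS : S.Nonempty) {a : F} (ha : a ∉ S) :
    anchor S a = anchor S (a - 1) := by
  rw [anchor, anchor, gap_of_not_mem hS ha]
  push_cast
  ring

lemma gap_pos_not_mem {S : Finset F} {a : F} (h : gap S a ≠ 0) : a ∉ S :=
  fun ha => h (gap_of_mem ha)

lemma anchor_sub {S : Finset F} (hS : S.Nonempty) :
    ∀ (j : ℕ) (a : F), j ≤ gap S a → anchor S (a - (j : F)) = anchor S a := by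
  intro j
  induction j with
  | zero => intro a _; simp
  | succ j ih =>
    intro a hj
    have ha : a ∉ S := gap_pos_not_mem (by omega)
    have hg := gap_of_not_mem hS ha
    have : a - ((j + 1 : ℕ) : F) = (a - 1) - (j : F) := by push_cast; ring
    rw [this, ih (a - 1) (by omega), anchor_of_not_mem hS ha]

/-! ### cuts of a partition -/

def cuts (P : Finpartition (univ : Finset F)) : Finset F :=
  univ.filter (fun i => P.part (i - 1) ≠ P.part i)

lemma mem_cuts {P : Finpartition (univ : Finset F)} {i : F} :
    i ∈ cuts P ↔ P.part (i - 1) ≠ P.part i := by simp [cuts]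

lemma part_anchor_cuts (P : Finpartition (univ : Finset F)) (hS : (cuts P).Nonempty) (a : F) :
    P.part (anchor (cuts P) a) = P.part a := by
  suffices h : ∀ (g : ℕ) (a : F), gap (cuts P) a = g → P.part (anchor (cuts P) a) = P.part a by
    exact h _ a rfl
  intro g
  induction g with
  | zero =>
    intro a hg
    by_cases ha : a ∈ cuts P
    · rw [anchor_of_mem ha]
    · rw [gap_of_not_mem hS ha] at hg; omega
  | succ g ih =>
    intro a hg
    have ha : a ∉ cuts P := gap_pos_not_mem (by omega)
    have hpart : P.part (a - 1) = P.part a := by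
      by_contra hne; exact ha (mem_cuts.mpr hne)
    rw [anchor_of_not_mem hS ha, ← hpart]
    apply ih
    have := gap_of_not_mem hS ha
    omega

lemma cuts_nonempty {P : Finpartition (univ : Finset F)} (h2 : 2 ≤ P.parts.card) :
    (cuts P).Nonempty := by
  rw [Finset.nonempty_iff_ne_empty]
  intro hemp
  have hall : ∀ i : F, P.part (i - 1) = P.part i := by
    intro i
    by_contra hne
    exact (Finset.notMem_empty i) (hemp ▸ mem_cuts.mpr hne)
  have key : ∀ j : ℕ, P.part ((j : ℕ) : F) = P.part 0 := by
    intro j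
    induction j with
    | zero => simp
    | succ j ih =>
      have : ((j : F) + 1) - 1 = (j : F) := by ring
      have h := hall ((j : F) + 1)
      rw [this] at h
      push_cast
      rw [← h, ih]
  have hone : ∀ a : F, P.part a = P.part 0 := by
    intro a
    have := key a.val
    rwa [Fin.cast_val_eq_self] at this
  have : P.parts ⊆ {P.part 0} := by
    intro B hB
    obtain ⟨a, ha⟩ := P.nonempty_of_mem_parts hB
    rw [Finset.mem_singleton, ← P.part_eq_of_mem hB ha, hone a]
  have := Finset.card_le_card this
  simp at this
  omega

/-! ### walks in the cycle -/

lemma adj_sub_one {x : F} : (cycleGraph (m + 3)).Adj x (x - 1) := by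
  rw [cycleGraph_adj']
  left
  simp [sub_sub_cancel]

lemma reach_sub {B : Finset F} :
    ∀ (j : ℕ) (a : F) (hj : ∀ i ≤ j, a - (i : F) ∈ B),
      ((cycleGraph (m + 3)).induce (B : Set F)).Reachable
        ⟨a, by simpa using hj 0 (Nat.zero_le _)⟩
        ⟨a - (j : F), by simpa using hj j le_rfl⟩ := by
  intro j
  induction j with
  | zero =>
    intro a hj
    simp only [Nat.cast_zero, sub_zero]
    exact SimpleGraph.Reachable.refl _
  | succ j ih =>
    intro a hj
    have h1 : ((cycleGraph (m + 3)).induce (B : Set F)).Reachable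
        ⟨a, _⟩ ⟨a - (j : F), by simpa using hj j (by omega)⟩ :=
      ih a (fun i hi => hj i (by omega))
    refine h1.trans (SimpleGraph.Adj.reachable ?_)
    have heq : a - ((j + 1 : ℕ) : F) = (a - (j : F)) - 1 := by push_cast; ring
    have : ((cycleGraph (m + 3)).induce (B : Set F)).Adj
        ⟨a - (j : F), by simpa using hj j (by omega)⟩
        ⟨a - ((j + 1 : ℕ) : F), by simpa using hj (j + 1) le_rfl⟩ := by
      simp only [SimpleGraph.comap_adj, Function.Embedding.coe_subtype]
      rw [heq]
      exact adj_sub_one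
    exact this

lemma walk_arc {B : Finset F} {x y : (B : Set F)}
    (W : ((cycleGraph (m + 3)).induce (B : Set F)).Walk x y) :
    ∃ j : ℕ, ((y : F) = (x : F) + (j : F) ∧ ∀ i ≤ j, (x : F) + (i : F) ∈ B) ∨
             ((x : F) = (y : F) + (j : F) ∧ ∀ i ≤ j, (y : F) + (i : F) ∈ B) := by
  induction W with
  | nil =>
    exact ⟨0, Or.inl ⟨by simp, fun i hi => by
      interval_cases i; simpa using Subtype.coe_prop _⟩⟩
  | @cons x c y h W ih =>
    have hx : (x : F) ∈ B := by simpa using x.coe_prop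
    have hadj : (cycleGraph (m + 3)).Adj (x : F) (c : F) := h
    rw [cycleGraph_adj'] at hadj
    have hadj' : (x : F) - c = 1 ∨ (c : F) - x = 1 := by
      rcases hadj with h1 | h1
      · left; have := congrArg (Fin.ofNat (m+3)) h1
        simpa [Fin.ofNat_eq_cast, Fin.cast_val_eq_self] using this
      · right; have := congrArg (Fin.ofNat (m+3)) h1
        simpa [Fin.ofNat_eq_cast, Fin.cast_val_eq_self] using this
    obtain ⟨j, hj⟩ := ih
    rcases hadj' with hc | hc
    · -- c = x - 1
      have hcx : (c : F) = (x : F) - 1 := by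
        rw [eq_sub_iff_add_eq, ← hc]; ring
      rcases hj with ⟨hy, harc⟩ | ⟨hxx, harc⟩
      · -- y = c + j
        rcases Nat.eq_zero_or_pos j with hz | hpos
        · -- y = c = x - 1, so x = y + 1
          refine ⟨1, Or.inr ⟨?_, ?_⟩⟩
          · subst hz; simp at hy; rw [hy, hcx]; push_cast; ring
          · intro i hi
            interval_cases i
            · subst hz; simpa using harc 0 le_rfl
            · subst hz; simp at hy
              have : (y : F) + ((1:ℕ) : F) = (x : F) := by rw [hy, hcx]; push_cast; ring
              rw [this]; exact hx
        · -- y = x + (j-1)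
          refine ⟨j - 1, Or.inl ⟨?_, ?_⟩⟩
          · rw [hy, hcx, Nat.cast_sub hpos]; push_cast; ring
          · intro i hi
            have : (x : F) + (i : F) = (c : F) + ((i + 1 : ℕ) : F) := by
              rw [hcx]; push_cast; ring
            rw [this]; exact harc (i + 1) (by omega)
      ·
        refine ⟨j + 1, Or.inr ⟨?_, ?_⟩⟩
        · have : (x : F) = (c : F) + 1 := by rw [hcx]; ring
          rw [this, hxx]; push_cast; ring
        · intro i hi
          rcases Nat.lt_or_ge i (j + 1) with hlt | hge
          · exact harc i (by omega)
          · have : i = j + 1 := by omega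
            subst this
            have : (y : F) + ((j + 1 : ℕ) : F) = (x : F) := by
              have hx1 : (x : F) = (c : F) + 1 := by rw [hcx]; ring
              rw [hx1, hxx]; push_cast; ring
            rw [this]; exact hx
    · -- c = x + 1
      have hcx : (c : F) = (x : F) + 1 := by
        rw [← hc]; ring
      rcases hj with ⟨hy, harc⟩ | ⟨hxx, harc⟩
      · -- y = c + j = x + (j+1)
        refine ⟨j + 1, Or.inl ⟨?_, ?_⟩⟩
        · rw [hy, hcx]; push_cast; ring
        · intro i hi
          rcases Nat.eq_zero_or_pos i with hz | hpos
          · subst hz; simpa using hx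
          · have : (x : F) + (i : F) = (c : F) + ((i - 1 : ℕ) : F) := by
              rw [hcx, Nat.cast_sub hpos]; push_cast; ring
            rw [this]; exact harc (i - 1) (by omega)
      · -- c = y + j, c = x + 1
        rcases Nat.eq_zero_or_pos j with hz | hpos
        · -- c = y, y = x + 1
          refine ⟨1, Or.inl ⟨?_, ?_⟩⟩
          · subst hz; simp at hxx; rw [← hxx, hcx]; push_cast; ring
          · intro i hi
            interval_cases i
            · simpa using hx
            · subst hz; simp at hxx
              have : (x : F) + ((1:ℕ) : F) = (c : F) := by rw [hcx]; push_cast; ring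
              rw [this, hxx]; simpa using harc 0 le_rfl
        · -- x = y + (j - 1)
          refine ⟨j - 1, Or.inr ⟨?_, ?_⟩⟩
          · have : (c : F) = (x : F) + 1 := hcx
            have h2 : (x : F) + 1 = (y : F) + (j : F) := by rw [← this, hxx]
            have : (x : F) = (y : F) + (j : F) - 1 := by rw [← h2]; ring
            rw [this, Nat.cast_sub hpos]; push_cast; ring
          · intro i hi
            exact harc i (by omega)

/-! ### forward direction: compositions determine anchors -/

lemma part_eq_imp_anchor_eq {P : Finpartition (univ : Finset F)}
    (hP : (cycleGraph (m + 3)).IsComposition P) (hS : (cuts P).Nonempty) {a b : F}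
    (hab : P.part a = P.part b) : anchor (cuts P) a = anchor (cuts P) b := by
  by_contra hne
  set S := cuts P with hSdef
  set s := anchor S a with hsdef
  set t := anchor S b with htdef
  have hsS : s ∈ S := anchor_mem hS a
  have htS : t ∈ S := anchor_mem hS b
  have hps : P.part s = P.part a := part_anchor_cuts P hS a
  have hpt : P.part t = P.part b := part_anchor_cuts P hS b
  set B := P.part a with hBdef
  have hBmem : B ∈ P.parts := P.part_mem.mpr (mem_univ a)
  have hsB : s ∈ B := by
    have := P.mem_part (mem_univ s); rwa [hps] at this
  have htB : t ∈ B := by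
    have := P.mem_part (mem_univ t); rw [hpt, ← hab] at this; exact this
  have hconn := hP B hBmem
  have hreach := hconn.preconnected ⟨s, Finset.mem_coe.mpr hsB⟩ ⟨t, Finset.mem_coe.mpr htB⟩
  obtain ⟨W⟩ := hreach
  obtain ⟨j, hj⟩ := walk_arc W
  have hst : s ≠ t := hne
  rcases hj with ⟨hy, harc⟩ | ⟨hy, harc⟩
  · -- t = s + j
    simp only at hy harc
    have hjpos : 0 < j := by
      rcases Nat.eq_zero_or_pos j with hz | h; · subst hz; simp at hy; exact absurd hy.symm hst
      · exact h
    have ht1 : t - 1 = s + ((j - 1 : ℕ) : F) := by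
      rw [hy, Nat.cast_sub hjpos]; push_cast; ring
    have ht1B : t - 1 ∈ B := ht1 ▸ harc (j - 1) (by omega)
    have : P.part (t - 1) = B := P.part_eq_of_mem hBmem ht1B
    have htcut := mem_cuts.mp htS
    rw [this, hpt, ← hab] at htcut
    exact htcut rfl
  · -- s = t + j
    simp only at hy harc
    have hjpos : 0 < j := by
      rcases Nat.eq_zero_or_pos j with hz | h; · subst hz; simp at hy; exact absurd hy hst
      · exact h
    have hs1 : s - 1 = t + ((j - 1 : ℕ) : F) := by
      rw [hy, Nat.cast_sub hjpos]; push_cast; ring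
    have hs1B : s - 1 ∈ B := hs1 ▸ harc (j - 1) (by omega)
    have : P.part (s - 1) = B := P.part_eq_of_mem hBmem hs1B
    have hscut := mem_cuts.mp hsS
    rw [this, hps] at hscut
    exact hscut rfl

lemma mem_parts_iff (P : Finpartition (univ : Finset F)) {B : Finset F} :
    B ∈ P.parts ↔ ∃ a, P.part a = B :=
  ⟨fun h => (P.nonempty_of_mem_parts h).elim fun a ha => ⟨a, P.part_eq_of_mem h ha⟩,
   fun ⟨a, ha⟩ => ha ▸ P.part_mem.mpr (mem_univ a)⟩

lemma card_cuts {P : Finpartition (univ : Finset F)}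
    (hP : (cycleGraph (m + 3)).IsComposition P) (h2 : 2 ≤ P.parts.card) :
    (cuts P).card = P.parts.card := by
  have hS : (cuts P).Nonempty := cuts_nonempty h2
  apply Finset.card_bij (fun i _ => P.part i)
  · intro a _; exact P.part_mem.mpr (mem_univ a)
  · intro a₁ h₁ a₂ h₂ heq
    have := part_eq_imp_anchor_eq hP hS heq
    rwa [anchor_of_mem h₁, anchor_of_mem h₂] at this
  · intro B hB
    obtain ⟨a, ha⟩ := mem_parts_iff P |>.mp hB
    exact ⟨anchor (cuts P) a, anchor_mem hS a, by rw [part_anchor_cuts P hS a, ha]⟩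

/-! ### reverse construction -/

instance decKer (S : Finset F) : DecidableRel (Setoid.ker (anchor S) : Setoid F).r :=
  fun a b => decidable_of_iff (anchor S a = anchor S b) Iff.rfl

def cpart (S : Finset F) : Finpartition (univ : Finset F) :=
  Finpartition.ofSetoid (Setoid.ker (anchor S))

lemma mem_part_cpart {S : Finset F} {a b : F} :
    b ∈ (cpart S).part a ↔ anchor S a = anchor S b :=
  Finpartition.mem_part_ofSetoid_iff_rel

lemma part_cpart_eq {S : Finset F} (hS : S.Nonempty) (a : F) :
    (cpart S).part (anchor S a) = (cpart S).part a := by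
  have h1 : anchor S a ∈ (cpart S).part a :=
    mem_part_cpart.mpr (anchor_of_mem (anchor_mem hS a)).symm
  exact (cpart S).part_eq_of_mem ((cpart S).part_mem.mpr (mem_univ a)) h1

lemma cpart_isComposition {S : Finset F} (hS : S.Nonempty) :
    (cycleGraph (m + 3)).IsComposition (cpart S) := by
  intro B hB
  obtain ⟨a, ha⟩ := mem_parts_iff (cpart S) |>.mp hB
  subst ha
  set s := anchor S a with hsdef
  have hmem : ∀ x : F, x ∈ (cpart S).part a ↔ anchor S x = s :=
    fun x => mem_part_cpart.trans eq_comm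
  have hsmem : s ∈ (cpart S).part a := (hmem s).mpr (anchor_of_mem (anchor_mem hS a))
  rw [SimpleGraph.connected_iff]
  constructor
  · -- preconnected
    intro x y
    have key : ∀ z : (((cpart S).part a : Finset F) : Set F),
        ((cycleGraph (m + 3)).induce (((cpart S).part a : Finset F) : Set F)).Reachable z
          ⟨s, Finset.mem_coe.mpr hsmem⟩ := by
      rintro ⟨z, hz⟩
      have hzB : z ∈ (cpart S).part a := Finset.mem_coe.mp hz
      have hza : anchor S z = s := (hmem z).mp hzB
      have harc : ∀ i ≤ gap S z, z - (i : F) ∈ (cpart S).part a := by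
        intro i hi
        exact (hmem _).mpr (by rw [anchor_sub hS i z hi, hza])
      have := reach_sub (gap S z) z harc
      have hend : z - ((gap S z : ℕ) : F) = s := by
        rw [← hza]; rfl
      convert this using 2
      exact hend.symm
    exact (key x).trans (key y).symm
  · exact ⟨⟨s, Finset.mem_coe.mpr hsmem⟩⟩

lemma card_cpart {S : Finset F} (hS : S.Nonempty) : (cpart S).parts.card = S.card := by
  symm
  apply Finset.card_bij (fun s _ => (cpart S).part s)
  · intro a _; exact (cpart S).part_mem.mpr (mem_univ a)
  · intro a₁ h₁ a₂ h₂ heq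
    have : a₂ ∈ (cpart S).part a₁ := heq ▸ (cpart S).mem_part (mem_univ a₂)
    have := mem_part_cpart.mp this
    rwa [anchor_of_mem h₁, anchor_of_mem h₂] at this
  · intro B hB
    obtain ⟨a, ha⟩ := mem_parts_iff (cpart S) |>.mp hB
    exact ⟨anchor S a, anchor_mem hS a, by rw [part_cpart_eq hS a, ha]⟩

/-! ### round trips -/

lemma part_eq_iff_anchor_eq {S : Finset F} {a b : F} :
    (cpart S).part a = (cpart S).part b ↔ anchor S a = anchor S b := by
  constructor
  · intro h
    exact mem_part_cpart.mp (h ▸ (cpart S).mem_part (mem_univ b))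
  · intro h
    have : b ∈ (cpart S).part a := mem_part_cpart.mpr h
    exact ((cpart S).part_eq_of_mem ((cpart S).part_mem.mpr (mem_univ a)) this).symm

lemma cuts_cpart {S : Finset F} (h2 : 2 ≤ S.card) : cuts (cpart S) = S := by
  have hS : S.Nonempty := Finset.card_pos.mp (by omega)
  ext i
  rw [mem_cuts, Ne, part_eq_iff_anchor_eq]
  constructor
  · intro h
    by_contra hi
    exact h (anchor_of_not_mem hS hi).symm
  · intro hi h
    rw [anchor_of_mem hi] at h
    -- h : anchor S (i - 1) = i
    set g := gap S (i - 1) with hgdef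
    have hgF : ((g : ℕ) : F) = -1 := by
      have h' : i - 1 - ((g : ℕ) : F) = i := h
      linear_combination -h'
    have hglt : g < m + 3 := gap_lt hS (i - 1)
    have hgval : g = m + 2 := by
      have h1 : ((g : ℕ) : F).val = g := by
        simp [Fin.val_natCast, Nat.mod_eq_of_lt hglt]
      have h2' : ((-1 : F)).val = m + 2 := Fin.coe_neg_one
      rw [hgF] at h1
      omega
    obtain ⟨a, haS, b, hbS, hab⟩ := Finset.one_lt_card.mp h2
    have hex : ∃ s' ∈ S, s' ≠ i := by
      by_cases hai : a = i
      · exact ⟨b, hbS, fun hbi => hab (by rw [hai, hbi])⟩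
      · exact ⟨a, haS, hai⟩
    obtain ⟨s', hs'S, hs'i⟩ := hex
    have hle : g ≤ ((i - 1) - s').val := gap_le hs'S (i - 1)
    have hjlt : ((i - 1) - s').val < m + 3 := Fin.is_lt _
    have hjne : ((i - 1) - s').val ≠ m + 2 := by
      intro hj
      apply hs'i
      have : (i - 1) - s' = -1 := by
        apply Fin.ext
        rw [hj, Fin.coe_neg_one]
      have := sub_eq_iff_eq_add.mp this
      -- i - 1 = -1 + s'
      linear_combination -this
    omega

lemma cpart_cuts {P : Finpartition (univ : Finset F)}
    (hP : (cycleGraph (m + 3)).IsComposition P) (h2 : 2 ≤ P.parts.card) :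
    cpart (cuts P) = P := by
  have hS : (cuts P).Nonempty := cuts_nonempty h2
  have hpart : ∀ a, (cpart (cuts P)).part a = P.part a := by
    intro a
    ext b
    rw [mem_part_cpart]
    rw [P.mem_part_iff_part_eq_part (mem_univ b) (mem_univ a)]
    constructor
    · intro h
      calc P.part b = P.part (anchor (cuts P) b) := (part_anchor_cuts P hS b).symm
        _ = P.part (anchor (cuts P) a) := by rw [h]
        _ = P.part a := part_anchor_cuts P hS a
    · intro h
      exact part_eq_imp_anchor_eq hP hS h.symm
  apply Finpartition.ext
  ext B
  rw [mem_parts_iff, mem_parts_iff]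
  exact ⟨fun ⟨a, ha⟩ => ⟨a, by rw [← hpart a, ha]⟩, fun ⟨a, ha⟩ => ⟨a, by rw [hpart a, ha]⟩⟩

/-! ### connectivity of the whole cycle -/

lemma cycle_univ_connected :
    ((cycleGraph (m + 3)).induce ((univ : Finset F) : Set F)).Connected := by
  rw [SimpleGraph.connected_iff]
  constructor
  · intro x y
    obtain ⟨a, ha⟩ := x
    obtain ⟨b, hb⟩ := y
    have harc : ∀ i ≤ (a - b).val, a - (i : F) ∈ (univ : Finset F) := fun _ _ => mem_univ _
    have := reach_sub ((a - b).val) a harc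
    have hend : a - (((a - b).val : ℕ) : F) = b := by
      rw [Fin.cast_val_eq_self, sub_sub_cancel]
    convert this using 2
    exact hend.symm
  · exact ⟨⟨0, mem_coe.mpr (mem_univ 0)⟩⟩

/-! ### the count for k = 1 -/

lemma parts_eq_of_card_one {P : Finpartition (univ : Finset F)}
    (h1 : P.parts.card = 1) : P.parts = {univ} := by
  obtain ⟨B, hB⟩ := Finset.card_eq_one.mp h1
  have := P.sup_parts
  rw [hB, Finset.sup_singleton] at this
  simp only [id] at this
  rw [hB, this]

lemma count_one :
    Nat.card {P : Finpartition (univ : Finset F) //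
      (cycleGraph (m + 3)).IsComposition P ∧ P.parts.card = 1} = 1 := by
  rw [Nat.card_eq_one_iff_unique]
  have huniv : (univ : Finset F) ≠ ⊥ := by
    simp only [Finset.bot_eq_empty]
    exact Finset.univ_nonempty.ne_empty
  constructor
  · constructor
    rintro ⟨P, _, hP1⟩ ⟨Q, _, hQ1⟩
    apply Subtype.ext
    apply Finpartition.ext
    rw [parts_eq_of_card_one hP1, parts_eq_of_card_one hQ1]
  · refine ⟨⟨Finpartition.indiscrete huniv, ?_, ?_⟩⟩
    · intro B hB
      simp only [Finpartition.indiscrete_parts, Finset.mem_singleton] at hB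
      subst hB
      exact cycle_univ_connected
    · simp [Finpartition.indiscrete_parts]

/-! ### the count for k ≥ 2 -/

lemma count_ge_two {k : ℕ} (hk2 : 2 ≤ k) :
    Nat.card {P : Finpartition (univ : Finset F) //
      (cycleGraph (m + 3)).IsComposition P ∧ P.parts.card = k} = (m + 3).choose k := by
  have e : {P : Finpartition (univ : Finset F) //
      (cycleGraph (m + 3)).IsComposition P ∧ P.parts.card = k} ≃
      {S : Finset F // S.card = k} := by
    refine ⟨fun P => ⟨cuts P.1, ?_⟩, fun S => ⟨cpart S.1, ?_, ?_⟩, ?_, ?_⟩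
    · rw [card_cuts P.2.1 (by rw [P.2.2]; exact hk2)]; exact P.2.2
    · exact cpart_isComposition (Finset.card_pos.mp (by rw [S.2]; omega))
    · rw [card_cpart (Finset.card_pos.mp (by rw [S.2]; omega))]; exact S.2
    · rintro ⟨P, hP, hPk⟩
      apply Subtype.ext
      exact cpart_cuts hP (by rw [hPk]; exact hk2)
    · rintro ⟨S, hSk⟩
      apply Subtype.ext
      exact cuts_cpart (by rw [hSk]; exact hk2)
  rw [Nat.card_congr e, Nat.card_eq_fintype_card, Fintype.card_subtype]
  have : (univ.filter fun S : Finset F => S.card = k) = Finset.powersetCard k univ := by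
    ext S
    simp [Finset.mem_powersetCard_univ]
  rw [this, Finset.card_powersetCard, Finset.card_univ, Fintype.card_fin]

end CycleComp

theorem compCount_cycleGraph (n : ℕ) (hn : 3 ≤ n) (k : ℕ) (hk1 : 1 ≤ k) (hk : k ≤ n) :
    (SimpleGraph.cycleGraph n).compCount k =
      if k = 1 then 1 else n.choose k := by
  obtain ⟨m, rfl⟩ : ∃ m, n = m + 3 := ⟨n - 3, by omega⟩
  rw [SimpleGraph.compCount]
  by_cases hk' : k = 1
  · subst hk'
    rw [if_pos rfl]
    exact CycleComp.count_one
  · rw [if_neg hk']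
    exact CycleComp.count_ge_two (by omega)
end

section
/- For any connected graph G on n vertices and any k with 1 ≤ k ≤ n, the number of graph compositions of G with exactly k blocks satisfies C(n-1, k-1) ≤ C^k(G) ≤ S(n, k), where C(n-1, k-1) is a binomial coefficient and S(n, k) is a Stirling number of the second kind. -/
/-- Stirling numbers of the second kind. -/
def stirling2 : ℕ → ℕ → ℕ
  | 0, 0 => 1
  | 0, _ + 1 => 0
  | _ + 1, 0 => 0
  | n + 1, k + 1 => (k + 1) * stirling2 n (k + 1) + stirling2 n k

namespace CompBoundsAux

open Finset

/-! ### Iterated parent maps -/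

variable {α : Type*}

def chain (p : α → α) (pred : α → Prop) [DecidablePred pred] : ℕ → α → α
  | 0, v => v
  | f+1, v => if pred v then v else chain p pred f (p v)

lemma chain_of_pred (p : α → α) (pred : α → Prop) [DecidablePred pred] (f : ℕ) {v : α}
    (h : pred v) : chain p pred f v = v := by
  cases f with
  | zero => rfl
  | succ f => simp [chain, h]

variable {p : α → α} {pred : α → Prop} [DecidablePred pred] {ord : α → ℕ}

lemma chain_congr (hdec : ∀ v, ¬ pred v → ord (p v) < ord v) :
    ∀ f g v, ord v ≤ f → ord v ≤ g → chain p pred f v = chain p pred g v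
  | 0, g, v, hf, _ => by
      have hp : pred v := by
        by_contra h
        exact absurd (hdec v h) (by omega)
      rw [chain_of_pred _ _ _ hp, chain_of_pred _ _ _ hp]
  | f+1, g, v, hf, hg => by
      by_cases hp : pred v
      · rw [chain_of_pred _ _ _ hp, chain_of_pred _ _ _ hp]
      · have h1 : ord (p v) < ord v := hdec v hp
        obtain ⟨g', rfl⟩ : ∃ g', g = g' + 1 := ⟨g - 1, by omega⟩
        rw [show chain p pred (f+1) v = chain p pred f (p v) by simp [chain, hp],
            show chain p pred (g'+1) v = chain p pred g' (p v) by simp [chain, hp]]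
        exact chain_congr hdec f g' (p v) (by omega) (by omega)

lemma chain_pred (hdec : ∀ v, ¬ pred v → ord (p v) < ord v) :
    ∀ f v, ord v ≤ f → pred (chain p pred f v)
  | 0, v, hf => by
      have hp : pred v := by
        by_contra h
        exact absurd (hdec v h) (by omega)
      rwa [chain_of_pred _ _ _ hp]
  | f+1, v, hf => by
      by_cases hp : pred v
      · rwa [chain_of_pred _ _ _ hp]
      · rw [show chain p pred (f+1) v = chain p pred f (p v) by simp [chain, hp]]
        exact chain_pred hdec f (p v) (by have := hdec v hp; omega)

/-- The "root" reached from `v` by iterating `p` until `pred` holds. -/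
def root (p : α → α) (pred : α → Prop) [DecidablePred pred] (ord : α → ℕ) (v : α) : α :=
  chain p pred (ord v) v

lemma root_of_pred {v : α} (h : pred v) : root p pred ord v = v :=
  chain_of_pred _ _ _ h

lemma root_pred (hdec : ∀ v, ¬ pred v → ord (p v) < ord v) (v : α) :
    pred (root p pred ord v) :=
  chain_pred hdec _ v le_rfl

lemma root_step (hdec : ∀ v, ¬ pred v → ord (p v) < ord v) {v : α} (h : ¬ pred v) :
    root p pred ord v = root p pred ord (p v) := by
  have h1 := hdec v h
  obtain ⟨m, hm⟩ : ∃ m, ord v = m + 1 := ⟨ord v - 1, by omega⟩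
  unfold root
  rw [hm, show chain p pred (m+1) v = chain p pred m (p v) by simp [chain, h]]
  exact chain_congr hdec m (ord (p v)) (p v) (by omega) le_rfl

lemma root_ord_le_aux (hdec : ∀ v, ¬ pred v → ord (p v) < ord v) :
    ∀ m v, ord v ≤ m → ord (root p pred ord v) ≤ ord v
  | 0, v, hf => by
      by_cases hp : pred v
      · rw [root_of_pred hp]
      · exact absurd (hdec v hp) (by omega)
  | m+1, v, hf => by
      by_cases hp : pred v
      · rw [root_of_pred hp]
      · rw [root_step hdec hp]
        have h1 := hdec v hp
        exact le_trans (root_ord_le_aux hdec m (p v) (by omega)) (by omega)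

lemma root_ord_le (hdec : ∀ v, ¬ pred v → ord (p v) < ord v) (v : α) :
    ord (root p pred ord v) ≤ ord v :=
  root_ord_le_aux hdec (ord v) v le_rfl

/-! ### Parts of a finpartition as the image of `part` -/

lemma parts_eq_image_part {V : Type*} [DecidableEq V] {s : Finset V} (P : Finpartition s) :
    P.parts = s.image P.part := by
  ext t
  constructor
  · intro ht
    obtain ⟨x, hx⟩ := P.nonempty_of_mem_parts ht
    have hxs : x ∈ s := mem_of_subset (P.le ht) hx
    exact mem_image.2 ⟨x, hxs, P.part_eq_of_mem ht hx⟩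
  · intro ht
    obtain ⟨x, hxs, rfl⟩ := mem_image.1 ht
    exact P.part_mem.2 hxs

/-! ### The lower bound construction -/

variable {V : Type*} [Fintype V] [DecidableEq V]

section RootPart

variable (p : V → V) (d : V → ℕ) (v0 : V) (S : Finset V)

instance kerDecidable {α β : Type*} [DecidableEq β] (f : α → β) :
    DecidableRel (Setoid.ker f).r :=
  fun a b => inferInstanceAs (Decidable (f a = f b))

/-- The partition of `univ` into fibers of the root map. -/
noncomputable def rootPart : Finpartition (Finset.univ : Finset V) :=
  Finpartition.ofSetoid (Setoid.ker (root p (fun v => v = v0 ∨ v ∈ S) d))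

variable {p d v0 S}

lemma mem_part_rootPart {a b : V} :
    b ∈ (rootPart p d v0 S).part a ↔
      root p (fun v => v = v0 ∨ v ∈ S) d a = root p (fun v => v = v0 ∨ v ∈ S) d b := by
  rw [rootPart]
  exact Finpartition.mem_part_ofSetoid_iff_rel

lemma part_rootPart_eq_iff {a b : V} :
    (rootPart p d v0 S).part a = (rootPart p d v0 S).part b ↔
      root p (fun v => v = v0 ∨ v ∈ S) d a = root p (fun v => v = v0 ∨ v ∈ S) d b := by
  constructor
  · intro h
    have hb : b ∈ (rootPart p d v0 S).part b := Finpartition.mem_part _ (mem_univ b)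
    rw [← h] at hb
    exact mem_part_rootPart.1 hb
  · intro h
    ext c
    rw [mem_part_rootPart, mem_part_rootPart, h]

variable (hdec : ∀ v, ¬ (v = v0 ∨ v ∈ S) → d (p v) < d v)

include hdec

lemma root_mem_insert (v : V) :
    root p (fun v => v = v0 ∨ v ∈ S) d v ∈ insert v0 S := by
  rcases root_pred hdec v with h | h
  · rw [h]; exact mem_insert_self _ _
  · exact mem_insert_of_mem h

lemma root_fix {x : V} (hx : x ∈ insert v0 S) :
    root p (fun v => v = v0 ∨ v ∈ S) d x = x := by
  rcases mem_insert.1 hx with h | h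
  · exact root_of_pred (Or.inl h)
  · exact root_of_pred (Or.inr h)

lemma card_parts_rootPart (hv0 : v0 ∉ S) :
    (rootPart p d v0 S).parts.card = S.card + 1 := by
  set r := root p (fun v => v = v0 ∨ v ∈ S) d with hr
  rw [parts_eq_image_part]
  have h1 : (univ : Finset V).image (rootPart p d v0 S).part
      = (insert v0 S).image (rootPart p d v0 S).part := by
    apply Finset.Subset.antisymm
    · intro t ht
      obtain ⟨x, _, rfl⟩ := mem_image.1 ht
      refine mem_image.2 ⟨r x, root_mem_insert hdec x, ?_⟩
      rw [part_rootPart_eq_iff, root_fix hdec (root_mem_insert hdec x)]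
    · exact image_subset_image (fun x hx => mem_univ x)
  rw [h1, Finset.card_image_of_injOn, card_insert_of_notMem hv0]
  intro x hx y hy hxy
  rw [part_rootPart_eq_iff] at hxy
  rwa [root_fix hdec hx, root_fix hdec hy] at hxy

variable {G : SimpleGraph V} (hadj : ∀ v, v ≠ v0 → G.Adj (p v) v)

include hadj

lemma rootPart_isComposition : G.IsComposition (rootPart p d v0 S) := by
  set r := root p (fun v => v = v0 ∨ v ∈ S) d with hr
  intro B hB
  rw [parts_eq_image_part] at hB
  obtain ⟨x, _, rfl⟩ := mem_image.1 hB
  set B := (rootPart p d v0 S).part x with hBdef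
  have hρ : r x ∈ B := by
    rw [hBdef, mem_part_rootPart]
    exact (root_fix hdec (root_mem_insert hdec x)).symm
  have hρ' : (r x) ∈ (B : Set V) := by exact_mod_cast hρ
  have key : ∀ m (b : V) (hb : b ∈ (B : Set V)), d b ≤ m →
      (G.induce (B : Set V)).Reachable ⟨b, hb⟩ ⟨r x, hρ'⟩ := by
    intro m
    induction m with
    | zero =>
      intro b hb hdb
      by_cases hp : (b = v0 ∨ b ∈ S)
      · have hrx : r x = r b := mem_part_rootPart.1 hb
        have hrb : r b = b := root_of_pred hp
        have hbr : b = r x := by rw [hrx, hrb]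
        subst hbr
        rfl
      · exact absurd (hdec b hp) (by omega)
    | succ m ih =>
      intro b hb hdb
      by_cases hp : (b = v0 ∨ b ∈ S)
      · have hrx : r x = r b := mem_part_rootPart.1 hb
        have hrb : r b = b := root_of_pred hp
        have hbr : b = r x := by rw [hrx, hrb]
        subst hbr
        rfl
      · have hlt := hdec b hp
        have hpbB : p b ∈ (B : Set V) := by
          have hbB : r x = r b := mem_part_rootPart.1 hb
          have : r x = r (p b) := by rw [hbB]; exact root_step hdec hp
          exact_mod_cast mem_part_rootPart.2 this
        have hadjb : (G.induce (B : Set V)).Adj ⟨b, hb⟩ ⟨p b, hpbB⟩ :=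
          (hadj b (fun h => hp (Or.inl h))).symm
        exact hadjb.reachable.trans (ih (p b) hpbB (by omega))
  rw [SimpleGraph.connected_iff]
  constructor
  · intro u v
    exact (key (d u.1) u.1 u.2 le_rfl).trans (key (d v.1) v.1 v.2 le_rfl).symm
  · exact ⟨⟨r x, hρ'⟩⟩

end RootPart

/-! ### The upper bound: counting partitions by Stirling numbers -/

lemma insert_sdiff_singleton_self {a : V} {s : Finset V} (ha : a ∉ s) :
    insert a s \ {a} = s := by
  simp [Finset.insert_sdiff_of_mem, ha]

section Avoid

variable {a : V} {s : Finset V} (ha : a ∉ s) (P : Finpartition (insert a s))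

/-- Remove the element `a` from a partition of `insert a s`. -/
def reduce : Finpartition s :=
  (P.avoid {a}).copy (insert_sdiff_singleton_self ha)

lemma reduce_parts :
    (reduce ha P).parts = (P.parts.image (· \ {a})).erase ⊥ := rfl

lemma part_a_mem : P.part a ∈ P.parts := P.part_mem.2 (mem_insert_self a s)

lemma mem_part_a : a ∈ P.part a := P.mem_part (mem_insert_self a s)

lemma not_mem_of_ne_part {t : Finset V} (ht : t ∈ P.parts) (hne : t ≠ P.part a) : a ∉ t := by
  intro hat
  exact hne (P.part_eq_of_mem ht hat).symm

lemma image_parts_sdiff :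
    P.parts.image (· \ {a}) = insert (P.part a \ {a}) ((P.parts.erase (P.part a)).image id) := by
  conv_lhs => rw [← Finset.insert_erase (part_a_mem P)]
  rw [Finset.image_insert]
  congr 1
  apply Finset.image_congr
  intro t ht
  simp only [Finset.mem_coe, Finset.mem_erase] at ht
  have : a ∉ t := not_mem_of_ne_part P (ht.2) ht.1
  simp [Finset.sdiff_singleton_eq_erase, Finset.erase_eq_of_notMem this]

lemma bot_not_mem_erase : ⊥ ∉ P.parts.erase (P.part a) :=
  fun h => P.bot_notMem (Finset.mem_of_mem_erase h)

lemma reduce_parts_of_singleton (hsing : P.part a = {a}) :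
    (reduce ha P).parts = P.parts.erase (P.part a) := by
  rw [reduce_parts, image_parts_sdiff, Finset.image_id]
  have h0 : P.part a \ {a} = ⊥ := by rw [hsing]; simp
  rw [h0, Finset.erase_insert (bot_not_mem_erase P)]

lemma part_sdiff_ne_bot (hsing : P.part a ≠ {a}) : P.part a \ {a} ≠ ⊥ := by
  intro h
  apply hsing
  apply Finset.Subset.antisymm
  · intro x hx
    by_contra hxa
    have : x ∈ P.part a \ {a} := Finset.mem_sdiff.2 ⟨hx, by simpa using hxa⟩
    rw [h] at this
    exact absurd this (Finset.notMem_empty x)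
  · intro x hx
    rw [Finset.mem_singleton] at hx
    subst hx
    exact mem_part_a P

lemma part_sdiff_not_mem_erase (hsing : P.part a ≠ {a}) :
    P.part a \ {a} ∉ P.parts.erase (P.part a) := by
  intro h
  obtain ⟨b, hb⟩ := Finset.nonempty_iff_ne_empty.2 (part_sdiff_ne_bot P hsing)
  have hbmem : b ∈ P.part a := (Finset.mem_sdiff.1 hb).1
  have heq : P.part a \ {a} = P.part a :=
    P.eq_of_mem_parts (Finset.mem_of_mem_erase h) (part_a_mem P) hb hbmem
  have : a ∈ P.part a \ {a} := heq.symm ▸ mem_part_a P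
  simp at this

lemma reduce_parts_of_not_singleton (hsing : P.part a ≠ {a}) :
    (reduce ha P).parts = insert (P.part a \ {a}) (P.parts.erase (P.part a)) := by
  rw [reduce_parts, image_parts_sdiff, Finset.image_id]
  apply Finset.erase_eq_of_notMem
  rw [Finset.mem_insert]
  rintro (h | h)
  · exact part_sdiff_ne_bot P hsing h.symm
  · exact bot_not_mem_erase P h

end Avoid

lemma stirling_bound (s : Finset V) : ∀ k : ℕ,
    Nat.card {P : Finpartition s // P.parts.card = k} ≤ stirling2 s.card k := by
  induction s using Finset.induction_on with
  | empty =>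
    intro k
    haveI : Subsingleton (Finpartition (∅ : Finset V)) := by
      have h : (∅ : Finset V) = ⊥ := rfl
      rw [h]
      infer_instance
    match k with
    | 0 =>
      rcases isEmpty_or_nonempty {P : Finpartition (∅ : Finset V) // P.parts.card = 0} with h | h
      · rw [@Nat.card_of_isEmpty _ h]; exact Nat.zero_le _
      · have : Subsingleton {P : Finpartition (∅ : Finset V) // P.parts.card = 0} :=
          inferInstance
        rw [Nat.card_eq_one_iff_unique.2 ⟨this, h⟩]
        simp [stirling2]
    | k+1 =>
      haveI : IsEmpty {P : Finpartition (∅ : Finset V) // P.parts.card = k+1} := by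
        constructor
        rintro ⟨P, hP⟩
        have : P = Finpartition.empty (Finset V) := Subsingleton.elim _ _
        rw [this] at hP
        simp [Finpartition.empty] at hP
      exact le_of_eq_of_le Nat.card_of_isEmpty (Nat.zero_le _)
  | @insert a s ha ih =>
    intro k
    rw [Finset.card_insert_of_notMem ha]
    match k with
    | 0 =>
      haveI : IsEmpty {P : Finpartition (insert a s : Finset V) // P.parts.card = 0} := by
        constructor
        rintro ⟨P, hP⟩
        rw [Finset.card_eq_zero] at hP
        have h2 := P.sup_parts
        rw [hP] at h2
        simp only [Finset.sup_empty] at h2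
        have : a ∈ (⊥ : Finset V) := h2.symm ▸ mem_insert_self a s
        simp at this
      exact le_of_eq_of_le Nat.card_of_isEmpty (Nat.zero_le _)
    | k+1 =>
      -- the injection
      set T1 := {Q : Finpartition s // Q.parts.card = k} with hT1
      set T2 := (Σ Q : {Q : Finpartition s // Q.parts.card = k+1}, {B // B ∈ Q.1.parts})
        with hT2
      have hcard2 : Nat.card T2 = (k+1) * Nat.card {Q : Finpartition s // Q.parts.card = k+1} := by
        rw [Nat.card_eq_fintype_card, Nat.card_eq_fintype_card, Fintype.card_sigma]
        have : ∀ Q : {Q : Finpartition s // Q.parts.card = k+1},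
            Fintype.card {B // B ∈ Q.1.parts} = k+1 := by
          intro Q
          rw [Fintype.card_coe]
          exact Q.2
        simp_rw [this]
        rw [Finset.sum_const, Finset.card_univ]
        ring
      have hinj : ∃ f : {P : Finpartition (insert a s : Finset V) // P.parts.card = k+1} →
          (T1 ⊕ T2), Function.Injective f := by
        refine ⟨fun ⟨P, hP⟩ =>
          if hsing : P.part a = {a} then
            Sum.inl ⟨reduce ha P, by
              rw [reduce_parts_of_singleton ha P hsing,
                Finset.card_erase_of_mem (part_a_mem P), hP]
              omega⟩
          else
            Sum.inr ⟨⟨reduce ha P, by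
              rw [reduce_parts_of_not_singleton ha P hsing,
                Finset.card_insert_of_notMem (part_sdiff_not_mem_erase P hsing),
                Finset.card_erase_of_mem (part_a_mem P), hP]
              omega⟩,
              ⟨P.part a \ {a}, by
                rw [reduce_parts_of_not_singleton ha P hsing]
                exact Finset.mem_insert_self _ _⟩⟩, ?_⟩
        rintro ⟨P1, h1⟩ ⟨P2, h2⟩ heq
        by_cases hs1 : P1.part a = {a} <;> by_cases hs2 : P2.part a = {a} <;>
          simp only [hs1, hs2, dif_pos, dif_neg, not_false_iff] at heq
        · -- both singleton
          have hred : (reduce ha P1).parts = (reduce ha P2).parts :=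
            congrArg (fun q : T1 => (q.1).parts) (Sum.inl.inj heq)
          rw [reduce_parts_of_singleton ha P1 hs1, reduce_parts_of_singleton ha P2 hs2]
            at hred
          apply Subtype.ext
          apply Finpartition.ext
          rw [← Finset.insert_erase (part_a_mem P1), ← Finset.insert_erase (part_a_mem P2),
            hred, hs1, hs2]
        · exact absurd heq (by simp)
        · exact absurd heq (by simp)
        · -- both non-singleton
          have hQ : reduce ha P1 = reduce ha P2 := by
            have := congrArg (fun x : T1 ⊕ T2 =>
              (Sum.elim (fun _ => reduce ha P1) (fun y => y.1.1) x)) heq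
            simpa using this
          have hB : P1.part a \ {a} = P2.part a \ {a} := by
            have := congrArg (fun x : T1 ⊕ T2 =>
              (Sum.elim (fun _ => (∅ : Finset V)) (fun y => (y.2.1 : Finset V)) x)) heq
            simpa using this
          have hA : P1.part a = P2.part a := by
            have h1' : P1.part a = insert a (P1.part a \ {a}) := by
              rw [Finset.sdiff_singleton_eq_erase, Finset.insert_erase (mem_part_a P1)]
            have h2' : P2.part a = insert a (P2.part a \ {a}) := by
              rw [Finset.sdiff_singleton_eq_erase, Finset.insert_erase (mem_part_a P2)]
            rw [h1', h2', hB]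
          have hR : P1.parts.erase (P1.part a) = P2.parts.erase (P2.part a) := by
            have e1 : P1.parts.erase (P1.part a)
                = ((reduce ha P1).parts).erase (P1.part a \ {a}) := by
              rw [reduce_parts_of_not_singleton ha P1 hs1,
                Finset.erase_insert (part_sdiff_not_mem_erase P1 hs1)]
            have e2 : P2.parts.erase (P2.part a)
                = ((reduce ha P2).parts).erase (P2.part a \ {a}) := by
              rw [reduce_parts_of_not_singleton ha P2 hs2,
                Finset.erase_insert (part_sdiff_not_mem_erase P2 hs2)]
            rw [e1, e2, hQ, hB]
          apply Subtype.ext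
          apply Finpartition.ext
          rw [← Finset.insert_erase (part_a_mem P1), ← Finset.insert_erase (part_a_mem P2),
            hR, hA]
      obtain ⟨f, hf⟩ := hinj
      calc Nat.card {P : Finpartition (insert a s : Finset V) // P.parts.card = k+1}
          ≤ Nat.card (T1 ⊕ T2) := Nat.card_le_card_of_injective f hf
        _ = Nat.card T1 + Nat.card T2 := Nat.card_sum
        _ ≤ stirling2 s.card k + (k+1) * stirling2 s.card (k+1) := by
            rw [hcard2]
            exact Nat.add_le_add (ih k) (Nat.mul_le_mul_left _ (ih (k+1)))
        _ ≤ stirling2 (s.card + 1) (k + 1) := by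
            rw [show stirling2 (s.card + 1) (k + 1)
              = (k + 1) * stirling2 s.card (k + 1) + stirling2 s.card k from rfl]
            omega

end CompBoundsAux

open CompBoundsAux Finset in
theorem compCount_bounds {V : Type*} [Fintype V] [DecidableEq V]
    (G : SimpleGraph V) (hG : G.Connected) (n : ℕ) (hn : Fintype.card V = n)
    (k : ℕ) (hk1 : 1 ≤ k) (hkn : k ≤ n) :
    (n - 1).choose (k - 1) ≤ G.compCount k ∧ G.compCount k ≤ stirling2 n k := by
  constructor
  · -- lower bound
    have hpos : 0 < Fintype.card V := by omega
    obtain ⟨v0⟩ : Nonempty V := Fintype.card_pos_iff.mp hpos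
    set d : V → ℕ := fun v => G.dist v0 v with hd
    have hpar : ∀ v : V, v ≠ v0 → ∃ u, G.Adj u v ∧ d u < d v := by
      intro v hv
      have hdpos : 0 < G.dist v0 v := hG.pos_dist_of_ne (Ne.symm hv)
      obtain ⟨w, hw⟩ := hG.exists_walk_length_eq_dist v v0
      cases w with
      | nil => exact absurd rfl hv
      | @cons _ u _ hadj q =>
        refine ⟨u, hadj.symm, ?_⟩
        have h1 : G.dist v0 u ≤ q.length := by
          have := SimpleGraph.dist_le q.reverse
          simpa [SimpleGraph.dist_comm] using this
        have h2 : q.length + 1 = G.dist v0 v := by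
          simpa [SimpleGraph.dist_comm] using hw
        simp only [hd]
        omega
    set p : V → V := fun v => if h : v = v0 then v0 else Classical.choose (hpar v h) with hp
    have hp1 : ∀ v, v ≠ v0 → G.Adj (p v) v := by
      intro v hv
      rw [hp]
      simp only [dif_neg hv]
      exact (Classical.choose_spec (hpar v hv)).1
    have hp2 : ∀ v, v ≠ v0 → d (p v) < d v := by
      intro v hv
      rw [hp]
      simp only [dif_neg hv]
      exact (Classical.choose_spec (hpar v hv)).2
    -- the injection from subsets
    set emb : {x : V // x ≠ v0} ↪ V := Function.Embedding.subtype _ with hemb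
    have hmap : ∀ S : Finset {x : V // x ≠ v0}, v0 ∉ S.map emb := by
      intro S h
      obtain ⟨⟨x, hx⟩, _, hx2⟩ := Finset.mem_map.1 h
      exact hx hx2
    have hdec : ∀ S : Finset {x : V // x ≠ v0},
        ∀ v, ¬ (v = v0 ∨ v ∈ S.map emb) → d (p v) < d v := by
      intro S v hv
      exact hp2 v (fun h => hv (Or.inl h))
    have hinj : ∃ f : {S : Finset {x : V // x ≠ v0} // S.card = k - 1} →
        {P : Finpartition (Finset.univ : Finset V) //
          G.IsComposition P ∧ P.parts.card = k}, Function.Injective f := by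
      refine ⟨fun ⟨S, hS⟩ => ⟨rootPart p d v0 (S.map emb),
        rootPart_isComposition (hdec S) hp1,
        by rw [card_parts_rootPart (hdec S) (hmap S), Finset.card_map, hS]; omega⟩, ?_⟩
      rintro ⟨S1, hS1⟩ ⟨S2, hS2⟩ heq
      simp only [Subtype.mk.injEq] at heq ⊢
      have key : ∀ (S1 S2 : Finset {x : V // x ≠ v0}),
          rootPart p d v0 (S1.map emb) = rootPart p d v0 (S2.map emb) →
          S1.map emb ⊆ S2.map emb := by
        intro S1 S2 hP
        intro v hv
        have hvne : v ≠ v0 := by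
          rintro rfl
          exact hmap S1 hv
        set r1 := root p (fun v => v = v0 ∨ v ∈ S1.map emb) d with hr1
        set r2 := root p (fun v => v = v0 ∨ v ∈ S2.map emb) d with hr2
        have h1 : r1 v = v := root_of_pred (Or.inr hv)
        have h2 : r1 (p v) ≠ v := by
          intro h
          have hle : d (r1 (p v)) ≤ d (p v) := root_ord_le (hdec S1) (p v)
          rw [h] at hle
          have := hp2 v hvne
          omega
        have hv1 : v ∉ (rootPart p d v0 (S1.map emb)).part (p v) := by
          intro hmem
          exact h2 ((mem_part_rootPart.1 hmem).trans h1)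
        have hv2 : v ∉ (rootPart p d v0 (S2.map emb)).part (p v) := by
          rw [← hP]
          exact hv1
        by_contra hvS2
        apply hv2
        rw [mem_part_rootPart]
        have hnp : ¬ (v = v0 ∨ v ∈ S2.map emb) := by
          rintro (h | h)
          · exact hvne h
          · exact hvS2 h
        exact (root_step (hdec S2) hnp).symm
      have : S1.map emb = S2.map emb :=
        Finset.Subset.antisymm (key S1 S2 heq) (key S2 S1 heq.symm)
      exact Finset.map_injective emb this
    obtain ⟨f, hf⟩ := hinj
    have hle := Nat.card_le_card_of_injective f hf
    have hdom : Nat.card {S : Finset {x : V // x ≠ v0} // S.card = k - 1}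
        = (n - 1).choose (k - 1) := by
      rw [Nat.card_eq_fintype_card, Fintype.card_finset_len]
      congr 1
      rw [Fintype.card_subtype_compl, hn]
      simp
    rw [hdom] at hle
    exact hle
  · -- upper bound
    have h1 : ∃ f : {P : Finpartition (Finset.univ : Finset V) //
        G.IsComposition P ∧ P.parts.card = k} →
        {P : Finpartition (Finset.univ : Finset V) // P.parts.card = k},
        Function.Injective f := by
      refine ⟨fun ⟨P, hP⟩ => ⟨P, hP.2⟩, ?_⟩
      rintro ⟨P1, h1⟩ ⟨P2, h2⟩ heq
      simpa using heq
    obtain ⟨f, hf⟩ := h1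
    calc G.compCount k
        ≤ Nat.card {P : Finpartition (Finset.univ : Finset V) // P.parts.card = k} :=
          Nat.card_le_card_of_injective f hf
      _ ≤ stirling2 (Finset.univ : Finset V).card k := stirling_bound _ k
      _ = stirling2 n k := by rw [Finset.card_univ, hn]
end

section
/- Every connected graph G on n vertices has at least C(n-1, k-1) graph compositions with exactly k blocks, where C(n-1, k-1) is the binomial coefficient. -/
namespace ChooseCompAux

set_option linter.unusedSectionVars false

variable {V : Type*} [Fintype V] [DecidableEq V]

/-- Follow parents with fuel, stopping upon entering `R`. -/
def topAux (p : V → V) (R : Finset V) : ℕ → V → V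
  | 0, v => v
  | m+1, v => if v ∈ R then v else topAux p R m (p v)

lemma topAux_mem (p : V → V) (R : Finset V) {v : V} (hv : v ∈ R) :
    ∀ m, topAux p R m v = v
  | 0 => rfl
  | m+1 => by simp [topAux, hv]

/-- `top`: follow parents until landing in `R`. -/
def top (p : V → V) (rk : V → ℕ) (R : Finset V) (v : V) : V := topAux p R (rk v) v

/-- The setoid whose classes are the fibers of `top`. -/
def topSetoid (p : V → V) (rk : V → ℕ) (R : Finset V) : Setoid V :=
  ⟨fun a b => top p rk R a = top p rk R b, ⟨fun _ => rfl, Eq.symm, Eq.trans⟩⟩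

instance (p : V → V) (rk : V → ℕ) (R : Finset V) : DecidableRel (topSetoid p rk R).r :=
  fun _ _ => decEq _ _

section

variable {p : V → V} {rk : V → ℕ} {v0 : V} {R : Finset V}
variable (hv0 : v0 ∈ R) (hrk : ∀ v, v ≠ v0 → rk (p v) < rk v)
include hv0 hrk

lemma rk_pos {v : V} (hv : v ∉ R) : 1 ≤ rk v := by
  have hne : v ≠ v0 := fun h => hv (h ▸ hv0)
  have := hrk v hne; omega

lemma topAux_stab : ∀ m v, rk v ≤ m → topAux p R m v = topAux p R (rk v) v := by
  intro m
  induction m using Nat.strong_induction_on with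
  | _ m ih =>
    intro v hm
    by_cases hv : v ∈ R
    · rw [topAux_mem p R hv, topAux_mem p R hv]
    · have hne : v ≠ v0 := fun h => hv (h ▸ hv0)
      have h2 := hrk v hne
      have h1 : 1 ≤ rk v := by omega
      obtain ⟨m', rfl⟩ : ∃ m', m = m' + 1 := ⟨m - 1, by omega⟩
      obtain ⟨j, hj⟩ : ∃ j, rk v = j + 1 := ⟨rk v - 1, by omega⟩
      rw [hj]
      show (if v ∈ R then v else topAux p R m' (p v))
          = (if v ∈ R then v else topAux p R j (p v))
      rw [if_neg hv, if_neg hv,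
        ih m' (by omega) (p v) (by omega), ih j (by omega) (p v) (by omega)]

lemma top_eq_self {v : V} (hv : v ∈ R) : top p rk R v = v := topAux_mem p R hv _

lemma top_eq_parent {v : V} (hv : v ∉ R) : top p rk R v = top p rk R (p v) := by
  have hne : v ≠ v0 := fun h => hv (h ▸ hv0)
  have h2 := hrk v hne
  obtain ⟨j, hj⟩ : ∃ j, rk v = j + 1 := ⟨rk v - 1, by have := rk_pos hv0 hrk hv; omega⟩
  unfold top
  rw [hj]
  show (if v ∈ R then v else topAux p R j (p v)) = _
  rw [if_neg hv, topAux_stab hv0 hrk j (p v) (by omega)]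

lemma top_mem : ∀ m v, rk v ≤ m → top p rk R v ∈ R := by
  intro m
  induction m using Nat.strong_induction_on with
  | _ m ih =>
    intro v hm
    by_cases hv : v ∈ R
    · rw [top_eq_self hv0 hrk hv]; exact hv
    · have hne : v ≠ v0 := fun h => hv (h ▸ hv0)
      have h2 := hrk v hne
      rw [top_eq_parent hv0 hrk hv]
      exact ih (m-1) (by omega) (p v) (by omega)

lemma rk_top_le : ∀ m v, rk v ≤ m → rk (top p rk R v) ≤ rk v := by
  intro m
  induction m using Nat.strong_induction_on with
  | _ m ih =>
    intro v hm
    by_cases hv : v ∈ R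
    · rw [top_eq_self hv0 hrk hv]
    · have hne : v ≠ v0 := fun h => hv (h ▸ hv0)
      have h2 := hrk v hne
      rw [top_eq_parent hv0 hrk hv]
      have := ih (m-1) (by omega) (p v) (by omega)
      omega

lemma reach (G : SimpleGraph V) (hadj : ∀ v, v ≠ v0 → G.Adj v (p v)) {r : V} (hrr : r ∈ R) :
    ∀ m v, rk v ≤ m → ∀ (h : top p rk R v = r),
      (G.induce {w | top p rk R w = r}).Reachable ⟨v, h⟩ ⟨r, top_eq_self hv0 hrk hrr⟩ := by
  intro m
  induction m using Nat.strong_induction_on with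
  | _ m ih =>
    intro v hm h
    by_cases hv : v ∈ R
    · have hvr : v = r := by rw [← h, top_eq_self hv0 hrk hv]
      subst hvr
      exact SimpleGraph.Reachable.refl _
    · have hne : v ≠ v0 := fun he => hv (he ▸ hv0)
      have h2 := hrk v hne
      have hpv : top p rk R (p v) = r := by rw [← top_eq_parent hv0 hrk hv]; exact h
      have hadj' : (G.induce {w | top p rk R w = r}).Adj ⟨v, h⟩ ⟨p v, hpv⟩ := hadj v hne
      exact hadj'.reachable.trans (ih (m-1) (by omega) (p v) (by omega) hpv)

lemma comp_isComposition (G : SimpleGraph V) (hadj : ∀ v, v ≠ v0 → G.Adj v (p v)) :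
    G.IsComposition (Finpartition.ofSetoid (topSetoid p rk R)) := by
  intro B hB
  obtain ⟨a, ha⟩ := Finpartition.nonempty_of_mem_parts _ hB
  have hpart : (Finpartition.ofSetoid (topSetoid p rk R)).part a = B :=
    Finpartition.part_eq_of_mem _ hB ha
  have hmem : ∀ b, b ∈ B ↔ top p rk R a = top p rk R b := by
    intro b; rw [← hpart]; exact Finpartition.mem_part_ofSetoid_iff_rel
  have hrR : top p rk R a ∈ R := top_mem hv0 hrk (rk a) a le_rfl
  have hset : (B : Set V) = {w | top p rk R w = top p rk R a} := by
    ext b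
    simp only [Finset.mem_coe, Set.mem_setOf_eq, hmem b, eq_comm]
  rw [hset, SimpleGraph.connected_iff]
  refine ⟨?_, ⟨⟨top p rk R a, top_eq_self hv0 hrk hrR⟩⟩⟩
  rintro ⟨x, hx⟩ ⟨y, hy⟩
  exact (reach hv0 hrk G hadj hrR (rk x) x le_rfl hx).trans
    (reach hv0 hrk G hadj hrR (rk y) y le_rfl hy).symm

lemma comp_parts_card :
    (Finpartition.ofSetoid (topSetoid p rk R)).parts.card = R.card := by
  set P := Finpartition.ofSetoid (topSetoid p rk R) with hP
  have h1 : P.parts = Finset.univ.image P.part := by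
    apply Finset.Subset.antisymm
    · intro B hB
      obtain ⟨a, ha⟩ := P.nonempty_of_mem_parts hB
      exact Finset.mem_image.mpr ⟨a, Finset.mem_univ a, P.part_eq_of_mem hB ha⟩
    · intro B hB
      obtain ⟨a, -, rfl⟩ := Finset.mem_image.mp hB
      exact P.part_mem.mpr (Finset.mem_univ a)
  have hpt : ∀ a, P.part a = P.part (top p rk R a) := by
    intro a
    have hidem : top p rk R (top p rk R a) = top p rk R a :=
      top_eq_self hv0 hrk (top_mem hv0 hrk (rk a) a le_rfl)
    have : a ∈ P.part (top p rk R a) :=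
      Finpartition.mem_part_ofSetoid_iff_rel.mpr hidem
    exact P.part_eq_of_mem (P.part_mem.mpr (Finset.mem_univ _)) this
  have h2 : Finset.univ.image P.part = R.image P.part := by
    apply Finset.Subset.antisymm
    · intro B hB
      obtain ⟨a, -, rfl⟩ := Finset.mem_image.mp hB
      exact Finset.mem_image.mpr ⟨top p rk R a, top_mem hv0 hrk (rk a) a le_rfl, (hpt a).symm⟩
    · exact Finset.image_subset_image (Finset.subset_univ R)
  rw [h1, h2]
  apply Finset.card_image_of_injOn
  intro r hr r' hr' he
  have hmem : r ∈ P.part r' := he ▸ P.mem_part (Finset.mem_univ r)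
  have h3 : top p rk R r' = top p rk R r :=
    Finpartition.mem_part_ofSetoid_iff_rel.mp hmem
  rw [top_eq_self hv0 hrk hr, top_eq_self hv0 hrk hr'] at h3
  exact h3.symm

end

lemma main (G : SimpleGraph V) (v0 : V) (p : V → V) (rk : V → ℕ)
    (hadj : ∀ v, v ≠ v0 → G.Adj v (p v)) (hrk : ∀ v, v ≠ v0 → rk (p v) < rk v)
    (k : ℕ) (hk1 : 1 ≤ k) :
    (Fintype.card V - 1).choose (k - 1) ≤ G.compCount k := by
  classical
  set A := (Finset.univ.erase v0).powersetCard (k-1) with hA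
  have hAcard : A.card = (Fintype.card V - 1).choose (k - 1) := by
    rw [hA, Finset.card_powersetCard, Finset.card_erase_of_mem (Finset.mem_univ v0),
      Finset.card_univ]
  have hRmem : ∀ S : Finset V, v0 ∈ insert v0 S := fun S => Finset.mem_insert_self _ _
  set F : Finset V → Finpartition (Finset.univ : Finset V) :=
    fun S => Finpartition.ofSetoid (topSetoid p rk (insert v0 S)) with hF
  have hcomp : ∀ S : Finset V, G.IsComposition (F S) :=
    fun S => comp_isComposition (hRmem S) hrk G hadj
  have hcard : ∀ S ∈ A, (F S).parts.card = k := by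
    intro S hS
    rw [hA, Finset.mem_powersetCard] at hS
    have hv0S : v0 ∉ S := fun h => (Finset.mem_erase.mp (hS.1 h)).1 rfl
    rw [hF, comp_parts_card (hRmem S) hrk, Finset.card_insert_of_notMem hv0S, hS.2]
    omega
  have hchar : ∀ S : Finset V, S ⊆ Finset.univ.erase v0 → ∀ v, v ≠ v0 →
      (v ∈ S ↔ ¬ top p rk (insert v0 S) v = top p rk (insert v0 S) (p v)) := by
    intro S hSsub v hv
    constructor
    · intro hvS heq
      have hvR : v ∈ insert v0 S := Finset.mem_insert_of_mem hvS
      have h1 : top p rk (insert v0 S) v = v := top_eq_self (hRmem S) hrk hvR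
      have h2 := rk_top_le (hRmem S) hrk (rk (p v)) (p v) le_rfl
      have h3 := hrk v hv
      have h4 : top p rk (insert v0 S) (p v) = v := by rw [← heq, h1]
      rw [h4] at h2; omega
    · intro hne
      by_contra hvS
      exact hne (top_eq_parent (hRmem S) hrk
        (by simp [Finset.mem_insert, hv, hvS] : v ∉ insert v0 S))
  have hinj : ∀ S ∈ A, ∀ S' ∈ A, F S = F S' → S = S' := by
    intro S hS S' hS' hFeq
    rw [hA, Finset.mem_powersetCard] at hS hS'
    have hrel : ∀ a b : V, (top p rk (insert v0 S) a = top p rk (insert v0 S) b) ↔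
        (top p rk (insert v0 S') a = top p rk (insert v0 S') b) := by
      intro a b
      rw [show (top p rk (insert v0 S) a = top p rk (insert v0 S) b) ↔ _ from
        (Finpartition.mem_part_ofSetoid_iff_rel
          (s := topSetoid p rk (insert v0 S)) (a := a) (b := b)).symm]
      rw [show Finpartition.ofSetoid (topSetoid p rk (insert v0 S))
          = Finpartition.ofSetoid (topSetoid p rk (insert v0 S')) from hFeq]
      exact Finpartition.mem_part_ofSetoid_iff_rel
    ext v
    by_cases hv : v = v0
    · have h1 : v ∉ S := fun h => (Finset.mem_erase.mp (hS.1 h)).1 hv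
      have h2 : v ∉ S' := fun h => (Finset.mem_erase.mp (hS'.1 h)).1 hv
      simp [h1, h2]
    · rw [hchar S hS.1 v hv, hchar S' hS'.1 v hv, hrel]
  let f : {x // x ∈ A} → {P : Finpartition (Finset.univ : Finset V) //
      G.IsComposition P ∧ P.parts.card = k} :=
    fun x => ⟨F x.1, hcomp x.1, hcard x.1 x.2⟩
  have hfinj : Function.Injective f := by
    rintro ⟨S, hS⟩ ⟨S', hS'⟩ h
    exact Subtype.ext (hinj S hS S' hS' (congrArg Subtype.val h))
  calc (Fintype.card V - 1).choose (k - 1) = A.card := hAcard.symm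
    _ = Nat.card {x // x ∈ A} := (Nat.card_eq_finsetCard A).symm
    _ ≤ _ := Nat.card_le_card_of_injective f hfinj

end ChooseCompAux

theorem choose_le_compCount {V : Type*} [Fintype V] [DecidableEq V]
    (G : SimpleGraph V) (hG : G.Connected) (n : ℕ) (hn : Fintype.card V = n)
    (k : ℕ) (hk1 : 1 ≤ k) :
    (n - 1).choose (k - 1) ≤ G.compCount k := by
  classical
  subst hn
  have hne : Nonempty V := hG.nonempty
  obtain ⟨v0⟩ := hne
  have hex : ∀ v : V, v ≠ v0 → ∃ w, G.Adj v w ∧ G.dist v0 w < G.dist v0 v := by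
    intro v hv
    have hr : G.Reachable v v0 := hG v v0
    obtain ⟨q, hq⟩ := hr.exists_walk_length_eq_dist
    cases q with
    | nil => exact absurd rfl hv
    | @cons _ w _ h rest =>
      refine ⟨w, h, ?_⟩
      have h1 : G.dist w v0 ≤ rest.length := SimpleGraph.dist_le rest
      have h2 : rest.length + 1 = G.dist v v0 := by simpa using hq
      calc G.dist v0 w = G.dist w v0 := SimpleGraph.dist_comm
        _ < G.dist v v0 := by omega
        _ = G.dist v0 v := SimpleGraph.dist_comm
  let p : V → V := fun v => if h : v = v0 then v0 else Classical.choose (hex v h)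
  have hadj : ∀ v, v ≠ v0 → G.Adj v (p v) := fun v hv => by
    simp only [p, dif_neg hv]; exact (Classical.choose_spec (hex v hv)).1
  have hrk : ∀ v, v ≠ v0 → G.dist v0 (p v) < G.dist v0 v := fun v hv => by
    simp only [p, dif_neg hv]; exact (Classical.choose_spec (hex v hv)).2
  exact ChooseCompAux.main G v0 p (G.dist v0) hadj hrk k hk1
end

section
/- Let K_N^- denote the complete graph on N vertices with one edge e deleted. Then the number of graph compositions of K_N^- with exactly k blocks equals S(N, k) − S(N−2, k−1), where S denotes Stirling numbers of the second kind. -/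
namespace CompAux

open Finset

variable {α : Type*} [DecidableEq α]

instance instFiniteFinpartition [Fintype α] (s : Finset α) : Finite (Finpartition s) :=
  Finite.of_injective Finpartition.parts fun P Q h => Finpartition.ext h

lemma not_mem_part_of_not_mem {s : Finset α} (P : Finpartition s) {a : α} (ha : a ∉ s)
    {C : Finset α} (hC : C ∈ P.parts) : a ∉ C := fun h => ha (P.le hC h)

lemma avoid_parts_of_mem {s : Finset α} (P : Finpartition s) {B : Finset α}
    (hB : B ∈ P.parts) : (P.avoid B).parts = P.parts.erase B := by
  ext c
  simp only [Finpartition.mem_avoid, mem_erase]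
  constructor
  · rintro ⟨d, hd, hdB, rfl⟩
    have hne : d ≠ B := fun h => hdB (h ▸ le_refl _)
    have hdis : Disjoint d B := P.disjoint hd hB hne
    rw [Finset.sdiff_eq_self_iff_disjoint.2 hdis]
    exact ⟨hne, hd⟩
  · rintro ⟨hne, hc⟩
    refine ⟨c, hc, fun hle => ?_, ?_⟩
    · exact P.ne_bot hc ((P.disjoint hc hB hne).eq_bot_of_le hle)
    · exact Finset.sdiff_eq_self_iff_disjoint.2 (P.disjoint hc hB hne)


section InsertEquiv

variable {a : α} {s : Finset α}

lemma insert_sdiff_singleton (ha : a ∉ s) : insert a s \ {a} = s := by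
  ext x
  simp only [mem_sdiff, mem_insert, mem_singleton]
  constructor
  · rintro ⟨h | h, hx⟩
    · exact absurd h hx
    · exact h
  · intro hx
    exact ⟨Or.inr hx, fun h => ha (h ▸ hx)⟩

/-- Remove `a` from a partition of `insert a s`. -/
def splitP (ha : a ∉ s) (Q : Finpartition (insert a s)) : Finpartition s :=
  (Q.avoid {a}).copy (insert_sdiff_singleton ha)

lemma part_a_mem (ha : a ∉ s) (Q : Finpartition (insert a s)) : Q.part a ∈ Q.parts :=
  Q.part_mem.2 (mem_insert_self a s)

lemma a_mem_part (ha : a ∉ s) (Q : Finpartition (insert a s)) : a ∈ Q.part a :=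
  Q.mem_part (mem_insert_self a s)

lemma sdiff_singleton_of_ne_part (ha : a ∉ s) (Q : Finpartition (insert a s))
    {d : Finset α} (hd : d ∈ Q.parts) (hne : d ≠ Q.part a) :
    ¬ d ≤ ({a} : Finset α) ∧ d \ {a} = d := by
  have had : a ∉ d := fun h => hne (Q.part_eq_of_mem hd h).symm
  constructor
  · intro hle
    obtain ⟨x, hx⟩ := Q.nonempty_of_mem_parts hd
    have : x = a := by simpa using hle hx
    exact had (this ▸ hx)
  · rw [Finset.sdiff_eq_self_iff_disjoint, Finset.disjoint_singleton_right]
    exact had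

lemma splitP_parts_of_eq (ha : a ∉ s) (Q : Finpartition (insert a s))
    (h : Q.part a = {a}) : (splitP ha Q).parts = Q.parts.erase {a} := by
  show (Q.avoid {a}).parts = _
  ext c
  simp only [Finpartition.mem_avoid, mem_erase]
  constructor
  · rintro ⟨d, hd, hdle, rfl⟩
    have hne : d ≠ Q.part a := by
      rintro rfl
      exact hdle (h ▸ le_refl _)
    obtain ⟨_, h2⟩ := sdiff_singleton_of_ne_part ha Q hd hne
    rw [h2]
    exact ⟨fun hh => hne (hh.trans h.symm), hd⟩
  · rintro ⟨hne, hc⟩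
    have hne' : c ≠ Q.part a := fun hh => hne (hh.trans h)
    obtain ⟨h1, h2⟩ := sdiff_singleton_of_ne_part ha Q hc hne'
    exact ⟨c, hc, h1, h2⟩

lemma splitP_parts_of_ne (ha : a ∉ s) (Q : Finpartition (insert a s))
    (h : Q.part a ≠ {a}) :
    (splitP ha Q).parts = insert ((Q.part a).erase a) (Q.parts.erase (Q.part a)) := by
  show (Q.avoid {a}).parts = _
  ext c
  simp only [Finpartition.mem_avoid, mem_insert, mem_erase]
  constructor
  · rintro ⟨d, hd, hdle, rfl⟩
    by_cases hne : d = Q.part a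
    · subst hne
      left
      rw [Finset.sdiff_singleton_eq_erase]
    · obtain ⟨_, h2⟩ := sdiff_singleton_of_ne_part ha Q hd hne
      rw [h2]
      exact Or.inr ⟨hne, hd⟩
  · rintro (rfl | ⟨hne, hc⟩)
    · refine ⟨Q.part a, part_a_mem ha Q, ?_, ?_⟩
      · intro hle
        apply h
        apply Finset.Subset.antisymm hle
        simpa using a_mem_part ha Q
      · rw [Finset.sdiff_singleton_eq_erase]
    · obtain ⟨h1, h2⟩ := sdiff_singleton_of_ne_part ha Q hc hne
      exact ⟨c, hc, h1, h2⟩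


lemma singleton_not_mem (ha : a ∉ s) (P : Finpartition s) : ({a} : Finset α) ∉ P.parts :=
  fun h => not_mem_part_of_not_mem P ha h (mem_singleton_self a)

/-- Add `a` as a singleton block. -/
def glueNone (ha : a ∉ s) (P : Finpartition s) : Finpartition (insert a s) :=
  P.extend (b := {a}) (by simp)
    (Finset.disjoint_singleton_right.2 ha)
    (by rw [sup_eq_union, union_comm, ← insert_eq])

lemma glueNone_parts (ha : a ∉ s) (P : Finpartition s) :
    (glueNone ha P).parts = insert {a} P.parts := rfl

lemma glueNone_card (ha : a ∉ s) (P : Finpartition s) :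
    (glueNone ha P).parts.card = P.parts.card + 1 := by
  rw [glueNone_parts, card_insert_of_notMem (singleton_not_mem ha P)]

/-- Add `a` to the block `B` of a partition of `s`. -/
def glueSome (ha : a ∉ s) (P : Finpartition s) (B : Finset α) (hB : B ∈ P.parts) :
    Finpartition (insert a s) where
  parts := insert (insert a B) (P.parts.erase B)
  supIndep := by
    rw [Finset.supIndep_iff_pairwiseDisjoint, coe_insert]
    refine Set.PairwiseDisjoint.insert ?_ ?_
    · exact P.disjoint.subset (by exact_mod_cast erase_subset B P.parts)
    · intro c hc _
      rw [mem_coe, mem_erase] at hc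
      simp only [id]
      rw [Finset.disjoint_insert_left]
      exact ⟨not_mem_part_of_not_mem P ha hc.2, P.disjoint hB hc.2 (Ne.symm hc.1)⟩
  sup_parts := by
    have h1 : (insert B (P.parts.erase B)).sup id = s := by
      rw [insert_erase hB]; exact P.sup_parts
    rw [sup_insert] at h1 ⊢
    simp only [id, sup_eq_union] at h1 ⊢
    rw [insert_union, h1]
  bot_notMem := by
    simp only [bot_eq_empty, mem_insert, not_or, mem_erase]
    constructor
    · exact fun h => by simpa using congrArg (a ∈ ·) h.symm
    · rintro ⟨-, h⟩
      exact P.bot_notMem h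

lemma glueSome_parts (ha : a ∉ s) (P : Finpartition s) (B : Finset α) (hB : B ∈ P.parts) :
    (glueSome ha P B hB).parts = insert (insert a B) (P.parts.erase B) := rfl

lemma insert_not_mem_erase (ha : a ∉ s) (P : Finpartition s) (B : Finset α) :
    insert a B ∉ P.parts.erase B := fun h =>
  not_mem_part_of_not_mem P ha (mem_of_mem_erase h) (mem_insert_self a B)

lemma glueSome_card (ha : a ∉ s) (P : Finpartition s) (B : Finset α) (hB : B ∈ P.parts) :
    (glueSome ha P B hB).parts.card = P.parts.card := by
  rw [glueSome_parts, card_insert_of_notMem (insert_not_mem_erase ha P B),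
    card_erase_add_one hB]

lemma glueNone_part_a (ha : a ∉ s) (P : Finpartition s) :
    (glueNone ha P).part a = {a} :=
  Finpartition.part_eq_of_mem _ (by rw [glueNone_parts]; exact mem_insert_self _ _)
    (mem_singleton_self a)

lemma glueSome_part_a (ha : a ∉ s) (P : Finpartition s) (B : Finset α) (hB : B ∈ P.parts) :
    (glueSome ha P B hB).part a = insert a B :=
  Finpartition.part_eq_of_mem _ (by rw [glueSome_parts]; exact mem_insert_self _ _)
    (mem_insert_self a B)


lemma erase_a_mem_splitP (ha : a ∉ s) (Q : Finpartition (insert a s))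
    (h : Q.part a ≠ {a}) : (Q.part a).erase a ∈ (splitP ha Q).parts := by
  rw [splitP_parts_of_ne ha Q h]
  exact mem_insert_self _ _

lemma sigma_none_eq {P P' : Finpartition s} (h : P = P') :
    (⟨P, none⟩ : Σ P : Finpartition s, Option P.parts) = ⟨P', none⟩ := by subst h; rfl

lemma sigma_some_eq {P P' : Finpartition s} (h : P = P') {B : P.parts} {B' : P'.parts}
    (hB : (B : Finset α) = B') :
    (⟨P, some B⟩ : Σ P : Finpartition s, Option P.parts) = ⟨P', some B'⟩ := by
  subst h
  rw [Subtype.ext hB]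

/-- The key bijection decomposing partitions of `insert a s`. -/
def insertEquiv (ha : a ∉ s) :
    Finpartition (insert a s) ≃ Σ P : Finpartition s, Option P.parts where
  toFun Q := ⟨splitP ha Q,
    if h : Q.part a = {a} then none
    else some ⟨(Q.part a).erase a, erase_a_mem_splitP ha Q h⟩⟩
  invFun x := match x with
    | ⟨P, none⟩ => glueNone ha P
    | ⟨P, some B⟩ => glueSome ha P B.1 B.2
  left_inv Q := by
    by_cases h : Q.part a = {a}
    · simp only [dif_pos h]
      apply Finpartition.ext
      show insert {a} (splitP ha Q).parts = Q.parts
      rw [splitP_parts_of_eq ha Q h, ← h, insert_erase (h ▸ part_a_mem ha Q)]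
    · simp only [dif_neg h]
      apply Finpartition.ext
      show insert (insert a ((Q.part a).erase a))
        ((splitP ha Q).parts.erase ((Q.part a).erase a)) = Q.parts
      have hins : insert a ((Q.part a).erase a) = Q.part a :=
        insert_erase (a_mem_part ha Q)
      have hnm : (Q.part a).erase a ∉ Q.parts.erase (Q.part a) := by
        intro hmem
        obtain ⟨x, hx⟩ : ((Q.part a).erase a).Nonempty :=
          Q.nonempty_of_mem_parts (mem_of_mem_erase hmem)
        have hx1 : x ∈ Q.part a := mem_of_mem_erase hx
        have := Q.eq_of_mem_parts (mem_of_mem_erase hmem) (part_a_mem ha Q) hx hx1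
        rw [this] at hmem
        exact (notMem_erase _ _) hmem
      rw [splitP_parts_of_ne ha Q h, erase_insert hnm, hins,
        insert_erase (part_a_mem ha Q)]
  right_inv x := by
    rcases x with ⟨P, o⟩
    rcases o with _ | ⟨B, hB⟩
    · have h : (glueNone ha P).part a = {a} := glueNone_part_a ha P
      simp only [dif_pos h]
      have hP : splitP ha (glueNone ha P) = P := by
        apply Finpartition.ext
        rw [splitP_parts_of_eq ha _ h, glueNone_parts,
          erase_insert (singleton_not_mem ha P)]
      exact sigma_none_eq hP
    · have h : (glueSome ha P B hB).part a = insert a B := glueSome_part_a ha P B hB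
      have haB : a ∉ B := not_mem_part_of_not_mem P ha hB
      have hne : (glueSome ha P B hB).part a ≠ {a} := by
        rw [h]
        intro hh
        obtain ⟨x, hx⟩ := P.nonempty_of_mem_parts hB
        have : x ∈ ({a} : Finset α) := hh ▸ (mem_insert_of_mem hx)
        rw [mem_singleton] at this
        exact haB (this ▸ hx)
      simp only [dif_neg hne]
      have hval : ((glueSome ha P B hB).part a).erase a = B := by
        rw [h, erase_insert haB]
      have hP : splitP ha (glueSome ha P B hB) = P := by
        apply Finpartition.ext
        rw [splitP_parts_of_ne ha _ hne, h, erase_insert haB, glueSome_parts,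
          erase_insert (insert_not_mem_erase ha P B), insert_erase hB]
      exact sigma_some_eq hP hval

/-- Predicate tracking block counts on the sigma side. -/
def qPred (k : ℕ) : (Σ P : Finpartition s, Option P.parts) → Prop
  | ⟨P, none⟩ => P.parts.card = k
  | ⟨P, some _⟩ => P.parts.card = k + 1

def sigmaSubtypeEquiv (k : ℕ) :
    {x : Σ P : Finpartition s, Option P.parts // qPred k x} ≃
      {P : Finpartition s // P.parts.card = k} ⊕
        Σ P : {P : Finpartition s // P.parts.card = k + 1}, P.1.parts where
  toFun x := match x with
    | ⟨⟨P, none⟩, h⟩ => Sum.inl ⟨P, h⟩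
    | ⟨⟨P, some B⟩, h⟩ => Sum.inr ⟨⟨P, h⟩, B⟩
  invFun x := match x with
    | Sum.inl ⟨P, h⟩ => ⟨⟨P, none⟩, h⟩
    | Sum.inr ⟨⟨P, h⟩, B⟩ => ⟨⟨P, some B⟩, h⟩
  left_inv := by rintro ⟨⟨P, _ | B⟩, h⟩ <;> rfl
  right_inv := by rintro (⟨P, h⟩ | ⟨⟨P, h⟩, B⟩) <;> rfl

def insertCardEquiv (ha : a ∉ s) (k : ℕ) :
    {Q : Finpartition (insert a s) // Q.parts.card = k + 1} ≃
      {P : Finpartition s // P.parts.card = k} ⊕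
        Σ P : {P : Finpartition s // P.parts.card = k + 1}, P.1.parts :=
  ((Equiv.subtypeEquiv (insertEquiv ha).symm (by
    rintro ⟨P, _ | ⟨B, hB⟩⟩
    · show P.parts.card = k ↔ (glueNone ha P).parts.card = k + 1
      rw [glueNone_card ha P]
      omega
    · show P.parts.card = k + 1 ↔ (glueSome ha P B hB).parts.card = k + 1
      rw [glueSome_card ha P B hB])).symm.trans (sigmaSubtypeEquiv k))

theorem card_finpartition [Fintype α] (s : Finset α) (k : ℕ) :
    Nat.card {P : Finpartition s // P.parts.card = k} = stirling2 s.card k := by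
  classical
  induction s using Finset.induction_on generalizing k with
  | empty =>
    rcases k with _ | k
    · rw [Finset.card_empty, show stirling2 0 0 = 1 from rfl, Nat.card_eq_one_iff_unique]
      constructor
      · constructor
        rintro ⟨P, hP⟩ ⟨Q, hQ⟩
        have hP' : P.parts = ∅ := Finpartition.parts_eq_empty_iff.2 rfl
        have hQ' : Q.parts = ∅ := Finpartition.parts_eq_empty_iff.2 rfl
        exact Subtype.ext (Finpartition.ext (hP'.trans hQ'.symm))
      · exact ⟨⟨(Finpartition.empty (Finset α)).copy bot_eq_empty, by
          show (Finpartition.empty (Finset α)).parts.card = 0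
          rfl⟩⟩
    · have : IsEmpty {P : Finpartition (∅ : Finset α) // P.parts.card = k + 1} := by
        constructor
        rintro ⟨P, hP⟩
        have : P.parts = ∅ := Finpartition.parts_eq_empty_iff.2 rfl
        rw [this] at hP
        simp at hP
      rw [Nat.card_of_isEmpty, Finset.card_empty]
      rfl
  | @insert a s ha ih =>
    rcases k with _ | k
    · have : IsEmpty {P : Finpartition (insert a s) // P.parts.card = 0} := by
        constructor
        rintro ⟨P, hP⟩
        rw [card_eq_zero] at hP
        exact insert_ne_empty a s (Finpartition.parts_eq_empty_iff.1 hP)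
      rw [Nat.card_of_isEmpty, card_insert_of_notMem ha]
      rfl
    · rw [Nat.card_congr (insertCardEquiv ha k), Nat.card_sum]
      have hsig : Nat.card (Σ P : {P : Finpartition s // P.parts.card = k + 1}, P.1.parts)
          = Nat.card {P : Finpartition s // P.parts.card = k + 1} * (k + 1) := by
        rw [Nat.card_congr (((Equiv.sigmaCongrRight fun P =>
          (P.1.parts.equivFin.trans (finCongr P.2)))).trans
          (Equiv.sigmaEquivProd {P : Finpartition s // P.parts.card = k + 1} (Fin (k + 1))))]
        rw [Nat.card_prod]
        simp
      rw [hsig, ih, ih, card_insert_of_notMem ha]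
      show _ = stirling2 (s.card + 1) (k + 1)
      rw [show stirling2 (s.card + 1) (k + 1)
        = (k + 1) * stirling2 s.card (k + 1) + stirling2 s.card k from rfl]
      ring

end InsertEquiv

section Graph

variable {N : ℕ} {a b : Fin N}

lemma pair_not_connected (hab : a ≠ b) :
    ¬ (((⊤ : SimpleGraph (Fin N)).deleteEdges {s(a, b)}).induce
      (({a, b} : Finset (Fin N)) : Set (Fin N))).Connected := by
  intro hcon
  have hbot : (((⊤ : SimpleGraph (Fin N)).deleteEdges {s(a, b)}).induce
      (({a, b} : Finset (Fin N)) : Set (Fin N))) = ⊥ := by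
    ext ⟨x, hx⟩ ⟨y, hy⟩
    simp only [SimpleGraph.comap_adj, SimpleGraph.deleteEdges_adj, SimpleGraph.top_adj,
      Set.mem_singleton_iff, SimpleGraph.bot_adj, iff_false, not_and, not_not]
    intro hxy
    simp only [coe_insert, coe_singleton, Set.mem_insert_iff, Set.mem_singleton_iff] at hx hy
    rcases hx with rfl | rfl <;> rcases hy with rfl | rfl
    · exact absurd rfl hxy
    · rfl
    · exact Sym2.eq_swap
    · exact absurd rfl hxy
  rw [hbot] at hcon
  have ha' : a ∈ (({a, b} : Finset (Fin N)) : Set (Fin N)) := by simp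
  have hb' : b ∈ (({a, b} : Finset (Fin N)) : Set (Fin N)) := by simp
  have := hcon.preconnected ⟨a, ha'⟩ ⟨b, hb'⟩
  rw [SimpleGraph.reachable_bot] at this
  exact hab (congrArg Subtype.val this)

lemma block_connected (hab : a ≠ b) {B : Finset (Fin N)} (hne : B.Nonempty)
    (hB : B ≠ {a, b}) :
    (((⊤ : SimpleGraph (Fin N)).deleteEdges {s(a, b)}).induce
      (B : Set (Fin N))).Connected := by
  set G := ((⊤ : SimpleGraph (Fin N)).deleteEdges {s(a, b)}) with hG
  have hadj : ∀ x y : Fin N, x ≠ y → s(x, y) ≠ s(a, b) → G.Adj x y := by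
    intro x y h1 h2
    rw [hG, SimpleGraph.deleteEdges_adj, SimpleGraph.top_adj]
    exact ⟨h1, by simpa using h2⟩
  rw [SimpleGraph.connected_iff]
  constructor
  · rintro ⟨x, hx⟩ ⟨y, hy⟩
    rw [Finset.mem_coe] at hx hy
    by_cases hxy : x = y
    · exact (Subtype.ext hxy : (⟨x, hx⟩ : (B : Set (Fin N))) = ⟨y, hy⟩) ▸ SimpleGraph.Reachable.refl _
    by_cases hs : s(x, y) = s(a, b)
    · -- {x, y} = {a, b}; find a third vertex c in B
      have hmem : a ∈ B ∧ b ∈ B := by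
        rw [Sym2.eq_iff] at hs
        rcases hs with ⟨rfl, rfl⟩ | ⟨rfl, rfl⟩
        · exact ⟨hx, hy⟩
        · exact ⟨hy, hx⟩
      obtain ⟨c, hcB, hc⟩ : ∃ c ∈ B, c ∉ ({a, b} : Finset (Fin N)) := by
        by_contra hcon
        push_neg at hcon
        exact hB (Finset.Subset.antisymm hcon (by
          intro z hz
          rcases Finset.mem_insert.1 hz with rfl | hz
          · exact hmem.1
          · rw [Finset.mem_singleton] at hz
            exact hz ▸ hmem.2))
      rw [Finset.mem_insert, Finset.mem_singleton, not_or] at hc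
      have hxab : x ∈ ({a, b} : Set (Fin N)) := by
        rw [Sym2.eq_iff] at hs
        rcases hs with ⟨rfl, rfl⟩ | ⟨rfl, rfl⟩ <;> simp
      have hyab : y ∈ ({a, b} : Set (Fin N)) := by
        rw [Sym2.eq_iff] at hs
        rcases hs with ⟨rfl, rfl⟩ | ⟨rfl, rfl⟩ <;> simp
      have hxc : x ≠ c := by rintro rfl; rcases hxab with rfl | rfl; exacts [hc.1 rfl, hc.2 rfl]
      have hyc : c ≠ y := by rintro rfl; rcases hyab with rfl | rfl; exacts [hc.1 rfl, hc.2 rfl]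
      have h1 : s(x, c) ≠ s(a, b) := by
        intro h
        rw [Sym2.eq_iff] at h
        rcases h with ⟨rfl, rfl⟩ | ⟨rfl, rfl⟩
        · exact hc.2 rfl
        · exact hc.1 rfl
      have h2 : s(c, y) ≠ s(a, b) := by
        intro h
        rw [Sym2.eq_iff] at h
        rcases h with ⟨rfl, rfl⟩ | ⟨rfl, rfl⟩
        · exact hc.1 rfl
        · exact hc.2 rfl
      have a1 : (G.induce (B : Set (Fin N))).Adj ⟨x, hx⟩ ⟨c, hcB⟩ := hadj x c hxc h1
      have a2 : (G.induce (B : Set (Fin N))).Adj ⟨c, hcB⟩ ⟨y, hy⟩ := hadj c y hyc h2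
      exact a1.reachable.trans a2.reachable
    · exact (SimpleGraph.Adj.reachable (hadj x y hxy hs : (G.induce (B : Set (Fin N))).Adj ⟨x, hx⟩ ⟨y, hy⟩))
  · exact ⟨⟨hne.choose, by rw [Finset.mem_coe]; exact hne.choose_spec⟩⟩

lemma isComposition_iff (hab : a ≠ b) (P : Finpartition (Finset.univ : Finset (Fin N))) :
    ((⊤ : SimpleGraph (Fin N)).deleteEdges {s(a, b)}).IsComposition P ↔
      ({a, b} : Finset (Fin N)) ∉ P.parts := by
  constructor
  · intro h hmem
    exact pair_not_connected hab (h _ hmem)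
  · intro h B hB
    exact block_connected hab (P.nonempty_of_mem_parts hB) (fun hh => h (hh ▸ hB))

end Graph

section Bad

variable {N : ℕ} {a b : Fin N}

lemma pair_not_mem_parts (P : Finpartition (Finset.univ \ {a, b} : Finset (Fin N))) :
    ({a, b} : Finset (Fin N)) ∉ P.parts := by
  intro h
  have := P.le h (mem_insert_self a {b})
  rw [mem_sdiff] at this
  exact this.2 (mem_insert_self a {b})

/-- Partitions having `{a,b}` as a block correspond to partitions of the rest. -/
def badEquiv (hab : a ≠ b) (j : ℕ) :
    {P : Finpartition (Finset.univ : Finset (Fin N)) //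
      ({a, b} : Finset (Fin N)) ∈ P.parts ∧ P.parts.card = j + 1} ≃
    {P : Finpartition (Finset.univ \ {a, b} : Finset (Fin N)) // P.parts.card = j} where
  toFun P := ⟨P.1.avoid {a, b}, by
    rw [avoid_parts_of_mem P.1 P.2.1, card_erase_of_mem P.2.1, P.2.2]
    omega⟩
  invFun P := ⟨P.1.extend (b := ({a, b} : Finset (Fin N)))
      (by simp [bot_eq_empty, insert_ne_empty])
      sdiff_disjoint
      (by rw [sup_eq_union, sdiff_union_of_subset (subset_univ _)]),
    ⟨mem_insert_self _ _, by rw [Finpartition.card_extend, P.2]⟩⟩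
  left_inv P := by
    apply Subtype.ext
    apply Finpartition.ext
    show insert ({a, b} : Finset (Fin N)) (P.1.avoid {a, b}).parts = P.1.parts
    rw [avoid_parts_of_mem P.1 P.2.1, insert_erase P.2.1]
  right_inv P := by
    apply Subtype.ext
    apply Finpartition.ext
    show (Finpartition.avoid _ {a, b}).parts = P.1.parts
    rw [avoid_parts_of_mem _ (mem_insert_self _ _)]
    show (insert ({a, b} : Finset (Fin N)) P.1.parts).erase {a, b} = P.1.parts
    rw [erase_insert (pair_not_mem_parts P.1)]

/-- Split partitions with `j+1` blocks according to whether `{a,b}` is a block. -/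
def splitEquiv (j : ℕ) :
    {P : Finpartition (Finset.univ : Finset (Fin N)) // P.parts.card = j + 1} ≃
      {P : Finpartition (Finset.univ : Finset (Fin N)) //
        ({a, b} : Finset (Fin N)) ∈ P.parts ∧ P.parts.card = j + 1} ⊕
      {P : Finpartition (Finset.univ : Finset (Fin N)) //
        ({a, b} : Finset (Fin N)) ∉ P.parts ∧ P.parts.card = j + 1} where
  toFun P := if h : ({a, b} : Finset (Fin N)) ∈ P.1.parts then Sum.inl ⟨P.1, h, P.2⟩
    else Sum.inr ⟨P.1, h, P.2⟩
  invFun P := match P with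
    | Sum.inl ⟨P, h⟩ => ⟨P, h.2⟩
    | Sum.inr ⟨P, h⟩ => ⟨P, h.2⟩
  left_inv P := by by_cases h : ({a, b} : Finset (Fin N)) ∈ P.1.parts <;> simp [h]
  right_inv P := by
    rcases P with ⟨P, h⟩ | ⟨P, h⟩
    · simp [h.1]
    · simp [h.1]

end Bad

end CompAux


theorem compCount_complete_minus_edge (N : ℕ) (a b : Fin N) (hab : a ≠ b) (k : ℕ) :
    ((⊤ : SimpleGraph (Fin N)).deleteEdges {s(a, b)}).compCount k =
      stirling2 N k - stirling2 (N - 2) (k - 1) := by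
  classical
  obtain ⟨m, rfl⟩ : ∃ m, N = m + 1 := ⟨N - 1, (Nat.succ_pred_eq_of_pos a.pos).symm⟩
  rw [SimpleGraph.compCount,
    Nat.card_congr (Equiv.subtypeEquivRight fun P =>
      and_congr_left' (CompAux.isComposition_iff hab P))]
  rcases k with _ | j
  · have : IsEmpty {P : Finpartition (Finset.univ : Finset (Fin (m + 1))) //
        ({a, b} : Finset (Fin (m + 1))) ∉ P.parts ∧ P.parts.card = 0} := by
      constructor
      rintro ⟨P, -, hP⟩
      rw [Finset.card_eq_zero] at hP
      have := Finpartition.parts_eq_empty_iff.1 hP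
      rw [Finset.bot_eq_empty] at this
      exact Finset.univ_nonempty.ne_empty this
    rw [Nat.card_of_isEmpty]
    rw [show stirling2 (m + 1) 0 = 0 from rfl, Nat.zero_sub]
  · have htot := CompAux.card_finpartition (Finset.univ : Finset (Fin (m + 1))) (j + 1)
    rw [Finset.card_univ, Fintype.card_fin] at htot
    have hbad : Nat.card {P : Finpartition (Finset.univ : Finset (Fin (m + 1))) //
        ({a, b} : Finset (Fin (m + 1))) ∈ P.parts ∧ P.parts.card = j + 1} =
        stirling2 (m + 1 - 2) j := by
      rw [Nat.card_congr (CompAux.badEquiv hab j),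
        CompAux.card_finpartition (Finset.univ \ {a, b} : Finset (Fin (m + 1))) j]
      congr 1
      rw [Finset.card_sdiff_of_subset (Finset.subset_univ _), Finset.card_univ, Fintype.card_fin,
        Finset.card_pair hab]
    have hsplit := Nat.card_congr (CompAux.splitEquiv (a := a) (b := b) j)
    rw [Nat.card_sum, hbad] at hsplit
    rw [htot] at hsplit
    rw [show j + 1 - 1 = j from rfl]
    omega
end
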